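/- arXiv:2501.12058 — 9 statements merged into one kernel-verified Lean document; each statement's English description precedes it below -/
import Mathlib

section
/- Let n ≥ 2, let f : 2^{[n]} → ℝ be a submodular set function with f(∅) = 0, and let γ be a fractional partition with respect to a family 𝓕 of subsets of [n] satisfying the standing assumptions. Define σ = min over ordered pairs of distinct i, j ∈ [n] of ∑_{S ∈ 𝓕 : i ∈ S, j ∉ S} γ(S). Then σ > 0, and for any ε ≥ 0, if Gap_U(f, 𝓕, γ) = ∑_{S ∈ 𝓕} γ(S) f(S) − f([n]) ≤ ε, then f({i}) + f([n] ∖ {i}) − f([n]) ≤ ε/σ for every i ∈ [n]. -/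
/-!
Fix `i` and write `Φ(V) = ∑ₖ γₖ f(Sₖ ∩ V) - f(V)` and `D(T) = f{i} + f(T) - f(T ∪ {i})`.
We show `σ D(T) ≤ Φ(T ∪ {i})` for every `T ∌ i` by adding the elements of `T` one at a time;
for `T = [n] ∖ {i}` this is the claim, since `Φ([n])` is the gap. Adding `j` raises `D` by
`b - a`, where `a` and `b` are the marginal gains of `j` at `T ∪ {i}` and at `T`, and `a ≤ b` by
submodularity. Every member containing `j` gains at least `a` in `f(Sₖ ∩ ·)`, and those avoiding
`i` even gain `b`; as the members containing `j` have total weight `1`, `Φ` rises by at least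
`w (b - a)`, where `w ≥ σ` is the weight of the members separating `j` from `i`.
-/

open Finset
open scoped Classical BigOperators

section FractionalPartition

variable {α ι : Type*} [DecidableEq α] [Fintype ι]

def sepWeight (S : ι → Finset α) (γ : ι → ℝ) (i j : α) : ℝ :=
  ∑ k ∈ univ.filter (fun k => i ∈ S k ∧ j ∉ S k), γ k

variable {S : ι → Finset α} {γ : ι → ℝ}

theorem sepWeight_eq_one_sub (hfrac : ∀ i, ∑ k ∈ univ.filter (fun k => i ∈ S k), γ k = 1)
    (i j : α) :
    sepWeight S γ i j = 1 - ∑ k ∈ univ.filter (fun k => i ∈ S k ∧ j ∈ S k), γ k := by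
  rw [← hfrac i, ← sum_filter_add_sum_filter_not (univ.filter fun k => i ∈ S k)
    (fun k => j ∈ S k), filter_filter, filter_filter, sepWeight]
  ring

theorem sepWeight_comm (hfrac : ∀ i, ∑ k ∈ univ.filter (fun k => i ∈ S k), γ k = 1)
    (i j : α) : sepWeight S γ i j = sepWeight S γ j i := by
  simp only [sepWeight_eq_one_sub hfrac, and_comm]

theorem sepWeight_pos (hpos : ∀ k, 0 < γ k)
    (hfrac : ∀ i, ∑ k ∈ univ.filter (fun k => i ∈ S k), γ k = 1) {i j : α}
    (hij : ¬ ∀ k, i ∈ S k ↔ j ∈ S k) : 0 < sepWeight S γ i j := by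
  have weight_pos {i j : α} {k : ι} (hi : i ∈ S k) (hj : j ∉ S k) : 0 < sepWeight S γ i j :=
    (hpos k).trans_le <| single_le_sum (fun k _ => (hpos k).le) (by simp [hi, hj])
  obtain ⟨k, hk⟩ := not_forall.mp hij
  by_cases hi : i ∈ S k
  · exact weight_pos hi fun hj => hk (iff_of_true hi hj)
  · rw [sepWeight_comm hfrac]
    exact weight_pos (by tauto) hi

theorem sum_mul_apply_inter_singleton {f : Finset α → ℝ} (hf0 : f ∅ = 0)
    (hfrac : ∀ i, ∑ k ∈ univ.filter (fun k => i ∈ S k), γ k = 1) (i : α) :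
    ∑ k, γ k * f (S k ∩ {i}) = f {i} := by
  have h : ∀ k, γ k * f (S k ∩ {i}) = if i ∈ S k then γ k * f {i} else 0 := fun k => by
    split_ifs with hi
    · rw [inter_singleton_of_mem hi]
    · rw [inter_singleton_of_notMem hi, hf0, mul_zero]
  rw [sum_congr rfl fun k _ => h k, ← sum_filter, ← sum_mul, hfrac i, one_mul]

end FractionalPartition

section Submodular

variable {α ι : Type*} [DecidableEq α] {f : Finset α → ℝ}

theorem insert_sub_le_insert_sub_of_subset
    (hsubmod : ∀ A B : Finset α, f (A ∪ B) + f (A ∩ B) ≤ f A + f B)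
    {A B : Finset α} {j : α} (hAB : A ⊆ B) (hj : j ∉ B) :
    f (insert j B) - f B ≤ f (insert j A) - f A := by
  have hunion : insert j A ∪ B = insert j B := by
    rw [insert_union, union_eq_right.mpr hAB]
  have hinter : insert j A ∩ B = A := by
    rw [insert_inter_of_notMem hj, inter_eq_left.mpr hAB]
  have := hsubmod (insert j A) B
  rw [hunion, hinter] at this
  linarith

variable {S : ι → Finset α} {γ : ι → ℝ}

theorem le_apply_inter_insert_sub
    (hsubmod : ∀ A B : Finset α, f (A ∪ B) + f (A ∩ B) ≤ f A + f B)
    {T : Finset α} {i j : α} (hj : j ∉ insert i T) (k : ι) :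
    (if j ∈ S k then f (insert j (insert i T)) - f (insert i T) else 0)
      + (if j ∈ S k ∧ i ∉ S k then (f (insert j T) - f T)
          - (f (insert j (insert i T)) - f (insert i T)) else 0)
      ≤ f (S k ∩ insert j (insert i T)) - f (S k ∩ insert i T) := by
  have hjT : j ∉ T := fun h => hj (mem_insert_of_mem h)
  by_cases hjS : j ∈ S k
  · rw [inter_insert_of_mem hjS]
    by_cases hiS : i ∈ S k
    · simp only [if_pos hjS, hiS, not_true_eq_false, and_false, if_false, add_zero]
      exact insert_sub_le_insert_sub_of_subset hsubmod inter_subset_right hj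
    · simp only [hjS, hiS, not_false_eq_true, and_self, if_true, add_sub_cancel,
        inter_insert_of_notMem hiS]
      exact insert_sub_le_insert_sub_of_subset hsubmod inter_subset_right hjT
  · simp [hjS, inter_insert_of_notMem hjS]

variable [Fintype ι]

theorem sepWeight_mul_le_gap_step
    (hsubmod : ∀ A B : Finset α, f (A ∪ B) + f (A ∩ B) ≤ f A + f B)
    (hγ : ∀ k, 0 ≤ γ k) (hfrac : ∀ i, ∑ k ∈ univ.filter (fun k => i ∈ S k), γ k = 1)
    {T : Finset α} {i j : α} (hj : j ∉ insert i T) :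
    sepWeight S γ j i * ((f (insert j T) - f T)
        - (f (insert j (insert i T)) - f (insert i T)))
      ≤ ∑ k, γ k * (f (S k ∩ insert j (insert i T)) - f (S k ∩ insert i T))
        - (f (insert j (insert i T)) - f (insert i T)) := by
  set a := f (insert j (insert i T)) - f (insert i T)
  set b := f (insert j T) - f T
  have hsum : ∑ k, γ k * ((if j ∈ S k then a else 0) + (if j ∈ S k ∧ i ∉ S k then b - a else 0))
      = a + sepWeight S γ j i * (b - a) := by
    simp only [mul_add, mul_ite, mul_zero, sum_add_distrib, ← sum_filter, ← sum_mul, hfrac j,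
      sepWeight]
    ring
  have := sum_le_sum fun k (_ : k ∈ univ) =>
    mul_le_mul_of_nonneg_left (le_apply_inter_insert_sub (S := S) hsubmod hj k) (hγ k)
  linarith

theorem mul_loss_le_partition_gap (hf0 : f ∅ = 0)
    (hsubmod : ∀ A B : Finset α, f (A ∪ B) + f (A ∩ B) ≤ f A + f B)
    (hγ : ∀ k, 0 ≤ γ k) (hfrac : ∀ i, ∑ k ∈ univ.filter (fun k => i ∈ S k), γ k = 1)
    {σ : ℝ} {i : α} {T : Finset α} (hiT : i ∉ T) (hσ : ∀ j ∈ T, σ ≤ sepWeight S γ j i) :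
    σ * (f {i} + f T - f (insert i T)) ≤ ∑ k, γ k * f (S k ∩ insert i T) - f (insert i T) := by
  induction T using Finset.induction_on with
  | empty => simp [hf0, sum_mul_apply_inter_singleton hf0 hfrac]
  | insert j T hjT ih =>
    have hj : j ∉ insert i T := by
      rw [mem_insert, not_or]
      exact ⟨fun hji => hiT (hji ▸ mem_insert_self j T), hjT⟩
    have ih := ih (fun h => hiT (mem_insert_of_mem h)) fun l hl => hσ l (mem_insert_of_mem hl)
    have hstep := sepWeight_mul_le_gap_step hsubmod hγ hfrac hj
    have hab := insert_sub_le_insert_sub_of_subset hsubmod (subset_insert i T) hj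
    have hσj := mul_le_mul_of_nonneg_right (hσ j (mem_insert_self j T)) (sub_nonneg.mpr hab)
    simp only [mul_sub, sum_sub_distrib] at hstep
    rw [insert_comm i j T]
    linarith

end Submodular

section MinSepWeight

variable {α ι : Type*} [DecidableEq α] [Finite α] [Fintype ι] {S : ι → Finset α} {γ : ι → ℝ}

theorem finite_setOf_sepWeight :
    {x : ℝ | ∃ i j : α, i ≠ j ∧ x = sepWeight S γ i j}.Finite :=
  (Set.finite_range fun p : α × α => sepWeight S γ p.1 p.2).subset <| by
    rintro _ ⟨i, j, -, rfl⟩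
    exact ⟨(i, j), rfl⟩

theorem sInf_sepWeight_le {i j : α} (hij : i ≠ j) :
    sInf {x : ℝ | ∃ i j : α, i ≠ j ∧ x = sepWeight S γ i j} ≤ sepWeight S γ i j :=
  csInf_le finite_setOf_sepWeight.bddBelow ⟨i, j, hij, rfl⟩

theorem sInf_sepWeight_pos [Nontrivial α] (hpos : ∀ k, 0 < γ k)
    (hfrac : ∀ i, ∑ k ∈ univ.filter (fun k => i ∈ S k), γ k = 1)
    (hsep : ∀ i j : α, i ≠ j → ¬ ∀ k, i ∈ S k ↔ j ∈ S k) :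
    0 < sInf {x : ℝ | ∃ i j : α, i ≠ j ∧ x = sepWeight S γ i j} := by
  obtain ⟨i₀, j₀, hij₀⟩ := exists_pair_ne α
  obtain ⟨i, j, hij, hmin⟩ :=
    Set.Nonempty.csInf_mem (by exact ⟨_, i₀, j₀, hij₀, rfl⟩) (finite_setOf_sepWeight (S := S))
  exact hmin ▸ sepWeight_pos hpos hfrac (hsep i j hij)

end MinSepWeight

theorem stmt_0_general (n : ℕ) (hn : 2 ≤ n) (f : Finset (Fin n) → ℝ)
    (hf0 : f ∅ = 0)
    (hsubmod : ∀ A B : Finset (Fin n), f (A ∪ B) + f (A ∩ B) ≤ f A + f B)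
    (ι : Type) [Fintype ι] (S : ι → Finset (Fin n)) (γ : ι → ℝ)
    (hpos : ∀ k, 0 < γ k)
    (hsep : ∀ i j : Fin n, i ≠ j → ¬ (∀ k, i ∈ S k ↔ j ∈ S k))
    (hfrac : ∀ i : Fin n, ∑ k ∈ Finset.univ.filter (fun k => i ∈ S k), γ k = 1)
    (σ : ℝ)
    (hσ : σ = sInf {x : ℝ | ∃ i j : Fin n, i ≠ j ∧
      x = ∑ k ∈ Finset.univ.filter (fun k => i ∈ S k ∧ j ∉ S k), γ k}) :
    0 < σ ∧ ∀ ε : ℝ, 0 ≤ ε →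
      (∑ k : ι, γ k * f (S k)) - f Finset.univ ≤ ε →
      ∀ i : Fin n, f {i} + f (Finset.univ \ {i}) - f Finset.univ ≤ ε / σ := by
  have : Nontrivial (Fin n) := Fin.nontrivial_iff_two_le.mpr hn
  have hσpos : 0 < σ := hσ ▸ sInf_sepWeight_pos hpos hfrac hsep
  refine ⟨hσpos, fun ε _ hgap i => ?_⟩
  have key := mul_loss_le_partition_gap hf0 hsubmod (fun k => (hpos k).le) hfrac
    (notMem_erase i univ) fun j hj => hσ ▸ sInf_sepWeight_le (ne_of_mem_erase hj)
  rw [insert_erase (mem_univ i)] at key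
  simp only [inter_univ] at key
  rw [le_div_iff₀ hσpos, sdiff_singleton_eq_erase]
  linarith

theorem stmt_0 (n : ℕ) (hn : 2 ≤ n) (f : Finset (Fin n) → ℝ)
    (hf0 : f ∅ = 0)
    (hsubmod : ∀ A B : Finset (Fin n), f (A ∪ B) + f (A ∩ B) ≤ f A + f B)
    (ι : Type) [Fintype ι] (S : ι → Finset (Fin n)) (γ : ι → ℝ)
    (hproper : ∀ k, S k ≠ Finset.univ)
    (hpos : ∀ k, 0 < γ k)
    (hsep : ∀ i j : Fin n, i ≠ j → ¬ (∀ k, i ∈ S k ↔ j ∈ S k))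
    (hfrac : ∀ i : Fin n, ∑ k ∈ Finset.univ.filter (fun k => i ∈ S k), γ k = 1)
    (σ : ℝ)
    (hσ : σ = sInf {x : ℝ | ∃ i j : Fin n, i ≠ j ∧
      x = ∑ k ∈ Finset.univ.filter (fun k => i ∈ S k ∧ j ∉ S k), γ k}) :
    0 < σ ∧ ∀ ε : ℝ, 0 ≤ ε →
      (∑ k : ι, γ k * f (S k)) - f Finset.univ ≤ ε →
      ∀ i : Fin n, f {i} + f (Finset.univ \ {i}) - f Finset.univ ≤ ε / σ :=
  stmt_0_general n hn f hf0 hsubmod ι S γ hpos hsep hfrac σ hσ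
end

section
/- Let n ≥ 2, let f : 2^{[n]} → ℝ be a submodular set function with f(∅) = 0, and let γ be a fractional partition with respect to a family 𝓕 of subsets of [n] satisfying the standing assumptions. Define σ = min over ordered pairs of distinct i, j ∈ [n] of ∑_{S ∈ 𝓕 : i ∈ S, j ∉ S} γ(S). Then for any ε ≥ 0, if Gap_L(f, 𝓕, γ) = f([n]) − ∑_{S ∈ 𝓕} γ(S) f(S | [n] ∖ S) ≤ ε, then f({i}) + f([n] ∖ {i}) − f([n]) ≤ ε/σ for every i ∈ [n]. -/
open Finset
open scoped Classical BigOperators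



/-- prefix set: elements with val < m, excluding i -/
noncomputable def Tkl (n : ℕ) (i : Fin n) (m : ℕ) : Finset (Fin n) :=
  Finset.univ.filter (fun s => s.val < m ∧ s ≠ i)

lemma aux_marg {n : ℕ} (f : Finset (Fin n) → ℝ)
    (hsubmod : ∀ A B : Finset (Fin n), f (A ∪ B) + f (A ∩ B) ≤ f A + f B)
    (t : Fin n) (R U : Finset (Fin n)) (hRU : R ⊆ U) (htU : t ∉ U) :
    f (insert t U) - f U ≤ f (insert t R) - f R := by
  have h := hsubmod (insert t R) U
  have h1 : insert t R ∪ U = insert t U := by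
    rw [Finset.insert_union, Finset.union_eq_right.mpr hRU]
  have h2 : insert t R ∩ U = R := by
    ext s
    simp only [Finset.mem_inter, Finset.mem_insert]
    constructor
    · rintro ⟨h | h, hU⟩
      · exact absurd (h ▸ hU) htU
      · exact h
    · intro hs; exact ⟨Or.inr hs, hRU hs⟩
  rw [h1, h2] at h
  linarith

lemma filt_succ {n : ℕ} (C : Finset (Fin n)) (i : Fin n) (m : ℕ) (hm : m < n)
    (ht : (⟨m, hm⟩ : Fin n) ≠ i) (htC : (⟨m, hm⟩ : Fin n) ∈ C) :
    C.filter (fun s => s.val < m + 1 ∧ s ≠ i)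
      = insert ⟨m, hm⟩ (C.filter (fun s => s.val < m ∧ s ≠ i)) := by
  ext s
  simp only [Finset.mem_filter, Finset.mem_insert]
  constructor
  · rintro ⟨hsC, hlt, hsi⟩
    rcases Nat.lt_succ_iff_lt_or_eq.mp hlt with h | h
    · exact Or.inr ⟨hsC, h, hsi⟩
    · exact Or.inl (Fin.ext h)
  · rintro (rfl | ⟨hsC, hlt, hsi⟩)
    · exact ⟨htC, Nat.lt_succ_self m, ht⟩
    · exact ⟨hsC, Nat.lt_succ_of_lt hlt, hsi⟩

lemma filt_succ_eq {n : ℕ} (C : Finset (Fin n)) (i : Fin n) (m : ℕ)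
    (h : ∀ s : Fin n, s ∈ C → s.val = m → s = i) :
    C.filter (fun s => s.val < m + 1 ∧ s ≠ i)
      = C.filter (fun s => s.val < m ∧ s ≠ i) := by
  ext s
  simp only [Finset.mem_filter]
  constructor
  · rintro ⟨hsC, hlt, hsi⟩
    rcases Nat.lt_succ_iff_lt_or_eq.mp hlt with h' | h'
    · exact ⟨hsC, h', hsi⟩
    · exact absurd (h s hsC h') hsi
  · rintro ⟨hsC, hlt, hsi⟩
    exact ⟨hsC, Nat.lt_succ_of_lt hlt, hsi⟩

lemma Tkl_eq_filter {n : ℕ} (i : Fin n) (m : ℕ) :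
    Tkl n i m = Finset.univ.filter (fun s => s.val < m ∧ s ≠ i) := rfl

lemma aux_tele {n : ℕ} (f : Finset (Fin n) → ℝ) (i : Fin n) (Q : Finset (Fin n)) :
    ∀ m : ℕ, f (Tkl n i m ∪ Q) - f Q
      = ∑ t ∈ Tkl n i m, (f (insert t (Tkl n i t.val ∪ Q)) - f (Tkl n i t.val ∪ Q)) := by
  intro m
  induction m with
  | zero =>
    have : Tkl n i 0 = ∅ := by
      ext s; simp [Tkl]
    rw [this]; simp
  | succ m ih =>
    by_cases hm : m < n
    · set t : Fin n := ⟨m, hm⟩ with htdef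
      by_cases hti : t = i
      · have : Tkl n i (m + 1) = Tkl n i m := by
          rw [Tkl_eq_filter, Tkl_eq_filter]
          exact filt_succ_eq _ i m (fun s _ hs => by rw [← hti]; exact Fin.ext hs)
        rw [this]; exact ih
      · have hsucc : Tkl n i (m + 1) = insert t (Tkl n i m) := by
          rw [Tkl_eq_filter, Tkl_eq_filter]
          exact filt_succ _ i m hm hti (Finset.mem_univ _)
        have htnot : t ∉ Tkl n i m := by
          simp [Tkl, htdef]
        have htv : Tkl n i t.val = Tkl n i m := rfl
        rw [hsucc, Finset.sum_insert htnot, htv, Finset.insert_union]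
        linarith [ih]
    · have : Tkl n i (m + 1) = Tkl n i m := by
        rw [Tkl_eq_filter, Tkl_eq_filter]
        exact filt_succ_eq _ i m (fun s _ hs => absurd (hs ▸ s.isLt) hm)
      rw [this]; exact ih

lemma aux_ineq {n : ℕ} (f : Finset (Fin n) → ℝ)
    (hsubmod : ∀ A B : Finset (Fin n), f (A ∪ B) + f (A ∩ B) ≤ f A + f B)
    (i : Fin n) (S₀ Q : Finset (Fin n)) (hQ : Q ⊆ Finset.univ \ S₀) :
    ∀ m : ℕ,
      f ((Finset.univ \ S₀) ∪ S₀.filter (fun s => s.val < m ∧ s ≠ i)) - f (Finset.univ \ S₀)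
        ≤ ∑ t ∈ S₀.filter (fun s => s.val < m ∧ s ≠ i),
            (f (insert t (Tkl n i t.val ∪ Q)) - f (Tkl n i t.val ∪ Q)) := by
  intro m
  induction m with
  | zero =>
    have : S₀.filter (fun s => s.val < 0 ∧ s ≠ i) = ∅ := by
      ext s; simp
    rw [this]; simp
  | succ m ih =>
    by_cases hcase : ∃ hm : m < n, (⟨m, hm⟩ : Fin n) ∈ S₀ ∧ (⟨m, hm⟩ : Fin n) ≠ i
    · obtain ⟨hm, htS, hti⟩ := hcase
      set t : Fin n := ⟨m, hm⟩ with htdef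
      have hsucc := filt_succ S₀ i m hm hti htS
      have htnot : t ∉ S₀.filter (fun s => s.val < m ∧ s ≠ i) := by
        simp [Finset.mem_filter, htdef]
      set U : Finset (Fin n) := (Finset.univ \ S₀) ∪ S₀.filter (fun s => s.val < m ∧ s ≠ i) with hUdef
      have hunion : (Finset.univ \ S₀) ∪ S₀.filter (fun s => s.val < m + 1 ∧ s ≠ i)
          = insert t U := by
        rw [hsucc, Finset.union_insert]
      have hRU : Tkl n i t.val ∪ Q ⊆ U := by
        intro s hs
        rcases Finset.mem_union.mp hs with hs | hs
        · simp only [Tkl, Finset.mem_filter] at hs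
          obtain ⟨-, hlt, hsi⟩ := hs
          by_cases hsS : s ∈ S₀
          · exact Finset.mem_union.mpr (Or.inr (Finset.mem_filter.mpr ⟨hsS, hlt, hsi⟩))
          · exact Finset.mem_union.mpr (Or.inl (Finset.mem_sdiff.mpr ⟨Finset.mem_univ _, hsS⟩))
        · exact Finset.mem_union.mpr (Or.inl (hQ hs))
      have htU : t ∉ U := by
        rw [hUdef]
        intro hc
        rcases Finset.mem_union.mp hc with hc | hc
        · exact (Finset.mem_sdiff.mp hc).2 htS
        · simp [Finset.mem_filter, htdef] at hc
      have hmarg := aux_marg f hsubmod t (Tkl n i t.val ∪ Q) U hRU htU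
      rw [hunion, hsucc, Finset.sum_insert htnot]
      have : f (insert t U) - f (Finset.univ \ S₀)
          = (f (insert t U) - f U) + (f U - f (Finset.univ \ S₀)) := by ring
      rw [this]
      exact add_le_add hmarg ih
    · have : S₀.filter (fun s => s.val < m + 1 ∧ s ≠ i)
          = S₀.filter (fun s => s.val < m ∧ s ≠ i) := by
        apply filt_succ_eq
        intro s hsS hsv
        by_contra hsi
        apply hcase
        have hm : m < n := hsv ▸ s.isLt
        have hst : (⟨m, hm⟩ : Fin n) = s := Fin.ext hsv.symm
        exact ⟨hm, hst ▸ hsS, hst ▸ hsi⟩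
      rw [this]; exact ih

lemma sum_rearrange {n : ℕ} {ι : Type} [Fintype ι] (S : ι → Finset (Fin n)) (γ : ι → ℝ)
    (i : Fin n) (a b : Fin n → ℝ) (c : ℝ) :
    ∑ k : ι, γ k * ((∑ t ∈ (S k).erase i, (if i ∈ S k then a t else b t))
        + (if i ∈ S k then c else 0))
      = (∑ t ∈ Finset.univ \ {i},
          ((∑ k ∈ Finset.univ.filter (fun k => t ∈ S k ∧ i ∈ S k), γ k) * a t
            + (∑ k ∈ Finset.univ.filter (fun k => t ∈ S k ∧ i ∉ S k), γ k) * b t))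
        + (∑ k ∈ Finset.univ.filter (fun k => i ∈ S k), γ k) * c := by
  classical
  have herase : ∀ k, (S k).erase i = (Finset.univ \ {i}).filter (fun t => t ∈ S k) := by
    intro k; ext t
    simp only [Finset.mem_erase, Finset.mem_filter, Finset.mem_sdiff, Finset.mem_univ,
      Finset.mem_singleton, true_and]
  have hpart2 : ∑ k : ι, γ k * (if i ∈ S k then c else 0)
      = (∑ k ∈ Finset.univ.filter (fun k => i ∈ S k), γ k) * c := by
    calc ∑ k : ι, γ k * (if i ∈ S k then c else 0)
        = ∑ k : ι, (if i ∈ S k then γ k * c else 0) := by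
          apply Finset.sum_congr rfl; intro k _
          by_cases h : i ∈ S k <;> simp [h]
      _ = ∑ k ∈ Finset.univ.filter (fun k => i ∈ S k), γ k * c :=
          (Finset.sum_filter _ _).symm
      _ = (∑ k ∈ Finset.univ.filter (fun k => i ∈ S k), γ k) * c := by
          rw [Finset.sum_mul]
  have hpart1 : ∑ k : ι, γ k * (∑ t ∈ (S k).erase i, (if i ∈ S k then a t else b t))
      = ∑ t ∈ Finset.univ \ {i},
          ((∑ k ∈ Finset.univ.filter (fun k => t ∈ S k ∧ i ∈ S k), γ k) * a t
            + (∑ k ∈ Finset.univ.filter (fun k => t ∈ S k ∧ i ∉ S k), γ k) * b t) := by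
    calc ∑ k : ι, γ k * (∑ t ∈ (S k).erase i, (if i ∈ S k then a t else b t))
        = ∑ k : ι, ∑ t ∈ Finset.univ \ {i},
            (if t ∈ S k then γ k * (if i ∈ S k then a t else b t) else 0) := by
          apply Finset.sum_congr rfl; intro k _
          rw [herase k, Finset.sum_filter, Finset.mul_sum]
          apply Finset.sum_congr rfl; intro t _
          by_cases h : t ∈ S k <;> simp [h]
      _ = ∑ t ∈ Finset.univ \ {i}, ∑ k : ι,
            (if t ∈ S k then γ k * (if i ∈ S k then a t else b t) else 0) :=
          Finset.sum_comm
      _ = ∑ t ∈ Finset.univ \ {i},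
          ((∑ k ∈ Finset.univ.filter (fun k => t ∈ S k ∧ i ∈ S k), γ k) * a t
            + (∑ k ∈ Finset.univ.filter (fun k => t ∈ S k ∧ i ∉ S k), γ k) * b t) := by
          apply Finset.sum_congr rfl; intro t _
          calc ∑ k : ι, (if t ∈ S k then γ k * (if i ∈ S k then a t else b t) else 0)
              = ∑ k : ι, ((if t ∈ S k ∧ i ∈ S k then γ k * a t else 0)
                  + (if t ∈ S k ∧ i ∉ S k then γ k * b t else 0)) := by
                apply Finset.sum_congr rfl; intro k _
                by_cases h1 : t ∈ S k <;> by_cases h2 : i ∈ S k <;> simp [h1, h2]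
            _ = (∑ k : ι, if t ∈ S k ∧ i ∈ S k then γ k * a t else 0)
                + (∑ k : ι, if t ∈ S k ∧ i ∉ S k then γ k * b t else 0) :=
               Finset.sum_add_distrib
            _ = (∑ k ∈ Finset.univ.filter (fun k => t ∈ S k ∧ i ∈ S k), γ k * a t)
                + (∑ k ∈ Finset.univ.filter (fun k => t ∈ S k ∧ i ∉ S k), γ k * b t) := by
                rw [Finset.sum_filter, Finset.sum_filter]
            _ = (∑ k ∈ Finset.univ.filter (fun k => t ∈ S k ∧ i ∈ S k), γ k) * a t
                + (∑ k ∈ Finset.univ.filter (fun k => t ∈ S k ∧ i ∉ S k), γ k) * b t := by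
                rw [Finset.sum_mul, Finset.sum_mul]
  simp only [mul_add, Finset.sum_add_distrib]
  rw [hpart1, hpart2, Finset.sum_add_distrib]

theorem stmt_1 (n : ℕ) (hn : 2 ≤ n) (f : Finset (Fin n) → ℝ)
    (hf0 : f ∅ = 0)
    (hsubmod : ∀ A B : Finset (Fin n), f (A ∪ B) + f (A ∩ B) ≤ f A + f B)
    (ι : Type) [Fintype ι] (S : ι → Finset (Fin n)) (γ : ι → ℝ)
    (hproper : ∀ k, S k ≠ Finset.univ)
    (hpos : ∀ k, 0 < γ k)
    (hsep : ∀ i j : Fin n, i ≠ j → ¬ (∀ k, i ∈ S k ↔ j ∈ S k))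
    (hfrac : ∀ i : Fin n, ∑ k ∈ Finset.univ.filter (fun k => i ∈ S k), γ k = 1)
    (σ : ℝ)
    (hσ : σ = sInf {x : ℝ | ∃ i j : Fin n, i ≠ j ∧
      x = ∑ k ∈ Finset.univ.filter (fun k => i ∈ S k ∧ j ∉ S k), γ k}) :
    ∀ ε : ℝ, 0 ≤ ε →
      f Finset.univ -
        (∑ k : ι, γ k * (f (S k ∪ (Finset.univ \ S k)) - f (Finset.univ \ S k))) ≤ ε →
      ∀ i : Fin n, f {i} + f (Finset.univ \ {i}) - f Finset.univ ≤ ε / σ := by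
  intro ε hε hgap i
  classical
  -- positivity of each pair weight
  have hwpos : ∀ p q : Fin n, p ≠ q →
      0 < ∑ k ∈ Finset.univ.filter (fun k => p ∈ S k ∧ q ∉ S k), γ k := by
    intro p q hpq
    by_contra hle
    push_neg at hle
    have hemp : Finset.univ.filter (fun k => p ∈ S k ∧ q ∉ S k) = ∅ := by
      by_contra hne
      have := Finset.sum_pos (fun k _ => hpos k) (Finset.nonempty_of_ne_empty hne)
      linarith
    have himp : ∀ k, p ∈ S k → q ∈ S k := by
      intro k hk
      by_contra hq
      have hk' : k ∈ Finset.univ.filter (fun k => p ∈ S k ∧ q ∉ S k) :=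
        Finset.mem_filter.mpr ⟨Finset.mem_univ _, hk, hq⟩
      rw [hemp] at hk'
      exact absurd hk' (Finset.notMem_empty k)
    have h1 : ∑ k ∈ (Finset.univ.filter (fun k => q ∈ S k)).filter (fun k => p ∈ S k), γ k
        + ∑ k ∈ (Finset.univ.filter (fun k => q ∈ S k)).filter (fun k => ¬ p ∈ S k), γ k
        = 1 := by
      rw [Finset.sum_filter_add_sum_filter_not]; exact hfrac q
    have h2 : (Finset.univ.filter (fun k => q ∈ S k)).filter (fun k => p ∈ S k)
        = Finset.univ.filter (fun k => p ∈ S k) := by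
      rw [Finset.filter_filter]
      apply Finset.filter_congr
      intro k _
      exact ⟨fun h => h.2, fun h => ⟨himp k h, h⟩⟩
    rw [h2, hfrac p] at h1
    have h3 : ∑ k ∈ (Finset.univ.filter (fun k => q ∈ S k)).filter (fun k => ¬ p ∈ S k), γ k
        = 0 := by linarith
    have hemp2 : (Finset.univ.filter (fun k => q ∈ S k)).filter (fun k => ¬ p ∈ S k) = ∅ := by
      by_contra hne
      have := Finset.sum_pos (fun k _ => hpos k) (Finset.nonempty_of_ne_empty hne)
      linarith
    have himp2 : ∀ k, q ∈ S k → p ∈ S k := by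
      intro k hk
      by_contra hp
      have hk' : k ∈ (Finset.univ.filter (fun k => q ∈ S k)).filter (fun k => ¬ p ∈ S k) := by
        simp [Finset.mem_filter, hk, hp]
      rw [hemp2] at hk'
      exact absurd hk' (Finset.notMem_empty k)
    exact hsep p q hpq (fun k => ⟨fun h => himp k h, fun h => himp2 k h⟩)
  -- σ facts
  have hfin : {x : ℝ | ∃ p q : Fin n, p ≠ q ∧
      x = ∑ k ∈ Finset.univ.filter (fun k => p ∈ S k ∧ q ∉ S k), γ k}.Finite := by
    apply Set.Finite.subset (Set.finite_range
      (fun pq : Fin n × Fin n =>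
        ∑ k ∈ Finset.univ.filter (fun k => pq.1 ∈ S k ∧ pq.2 ∉ S k), γ k))
    rintro x ⟨p, q, hpq, rfl⟩
    exact ⟨(p, q), rfl⟩
  have hne : {x : ℝ | ∃ p q : Fin n, p ≠ q ∧
      x = ∑ k ∈ Finset.univ.filter (fun k => p ∈ S k ∧ q ∉ S k), γ k}.Nonempty := by
    refine ⟨_, ⟨⟨0, by omega⟩, ⟨1, by omega⟩, ?_, rfl⟩⟩
    simp [Fin.ext_iff]
  have hσset : σ = sInf {x : ℝ | ∃ p q : Fin n, p ≠ q ∧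
      x = ∑ k ∈ Finset.univ.filter (fun k => p ∈ S k ∧ q ∉ S k), γ k} := hσ
  have hσpos : 0 < σ := by
    rw [hσset]
    obtain ⟨p, q, hpq, hx⟩ := Set.Nonempty.csInf_mem hne hfin
    rw [hx]
    exact hwpos p q hpq
  have hσle : ∀ t : Fin n, t ≠ i →
      σ ≤ ∑ k ∈ Finset.univ.filter (fun k => t ∈ S k ∧ i ∉ S k), γ k := by
    intro t ht
    rw [hσset]
    exact csInf_le hfin.bddBelow ⟨t, i, ht, rfl⟩
  -- clean up the gap hypothesis
  have hcompl : ∀ k, S k ∪ (Finset.univ \ S k) = Finset.univ := fun k =>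
    Finset.union_sdiff_of_subset (Finset.subset_univ _)
  simp only [hcompl] at hgap
  -- marginal sequences
  set a : Fin n → ℝ := fun t => f (insert t (Tkl n i t.val)) - f (Tkl n i t.val) with hadef
  set b : Fin n → ℝ :=
    fun t => f (insert t (Tkl n i t.val ∪ {i})) - f (Tkl n i t.val ∪ {i}) with hbdef
  have hTn : Tkl n i n = Finset.univ \ {i} := by
    ext s
    simp [Tkl, s.isLt]
  have hsuma : ∑ t ∈ Finset.univ \ {i}, a t = f (Finset.univ \ {i}) := by
    have h := aux_tele f i ∅ n
    simp only [Finset.union_empty, hf0, sub_zero] at h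
    rw [hTn] at h
    exact h.symm
  have hsumb : ∑ t ∈ Finset.univ \ {i}, b t = f Finset.univ - f {i} := by
    have h := aux_tele f i {i} n
    rw [hTn] at h
    have hu : (Finset.univ \ {i}) ∪ {i} = Finset.univ := by
      rw [Finset.sdiff_union_self_eq_union]
      simp
    rw [hu] at h
    exact h.symm
  have hba : ∀ t ∈ Finset.univ \ {i}, b t ≤ a t := by
    intro t htA
    have hti : t ≠ i := by
      simp only [Finset.mem_sdiff, Finset.mem_singleton] at htA
      exact htA.2
    apply aux_marg f hsubmod t (Tkl n i t.val) (Tkl n i t.val ∪ {i})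
      Finset.subset_union_left
    intro hc
    rcases Finset.mem_union.mp hc with hc | hc
    · simp [Tkl] at hc
    · exact hti (Finset.mem_singleton.mp hc)
  -- key per-set bound
  have hkey : ∀ k, f Finset.univ - f (Finset.univ \ S k)
      ≤ (∑ t ∈ (S k).erase i, (if i ∈ S k then a t else b t))
        + (if i ∈ S k then (f Finset.univ - f (Finset.univ \ {i})) else 0) := by
    intro k
    have hfilt : (S k).filter (fun s => s.val < n ∧ s ≠ i) = (S k).erase i := by
      ext s
      simp [Finset.mem_erase, s.isLt, and_comm]
    by_cases hik : i ∈ S k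
    · have h := aux_ineq f hsubmod i (S k) ∅ (Finset.empty_subset _) n
      simp only [Finset.union_empty] at h
      rw [hfilt] at h
      have hu : (Finset.univ \ S k) ∪ (S k).erase i = Finset.univ \ {i} := by
        ext s
        simp only [Finset.mem_union, Finset.mem_sdiff, Finset.mem_erase, Finset.mem_univ,
          Finset.mem_singleton, true_and]
        constructor
        · rintro (hs | ⟨hne, _⟩)
          · rintro rfl; exact hs hik
          · exact hne
        · intro hne
          by_cases hsS : s ∈ S k
          · exact Or.inr ⟨hne, hsS⟩
          · exact Or.inl hsS
      rw [hu] at h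
      simp only [if_pos hik]
      have : ∑ t ∈ (S k).erase i,
          (f (insert t (Tkl n i ↑t)) - f (Tkl n i ↑t)) = ∑ t ∈ (S k).erase i, a t := rfl
      linarith [h]
    · have hiQ : ({i} : Finset (Fin n)) ⊆ Finset.univ \ S k := by
        simp [Finset.singleton_subset_iff, Finset.mem_sdiff, hik]
      have h := aux_ineq f hsubmod i (S k) {i} hiQ n
      rw [hfilt] at h
      have herase : (S k).erase i = S k := Finset.erase_eq_of_notMem hik
      have hu : (Finset.univ \ S k) ∪ (S k).erase i = Finset.univ := by
        rw [herase, Finset.sdiff_union_self_eq_union]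
        simp
      rw [hu] at h
      simp only [if_neg hik, add_zero]
      exact h
  clear_value a b
  -- weighted sum bound
  have hstep : ∑ k : ι, γ k * (f Finset.univ - f (Finset.univ \ S k))
      ≤ ∑ k : ι, γ k * ((∑ t ∈ (S k).erase i, (if i ∈ S k then a t else b t))
        + (if i ∈ S k then (f Finset.univ - f (Finset.univ \ {i})) else 0)) := by
    apply Finset.sum_le_sum
    intro k _
    exact mul_le_mul_of_nonneg_left (hkey k) (hpos k).le
  rw [sum_rearrange S γ i a b (f Finset.univ - f (Finset.univ \ {i})), hfrac i, one_mul]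
    at hstep
  -- bound the per-element combination
  have hcomb : ∑ t ∈ Finset.univ \ {i},
      ((∑ k ∈ Finset.univ.filter (fun k => t ∈ S k ∧ i ∈ S k), γ k) * a t
        + (∑ k ∈ Finset.univ.filter (fun k => t ∈ S k ∧ i ∉ S k), γ k) * b t)
      ≤ ∑ t ∈ Finset.univ \ {i}, (a t - σ * (a t - b t)) := by
    apply Finset.sum_le_sum
    intro t htA
    have hti : t ≠ i := by
      simp only [Finset.mem_sdiff, Finset.mem_singleton] at htA
      exact htA.2
    set α := ∑ k ∈ Finset.univ.filter (fun k => t ∈ S k ∧ i ∈ S k), γ k with hα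
    set β := ∑ k ∈ Finset.univ.filter (fun k => t ∈ S k ∧ i ∉ S k), γ k with hβ
    have hαβ : α + β = 1 := by
      rw [hα, hβ]
      have h1 : ∑ k ∈ (Finset.univ.filter (fun k => t ∈ S k)).filter (fun k => i ∈ S k), γ k
          + ∑ k ∈ (Finset.univ.filter (fun k => t ∈ S k)).filter (fun k => ¬ i ∈ S k), γ k
          = 1 := by
        rw [Finset.sum_filter_add_sum_filter_not]; exact hfrac t
      rw [Finset.filter_filter, Finset.filter_filter] at h1
      exact h1
    have hσβ : σ ≤ β := hσle t hti
    have h1 : σ * (a t - b t) ≤ β * (a t - b t) :=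
      mul_le_mul_of_nonneg_right hσβ (sub_nonneg.mpr (hba t htA))
    have h2 : α * a t + β * b t = a t - β * (a t - b t) := by
      have : α = 1 - β := by linarith
      rw [this]; ring
    linarith
  have hsub : ∑ t ∈ Finset.univ \ {i}, (a t - σ * (a t - b t))
      = f (Finset.univ \ {i})
        - σ * (f (Finset.univ \ {i}) - (f Finset.univ - f {i})) := by
    rw [Finset.sum_sub_distrib, ← Finset.mul_sum, Finset.sum_sub_distrib, hsuma, hsumb]
  rw [hsub] at hcomb
  -- assemble
  have hring : σ * (f {i} + f (Finset.univ \ {i}) - f Finset.univ)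
      = σ * (f (Finset.univ \ {i}) - (f Finset.univ - f {i})) := by ring
  have hfinal : σ * (f {i} + f (Finset.univ \ {i}) - f Finset.univ) ≤ ε := by
    rw [hring]
    linarith [hgap, hstep, hcomb]
  rw [le_div_iff₀ hσpos]
  linarith [hfinal, mul_comm (f {i} + f (Finset.univ \ {i}) - f Finset.univ) σ]
end

section
/- Let n ≥ 2, let f : 2^{[n]} → ℝ be a submodular set function with f(∅) = 0, and let γ be a fractional partition with respect to a family 𝓕 of subsets of [n] satisfying the standing assumptions. Then ∑_{S ∈ 𝓕} γ(S) f(S) = f([n]) if and only if f is modular, i.e., f(A) = ∑_{i ∈ A} f({i}) for every A ⊆ [n]. -/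
open Finset
open scoped Classical BigOperators

namespace Stmt2Aux

variable {n : ℕ}

noncomputable def PP (w : Fin n → ℕ) (j : Fin n) : Finset (Fin n) :=
  univ.filter (fun j' => w j' < w j)

lemma self_not_mem_PP (w : Fin n → ℕ) (j : Fin n) : j ∉ PP w j := by
  simp [PP]

/-- Telescoping lemma. -/
lemma lemT (f : Finset (Fin n) → ℝ) (w : Fin n → ℕ) (hw : Function.Injective w)
    (L : Finset (Fin n)) :
    ∀ D : Finset (Fin n),
      (∀ j ∈ D, L ⊆ PP w j ∧ PP w j ⊆ L ∪ D ∧ j ∉ L) →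
      ∑ j ∈ D, (f (insert j (PP w j)) - f (PP w j)) = f (L ∪ D) - f L := by
  intro D
  induction D using Finset.strongInduction with
  | _ D ih =>
    intro hD
    rcases D.eq_empty_or_nonempty with rfl | hne
    · simp
    · obtain ⟨j₀, hj₀, hmax⟩ := D.exists_max_image w hne
      have hPeq : PP w j₀ = L ∪ (D.erase j₀) := by
        apply Finset.Subset.antisymm
        · intro x hx
          have hx' : w x < w j₀ := by simpa [PP] using hx
          have hxLD : x ∈ L ∪ D := (hD j₀ hj₀).2.1 hx
          rcases Finset.mem_union.1 hxLD with h | h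
          · exact Finset.mem_union.2 (Or.inl h)
          · refine Finset.mem_union.2 (Or.inr (Finset.mem_erase.2 ⟨?_, h⟩))
            rintro rfl; exact lt_irrefl _ hx'
        · intro x hx
          rcases Finset.mem_union.1 hx with h | h
          · exact (hD j₀ hj₀).1 h
          · have hxD := Finset.mem_of_mem_erase h
            have hne' : x ≠ j₀ := Finset.ne_of_mem_erase h
            have : w x ≤ w j₀ := hmax x hxD
            have : w x < w j₀ := lt_of_le_of_ne this (fun hc => hne' (hw hc))
            simp [PP, this]
      have hins : insert j₀ (PP w j₀) = L ∪ D := by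
        rw [hPeq]
        ext x
        simp only [Finset.mem_insert, Finset.mem_union, Finset.mem_erase]
        constructor
        · rintro (rfl | h | ⟨_, h⟩)
          · exact Or.inr hj₀
          · exact Or.inl h
          · exact Or.inr h
        · rintro (h | h)
          · exact Or.inr (Or.inl h)
          · by_cases hx : x = j₀
            · exact Or.inl hx
            · exact Or.inr (Or.inr ⟨hx, h⟩)
      have hrec : ∑ j ∈ D.erase j₀, (f (insert j (PP w j)) - f (PP w j))
          = f (L ∪ D.erase j₀) - f L := by
        apply ih (D.erase j₀) (Finset.erase_ssubset hj₀)
        intro j hj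
        have hjD := Finset.mem_of_mem_erase hj
        refine ⟨(hD j hjD).1, ?_, (hD j hjD).2.2⟩
        intro x hx
        have hxLD : x ∈ L ∪ D := (hD j hjD).2.1 hx
        rcases Finset.mem_union.1 hxLD with h | h
        · exact Finset.mem_union.2 (Or.inl h)
        · refine Finset.mem_union.2 (Or.inr (Finset.mem_erase.2 ⟨?_, h⟩))
          intro hxeq
          have hlt : w x < w j := by simpa [PP] using hx
          rw [hxeq] at hlt
          exact absurd (hmax j hjD) (not_le.2 hlt)
      rw [← Finset.add_sum_erase _ _ hj₀, hrec, hins, hPeq]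
      ring

/-- Greedy bound. -/
lemma lemA (f : Finset (Fin n) → ℝ) (hf0 : f ∅ = 0)
    (hsub : ∀ A B, f (A ∪ B) + f (A ∩ B) ≤ f A + f B)
    (w : Fin n → ℕ) (hw : Function.Injective w) :
    ∀ S : Finset (Fin n), ∑ j ∈ S, (f (insert j (PP w j)) - f (PP w j)) ≤ f S := by
  intro S
  induction S using Finset.strongInduction with
  | _ S ih =>
    rcases S.eq_empty_or_nonempty with rfl | hne
    · simp [hf0]
    · obtain ⟨j₀, hj₀, hmax⟩ := S.exists_max_image w hne
      have hsubP : S.erase j₀ ⊆ PP w j₀ := by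
        intro x hx
        have hxS := Finset.mem_of_mem_erase hx
        have hne' : x ≠ j₀ := Finset.ne_of_mem_erase hx
        have : w x < w j₀ := lt_of_le_of_ne (hmax x hxS) (fun hc => hne' (hw hc))
        simp [PP, this]
      have hU : S ∪ PP w j₀ = insert j₀ (PP w j₀) := by
        ext x
        simp only [Finset.mem_union, Finset.mem_insert]
        constructor
        · rintro (h | h)
          · by_cases hx : x = j₀
            · exact Or.inl hx
            · exact Or.inr (hsubP (Finset.mem_erase.2 ⟨hx, h⟩))
          · exact Or.inr h
        · rintro (rfl | h)
          · exact Or.inl hj₀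
          · exact Or.inr h
      have hI : S ∩ PP w j₀ = S.erase j₀ := by
        ext x
        simp only [Finset.mem_inter, Finset.mem_erase]
        constructor
        · rintro ⟨h1, h2⟩
          refine ⟨?_, h1⟩
          intro hxeq; rw [hxeq] at h2; exact self_not_mem_PP w j₀ h2
        · rintro ⟨h1, h2⟩
          exact ⟨h2, hsubP (Finset.mem_erase.2 ⟨h1, h2⟩)⟩
      have hkey : f (insert j₀ (PP w j₀)) - f (PP w j₀) ≤ f S - f (S.erase j₀) := by
        have := hsub S (PP w j₀)
        rw [hU, hI] at this
        linarith
      have hrec := ih (S.erase j₀) (Finset.erase_ssubset hj₀)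
      rw [← Finset.add_sum_erase _ _ hj₀]
      linarith

lemma tight (f : Finset (Fin n) → ℝ) (hf0 : f ∅ = 0)
    (hsub : ∀ A B, f (A ∪ B) + f (A ∩ B) ≤ f A + f B)
    {ι : Type} [Fintype ι] (S : ι → Finset (Fin n)) (γ : ι → ℝ)
    (hpos : ∀ k, 0 < γ k)
    (hfrac : ∀ i : Fin n, ∑ k ∈ Finset.univ.filter (fun k => i ∈ S k), γ k = 1)
    (hEq : (∑ k : ι, γ k * f (S k)) = f Finset.univ)
    (w : Fin n → ℕ) (hw : Function.Injective w) (k : ι) :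
    ∑ j ∈ S k, (f (insert j (PP w j)) - f (PP w j)) = f (S k) := by
  set y : Fin n → ℝ := fun j => f (insert j (PP w j)) - f (PP w j) with hy
  have hB : ∑ j : Fin n, y j = f Finset.univ := by
    have := lemT f w hw ∅ Finset.univ (by
      intro j _
      exact ⟨Finset.empty_subset _, by simp, Finset.notMem_empty j⟩)
    simp only [Finset.empty_union, hf0, sub_zero] at this
    exact this
  have hswap : ∑ k : ι, γ k * (∑ j ∈ S k, y j) = f Finset.univ := by
    have step1 : ∀ k : ι, γ k * (∑ j ∈ S k, y j)
        = ∑ j : Fin n, (if j ∈ S k then γ k * y j else 0) := by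
      intro k
      rw [Finset.mul_sum]
      rw [← Finset.sum_filter]
      congr 1
      simp
    calc ∑ k : ι, γ k * (∑ j ∈ S k, y j)
        = ∑ k : ι, ∑ j : Fin n, (if j ∈ S k then γ k * y j else 0) := by
          exact Finset.sum_congr rfl (fun k _ => step1 k)
      _ = ∑ j : Fin n, ∑ k : ι, (if j ∈ S k then γ k * y j else 0) := Finset.sum_comm
      _ = ∑ j : Fin n, (∑ k ∈ Finset.univ.filter (fun k => j ∈ S k), γ k) * y j := by
          refine Finset.sum_congr rfl (fun j _ => ?_)
          rw [Finset.sum_filter, Finset.sum_mul]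
          refine Finset.sum_congr rfl (fun k _ => ?_)
          by_cases h : j ∈ S k <;> simp [h]
      _ = ∑ j : Fin n, y j := by
          refine Finset.sum_congr rfl (fun j _ => ?_)
          rw [hfrac j, one_mul]
      _ = f Finset.univ := hB
  have hzero : ∑ k : ι, γ k * (f (S k) - ∑ j ∈ S k, y j) = 0 := by
    have : ∑ k : ι, γ k * (f (S k) - ∑ j ∈ S k, y j)
        = (∑ k : ι, γ k * f (S k)) - ∑ k : ι, γ k * (∑ j ∈ S k, y j) := by
      rw [← Finset.sum_sub_distrib]
      exact Finset.sum_congr rfl (fun k _ => by ring)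
    rw [this, hEq, hswap, sub_self]
  have hnonneg : ∀ k ∈ (Finset.univ : Finset ι), 0 ≤ γ k * (f (S k) - ∑ j ∈ S k, y j) := by
    intro k _
    have := lemA f hf0 hsub w hw (S k)
    have h2 : 0 ≤ f (S k) - ∑ j ∈ S k, y j := by simpa [hy] using sub_nonneg.2 this
    exact mul_nonneg (hpos k).le h2
  have := (Finset.sum_eq_zero_iff_of_nonneg hnonneg).1 hzero k (Finset.mem_univ k)
  have hγ : γ k ≠ 0 := ne_of_gt (hpos k)
  have := mul_eq_zero.1 this
  rcases this with h | h
  · exact absurd h hγ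
  · linarith [sub_eq_zero.1 h]

-- star lemma: assuming tightness for all injective w, derive the modular-separation identity
lemma star (f : Finset (Fin n) → ℝ) (hf0 : f ∅ = 0)
    (T : Finset (Fin n))
    (htight : ∀ w : Fin n → ℕ, Function.Injective w →
      ∑ j ∈ T, (f (insert j (PP w j)) - f (PP w j)) = f T)
    (A : Finset (Fin n)) :
    f (A ∪ T) + f (A ∩ T) = f A + f T := by
  classical
  set bl : Fin n → ℕ := fun j =>
    if j ∈ A ∩ T then 0 else if j ∈ A then 1 else if j ∈ T then 2 else 3 with hbl
  set w : Fin n → ℕ := fun j => j.val + bl j * n with hwdef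
  have hbl3 : ∀ j, bl j ≤ 3 := by
    intro j
    simp only [hbl]
    split_ifs <;> omega
  have hw : Function.Injective w := by
    intro a b hab
    have ha : w a % n = a.val := by
      simp only [hwdef, Nat.add_mul_mod_self_right]
      exact Nat.mod_eq_of_lt a.isLt
    have hb : w b % n = b.val := by
      simp only [hwdef, Nat.add_mul_mod_self_right]
      exact Nat.mod_eq_of_lt b.isLt
    apply Fin.ext
    rw [← ha, ← hb, hab]
  -- block bounds
  have hwlt : ∀ j, w j < (bl j + 1) * n := by
    intro j
    have h1 := j.isLt
    have h2 : (bl j + 1) * n = bl j * n + n := by ring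
    simp only [hwdef]
    omega
  have hwge : ∀ j, bl j * n ≤ w j := by
    intro j; simp only [hwdef]; omega
  have hblA0 : ∀ j, j ∈ A ∩ T → bl j = 0 := by
    intro j hj; simp only [hbl, if_pos hj]
  have hblmem : ∀ j, bl j ≤ 2 → j ∈ A ∪ T := by
    intro j hj
    by_contra hcon
    simp only [Finset.mem_union, not_or] at hcon
    have h1 : j ∉ A ∩ T := by simp [Finset.mem_inter, hcon.1]
    simp only [hbl, if_neg h1, if_neg hcon.1, if_neg hcon.2] at hj
    omega
  have hbl0mem : ∀ j, bl j = 0 → j ∈ A ∩ T := by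
    intro j hj
    by_contra hcon
    simp only [hbl, if_neg hcon] at hj
    split_ifs at hj <;> omega
  have hblAle1 : ∀ j, j ∈ A → bl j ≤ 1 := by
    intro j hj
    simp only [hbl]
    split_ifs <;> omega
  have hblD : ∀ j, j ∈ T \ A → bl j = 2 := by
    intro j hj
    rw [Finset.mem_sdiff] at hj
    have h1 : j ∉ A ∩ T := by simp [Finset.mem_inter, hj.2]
    simp only [hbl, if_neg h1, if_neg hj.2, if_pos hj.1]
  -- first block sum
  have h1 : ∑ j ∈ A ∩ T, (f (insert j (PP w j)) - f (PP w j)) = f (A ∩ T) := by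
    have := lemT f w hw ∅ (A ∩ T) (by
      intro j hj
      refine ⟨Finset.empty_subset _, ?_, Finset.notMem_empty j⟩
      intro x hx
      have hxlt : w x < w j := by simpa [PP] using hx
      have hj0 : bl j = 0 := hblA0 j hj
      have : w j < n := by have := hwlt j; rw [hj0] at this; simpa using this
      have hxn : w x < n := lt_trans hxlt this
      have hx0 : bl x = 0 := by
        by_contra hc
        have : 1 * n ≤ bl x * n := Nat.mul_le_mul_right n (by omega)
        have := le_trans this (hwge x)
        omega
      simpa using hbl0mem x hx0)
    simpa [hf0] using this
  -- second block sum
  have h2 : ∑ j ∈ T \ A, (f (insert j (PP w j)) - f (PP w j)) = f (A ∪ T) - f A := by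
    have := lemT f w hw A (T \ A) (by
      intro j hj
      have hj2 : bl j = 2 := hblD j hj
      have hjA : j ∉ A := (Finset.mem_sdiff.1 hj).2
      refine ⟨?_, ?_, hjA⟩
      · intro x hx
        have : bl x ≤ 1 := hblAle1 x hx
        have hxlt : w x < 2 * n := by
          have := hwlt x
          have : w x < (bl x + 1) * n := hwlt x
          calc w x < (bl x + 1) * n := this
            _ ≤ 2 * n := Nat.mul_le_mul_right n (by omega)
        have hjge : 2 * n ≤ w j := by
          have := hwge j; rw [hj2] at this; exact this
        simp only [PP, Finset.mem_filter]
        exact ⟨Finset.mem_univ x, lt_of_lt_of_le hxlt hjge⟩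
      · intro x hx
        have hxlt : w x < w j := by simpa [PP] using hx
        have hjlt : w j < 3 * n := by
          have := hwlt j; rw [hj2] at this; exact this
        have hx3 : w x < 3 * n := lt_trans hxlt hjlt
        have hxbl : bl x ≤ 2 := by
          by_contra hc
          have : 3 * n ≤ bl x * n := Nat.mul_le_mul_right n (by omega)
          have := le_trans this (hwge x)
          omega
        have := hblmem x hxbl
        rw [Finset.union_sdiff_self_eq_union]
        exact this)
    rw [Finset.union_sdiff_self_eq_union] at this
    exact this
  -- combine
  have hsplit : ∑ j ∈ T ∩ A, (f (insert j (PP w j)) - f (PP w j))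
        + ∑ j ∈ T \ A, (f (insert j (PP w j)) - f (PP w j))
      = ∑ j ∈ T, (f (insert j (PP w j)) - f (PP w j)) :=
    Finset.sum_inter_add_sum_sdiff T A _
  have htt := htight w hw
  rw [Finset.inter_comm T A] at hsplit
  rw [h1, h2] at hsplit
  rw [htt] at hsplit
  linarith

lemma Mcompl (f : Finset (Fin n) → ℝ) (hf0 : f ∅ = 0) {T : Finset (Fin n)}
    (hT : ∀ A, f (A ∪ T) + f (A ∩ T) = f A + f T) :
    ∀ A, f (A ∪ Tᶜ) + f (A ∩ Tᶜ) = f A + f Tᶜ := by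
  intro A
  have hUT : f Finset.univ = f T + f Tᶜ := by
    have := hT Tᶜ
    have i1 : Tᶜ ∪ T = Finset.univ := by ext x; simp; try tauto
    have i2 : Tᶜ ∩ T = (∅ : Finset (Fin n)) := by ext x; simp; try tauto
    rw [i1, i2, hf0] at this
    linarith
  have c1 := hT (A ∪ Tᶜ)
  have i3 : A ∪ Tᶜ ∪ T = Finset.univ := by
    ext x; simp; try tauto
  have i4 : (A ∪ Tᶜ) ∩ T = A ∩ T := by
    ext x; simp; try tauto
  rw [i3, i4] at c1
  have c2 := hT (A ∩ Tᶜ)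
  have i5 : A ∩ Tᶜ ∪ T = A ∪ T := by
    ext x; simp; try tauto
  have i6 : A ∩ Tᶜ ∩ T = (∅ : Finset (Fin n)) := by
    ext x; simp; try tauto
  rw [i5, i6, hf0] at c2
  have c3 := hT A
  linarith

lemma Munion (f : Finset (Fin n) → ℝ) {T1 T2 : Finset (Fin n)}
    (h1 : ∀ A, f (A ∪ T1) + f (A ∩ T1) = f A + f T1)
    (h2 : ∀ A, f (A ∪ T2) + f (A ∩ T2) = f A + f T2) :
    ∀ A, f (A ∪ (T1 ∪ T2)) + f (A ∩ (T1 ∪ T2)) = f A + f (T1 ∪ T2) := by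
  intro A
  have e1 := h2 (A ∪ T1)
  have i1 : A ∪ T1 ∪ T2 = A ∪ (T1 ∪ T2) := Finset.union_assoc A T1 T2
  rw [i1] at e1
  have e2 := h1 A
  have e3 := h1 T2
  have i2 : T2 ∪ T1 = T1 ∪ T2 := Finset.union_comm T2 T1
  have i3 : T2 ∩ T1 = T1 ∩ T2 := Finset.inter_comm T2 T1
  rw [i2, i3] at e3
  have e4 := h1 (A ∩ (T1 ∪ T2))
  have i4 : A ∩ (T1 ∪ T2) ∪ T1 = T1 ∪ A ∩ T2 := by
    ext x; simp; try tauto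
  have i5 : A ∩ (T1 ∪ T2) ∩ T1 = A ∩ T1 := by
    ext x; simp; try tauto
  rw [i4, i5] at e4
  have e5 := h1 ((A ∪ T1) ∩ T2)
  have i6 : (A ∪ T1) ∩ T2 ∪ T1 = T1 ∪ A ∩ T2 := by
    ext x; simp; try tauto
  have i7 : (A ∪ T1) ∩ T2 ∩ T1 = T1 ∩ T2 := by
    ext x; simp; try tauto
  rw [i6, i7] at e5
  linarith

lemma Minter (f : Finset (Fin n) → ℝ) (hf0 : f ∅ = 0) {T1 T2 : Finset (Fin n)}
    (h1 : ∀ A, f (A ∪ T1) + f (A ∩ T1) = f A + f T1)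
    (h2 : ∀ A, f (A ∪ T2) + f (A ∩ T2) = f A + f T2) :
    ∀ A, f (A ∪ (T1 ∩ T2)) + f (A ∩ (T1 ∩ T2)) = f A + f (T1 ∩ T2) := by
  have h := Mcompl f hf0 (Munion f (Mcompl f hf0 h1) (Mcompl f hf0 h2))
  have i : (T1ᶜ ∪ T2ᶜ)ᶜ = T1 ∩ T2 := by
    ext x; simp
  rw [i] at h
  exact h

/-- swap lemma -/
lemma swapLemma {ι : Type} [Fintype ι] (S : ι → Finset (Fin n)) (γ : ι → ℝ)
    (hfrac : ∀ i : Fin n, ∑ k ∈ Finset.univ.filter (fun k => i ∈ S k), γ k = 1)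
    (y : Fin n → ℝ) :
    ∑ k : ι, γ k * (∑ j ∈ S k, y j) = ∑ j : Fin n, y j := by
  have step1 : ∀ k : ι, γ k * (∑ j ∈ S k, y j)
      = ∑ j : Fin n, (if j ∈ S k then γ k * y j else 0) := by
    intro k
    rw [Finset.mul_sum, ← Finset.sum_filter]
    congr 1
    simp
  calc ∑ k : ι, γ k * (∑ j ∈ S k, y j)
      = ∑ k : ι, ∑ j : Fin n, (if j ∈ S k then γ k * y j else 0) :=
        Finset.sum_congr rfl (fun k _ => step1 k)
    _ = ∑ j : Fin n, ∑ k : ι, (if j ∈ S k then γ k * y j else 0) := Finset.sum_comm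
    _ = ∑ j : Fin n, (∑ k ∈ Finset.univ.filter (fun k => j ∈ S k), γ k) * y j := by
        refine Finset.sum_congr rfl (fun j _ => ?_)
        rw [Finset.sum_filter, Finset.sum_mul]
        refine Finset.sum_congr rfl (fun k _ => ?_)
        by_cases h : j ∈ S k <;> simp [h]
    _ = ∑ j : Fin n, y j := by
        refine Finset.sum_congr rfl (fun j _ => ?_)
        rw [hfrac j, one_mul]

end Stmt2Aux

open Stmt2Aux

theorem stmt_2 (n : ℕ) (hn : 2 ≤ n) (f : Finset (Fin n) → ℝ)
    (hf0 : f ∅ = 0)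
    (hsubmod : ∀ A B : Finset (Fin n), f (A ∪ B) + f (A ∩ B) ≤ f A + f B)
    (ι : Type) [Fintype ι] (S : ι → Finset (Fin n)) (γ : ι → ℝ)
    (hproper : ∀ k, S k ≠ Finset.univ)
    (hpos : ∀ k, 0 < γ k)
    (hsep : ∀ i j : Fin n, i ≠ j → ¬ (∀ k, i ∈ S k ↔ j ∈ S k))
    (hfrac : ∀ i : Fin n, ∑ k ∈ Finset.univ.filter (fun k => i ∈ S k), γ k = 1) :
    (∑ k : ι, γ k * f (S k)) = f Finset.univ ↔
      ∀ A : Finset (Fin n), f A = ∑ i ∈ A, f {i} := by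
  constructor
  · intro hEq
    have hstar : ∀ k, ∀ A, f (A ∪ S k) + f (A ∩ S k) = f A + f (S k) := by
      intro k A
      exact star f hf0 (S k)
        (fun w hw => tight f hf0 hsubmod S γ hpos hfrac hEq w hw k) A
    -- singletons are modular separators
    have hsingle : ∀ i : Fin n, ∀ A, f (A ∪ {i}) + f (A ∩ {i}) = f A + f {i} := by
      intro i
      set g : ι → Finset (Fin n) := fun k => if i ∈ S k then S k else (S k)ᶜ with hg
      have hgM : ∀ k, ∀ A, f (A ∪ g k) + f (A ∩ g k) = f A + f (g k) := by
        intro k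
        by_cases h : i ∈ S k
        · simpa [hg, h] using hstar k
        · simpa [hg, h] using Mcompl f hf0 (hstar k)
      have hMtop : ∀ A : Finset (Fin n), f (A ∪ Finset.univ) + f (A ∩ Finset.univ)
          = f A + f Finset.univ := by
        intro A
        have e1 : A ∪ Finset.univ = Finset.univ := by ext x; simp
        have e2 : A ∩ Finset.univ = A := by ext x; simp
        rw [e1, e2]
        ring
      have hinf : ∀ s : Finset ι, ∀ A, f (A ∪ s.inf g) + f (A ∩ s.inf g)
          = f A + f (s.inf g) := by
        intro s
        induction s using Finset.cons_induction with
        | empty => simpa using hMtop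
        | cons a s ha ih =>
          rw [Finset.inf_cons]
          exact Minter f hf0 (hgM a) ih
      have hTi : (Finset.univ : Finset ι).inf g = {i} := by
        ext x
        rw [Finset.mem_inf]
        simp only [Finset.mem_singleton]
        constructor
        · intro hx
          by_contra hxne
          rcases not_forall.1 (hsep x i hxne) with ⟨k, hk⟩
          have hxk := hx k (Finset.mem_univ k)
          by_cases h : i ∈ S k
          · have hxS : x ∈ S k := by rw [hg] at hxk; simpa [h] using hxk
            exact hk ⟨fun _ => h, fun _ => hxS⟩
          · have hxS : x ∉ S k := by
              rw [hg] at hxk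
              simp only [if_neg h] at hxk
              simpa using hxk
            exact hk ⟨fun hc => absurd hc hxS, fun hc => absurd hc h⟩
        · intro hxeq k _
          by_cases h : i ∈ S k
          · simp [hg, h, hxeq]
          · simp [hg, h, hxeq]
      have := hinf Finset.univ
      rw [hTi] at this
      exact this
    -- conclude modularity
    intro A
    induction A using Finset.induction_on with
    | empty => simp [hf0]
    | insert a s ha ih =>
      have h1 := hsingle a s
      have h2 : s ∪ {a} = insert a s := by
        ext x; simp [Finset.mem_insert]
      have h3 : s ∩ {a} = (∅ : Finset (Fin n)) := by
        ext x
        simp only [Finset.mem_inter, Finset.mem_singleton, Finset.notMem_empty, iff_false,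
          not_and]
        rintro hx rfl
        exact ha hx
      rw [h2, h3, hf0] at h1
      rw [Finset.sum_insert ha, ← ih]
      linarith
  · intro hmod
    have h1 : ∀ k, γ k * f (S k) = γ k * ∑ j ∈ S k, f {j} := by
      intro k; rw [← hmod (S k)]
    calc ∑ k : ι, γ k * f (S k) = ∑ k : ι, γ k * (∑ j ∈ S k, f {j}) :=
          Finset.sum_congr rfl (fun k _ => h1 k)
      _ = ∑ j : Fin n, f {j} := swapLemma S γ hfrac _
      _ = f Finset.univ := (hmod Finset.univ).symm
end

section
/- Let n ≥ 2, let f : 2^{[n]} → ℝ be a submodular set function with f(∅) = 0, and let γ be a fractional partition with respect to a family 𝓕 of subsets of [n] satisfying the standing assumptions. Then f([n]) = ∑_{S ∈ 𝓕} γ(S) f(S | [n] ∖ S) if and only if f is modular, i.e., f(A) = ∑_{i ∈ A} f({i}) for every A ⊆ [n]. -/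
open Finset
open scoped Classical BigOperators

private lemma take_succ_toFinset {α : Type} [DecidableEq α] (l : List α) (m : ℕ)
    (hm : m < l.length) :
    (l.take (m+1)).toFinset = insert l[m] (l.take m).toFinset := by
  rw [List.take_succ, List.getElem?_eq_getElem hm]
  simp only [Option.toList_some, List.toFinset_append, List.toFinset_cons, List.toFinset_nil,
    LawfulSingleton.insert_empty_eq]
  rw [Finset.union_comm, ← Finset.insert_eq]

private lemma getElem_not_mem_take {α : Type} [DecidableEq α] (l : List α) (hnd : l.Nodup)
    (m : ℕ) (hm : m < l.length) : l[m] ∉ (l.take m).toFinset := by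
  simp only [List.mem_toFinset]
  intro h
  have h2 : l.drop m = l[m] :: l.drop (m+1) := List.drop_eq_getElem_cons hm
  have hd : List.Disjoint (l.take m) (l.drop m) := by
    have := (List.take_append_drop m l) ▸ hnd
    exact (List.nodup_append'.mp this).2.2
  exact hd h (by rw [h2]; exact List.mem_cons_self)

/-- conditional marginal decreases under larger conditioning -/
private lemma cond_mono {n : ℕ} {f : Finset (Fin n) → ℝ}
    (hsubmod : ∀ A B : Finset (Fin n), f (A ∪ B) + f (A ∩ B) ≤ f A + f B)
    {i : Fin n} {B B' : Finset (Fin n)} (hBB : B ⊆ B') (hi : i ∉ B') :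
    f (insert i B') - f B' ≤ f (insert i B) - f B := by
  have h := hsubmod (insert i B) B'
  have h1 : insert i B ∪ B' = insert i B' := by
    ext x; simp only [Finset.mem_union, Finset.mem_insert]
    constructor
    · rintro (h | h)
      · rcases h with rfl | h
        · exact Or.inl rfl
        · exact Or.inr (hBB h)
      · exact Or.inr h
    · rintro (rfl | h)
      · exact Or.inl (Or.inl rfl)
      · exact Or.inr h
  have h2 : insert i B ∩ B' = B := by
    ext x; simp only [Finset.mem_inter, Finset.mem_insert]
    constructor
    · rintro ⟨rfl | hx, hx'⟩
      · exact absurd hx' hi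
      · exact hx
    · intro hx; exact ⟨Or.inr hx, hBB hx⟩
  rw [h1, h2] at h
  linarith

/-- Key equality-extraction lemma: from the equality, every marginal along every chain
matches its conditional counterpart. -/
private lemma key {n : ℕ} (f : Finset (Fin n) → ℝ) (hf0 : f ∅ = 0)
    (hsubmod : ∀ A B : Finset (Fin n), f (A ∪ B) + f (A ∩ B) ≤ f A + f B)
    {ι : Type} [Fintype ι] (S : ι → Finset (Fin n)) (γ : ι → ℝ)
    (hpos : ∀ k, 0 < γ k)
    (hfrac : ∀ i : Fin n, ∑ k ∈ Finset.univ.filter (fun k => i ∈ S k), γ k = 1)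
    (Heq : f Finset.univ = ∑ k : ι, γ k * (f Finset.univ - f (Finset.univ \ S k)))
    (l : List (Fin n)) (hnd : l.Nodup) (hcomp : ∀ a, a ∈ l)
    (m : ℕ) (hm : m < l.length) (k : ι) (hk : l[m] ∈ S k) :
    f ((Finset.univ \ S k) ∪ (l.take (m+1)).toFinset)
      - f ((Finset.univ \ S k) ∪ (l.take m).toFinset)
    = f ((l.take (m+1)).toFinset) - f ((l.take m).toFinset) := by
  have hlenuniv : l.toFinset = (Finset.univ : Finset (Fin n)) :=
    Finset.eq_univ_iff_forall.mpr (fun a => List.mem_toFinset.mpr (hcomp a))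
  have hlen : l.length = n := by
    have := List.toFinset_card_of_nodup hnd
    rw [hlenuniv] at this
    simpa using this.symm
  set F : ℕ → Finset (Fin n) := fun m => (l.take m).toFinset with hF
  have hF0 : F 0 = ∅ := by simp [hF]
  have hFn : F n = Finset.univ := by
    simp only [hF, ← hlen, List.take_length]
    exact hlenuniv
  -- telescoping
  have tele : ∀ C : Finset (Fin n),
      ∑ j ∈ Finset.range n, (f (C ∪ F (j+1)) - f (C ∪ F j)) = f Finset.univ - f C := by
    intro C
    rw [Finset.sum_range_sub (fun j => f (C ∪ F j))]
    rw [hFn, hF0]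
    rw [Finset.union_empty, Finset.union_eq_right.mpr (Finset.subset_univ C)]
  have tele0 : ∑ j ∈ Finset.range n, (f (F (j+1)) - f (F j)) = f Finset.univ := by
    rw [Finset.sum_range_sub (fun j => f (F j)), hFn, hF0, hf0, sub_zero]
  -- the per-step quantities
  set a : ℕ → ι → ℝ := fun j k =>
    γ k * (f ((Finset.univ \ S k) ∪ F (j+1)) - f ((Finset.univ \ S k) ∪ F j)) with ha
  set d : ℕ → ℝ := fun j => f (F (j+1)) - f (F j) with hd
  -- per-step structural facts
  have hstep : ∀ j (hj : j < n), F (j+1) = insert (l[j]'(by omega)) (F j) := by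
    intro j hj; exact take_succ_toFinset l j (by omega)
  have hnotmem : ∀ j (hj : j < n), (l[j]'(by omega)) ∉ F j := by
    intro j hj; exact getElem_not_mem_take l hnd j (by omega)
  -- sum over k of a j k, reduced to the filter
  have hfilter : ∀ j (hj : j < n),
      ∑ k : ι, a j k = ∑ k ∈ Finset.univ.filter (fun k => (l[j]'(by omega)) ∈ S k), a j k := by
    intro j hj
    refine (Finset.sum_subset (Finset.filter_subset _ _) ?_).symm
    intro k _ hknot
    simp only [Finset.mem_filter, Finset.mem_univ, true_and] at hknot
    have : (Finset.univ \ S k) ∪ F (j+1) = (Finset.univ \ S k) ∪ F j := by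
      rw [hstep j hj, Finset.union_insert, Finset.insert_eq_self]
      exact Finset.mem_union_left _ (Finset.mem_sdiff.mpr ⟨Finset.mem_univ _, hknot⟩)
    simp [ha, this]
  -- termwise inequality a j k ≤ γ k * d j for k in the filter
  have htermle : ∀ j (hj : j < n), ∀ k, (l[j]'(by omega)) ∈ S k → a j k ≤ γ k * d j := by
    intro j hj k hkj
    have hiC : l[j]'(by omega) ∉ (Finset.univ \ S k) ∪ F j := by
      intro hmem
      rcases Finset.mem_union.mp hmem with h | h
      · exact (Finset.mem_sdiff.mp h).2 hkj
      · exact hnotmem j hj h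
    have := cond_mono hsubmod (Finset.subset_union_right (s₁ := Finset.univ \ S k) (s₂ := F j)) hiC
    have h2 : (Finset.univ \ S k) ∪ F (j+1) = insert (l[j]'(by omega)) ((Finset.univ \ S k) ∪ F j) := by
      rw [hstep j hj, Finset.union_insert]
    simp only [ha, hd]
    rw [h2, hstep j hj]
    have hγ := (hpos k).le
    nlinarith [this]
  -- per-step sum bound
  have hle : ∀ j ∈ Finset.range n, ∑ k : ι, a j k ≤ d j := by
    intro j hjr
    have hj : j < n := Finset.mem_range.mp hjr
    rw [hfilter j hj]
    calc ∑ k ∈ Finset.univ.filter (fun k => l[j]'(by omega) ∈ S k), a j k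
        ≤ ∑ k ∈ Finset.univ.filter (fun k => l[j]'(by omega) ∈ S k), γ k * d j :=
          Finset.sum_le_sum (fun k hk' => htermle j hj k
            (by simpa using (Finset.mem_filter.mp hk').2))
      _ = d j := by rw [← Finset.sum_mul, hfrac, one_mul]
  -- total sums agree
  have htot : ∑ j ∈ Finset.range n, (∑ k : ι, a j k) = ∑ j ∈ Finset.range n, d j := by
    rw [Finset.sum_comm]
    rw [tele0]
    rw [Heq]
    refine Finset.sum_congr rfl (fun k _ => ?_)
    rw [← Finset.mul_sum, tele]
  -- hence per-step equality
  have heqstep := (Finset.sum_eq_sum_iff_of_le hle).mp htot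
  have hmn : m < n := by omega
  have heqm := heqstep m (Finset.mem_range.mpr hmn)
  -- now extract per-k equality at step m
  rw [hfilter m hmn] at heqm
  have heqm2 : ∑ k' ∈ Finset.univ.filter (fun k' => l[m] ∈ S k'), a m k'
      = ∑ k' ∈ Finset.univ.filter (fun k' => l[m] ∈ S k'), γ k' * d m := by
    rw [heqm, ← Finset.sum_mul, hfrac, one_mul]
  have hterm := (Finset.sum_eq_sum_iff_of_le
    (fun k' hk' => htermle m hmn k' (by simpa using (Finset.mem_filter.mp hk').2))).mp heqm2
  have hkf : k ∈ Finset.univ.filter (fun k' => l[m] ∈ S k') := by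
    simp [hk]
  have := hterm k hkf
  rw [ha, hd] at this
  have hγ := (hpos k).ne'
  field_simp at this
  linarith

theorem stmt_3 (n : ℕ) (hn : 2 ≤ n) (f : Finset (Fin n) → ℝ)
    (hf0 : f ∅ = 0)
    (hsubmod : ∀ A B : Finset (Fin n), f (A ∪ B) + f (A ∩ B) ≤ f A + f B)
    (ι : Type) [Fintype ι] (S : ι → Finset (Fin n)) (γ : ι → ℝ)
    (hproper : ∀ k, S k ≠ Finset.univ)
    (hpos : ∀ k, 0 < γ k)
    (hsep : ∀ i j : Fin n, i ≠ j → ¬ (∀ k, i ∈ S k ↔ j ∈ S k))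
    (hfrac : ∀ i : Fin n, ∑ k ∈ Finset.univ.filter (fun k => i ∈ S k), γ k = 1) :
    f Finset.univ =
      (∑ k : ι, γ k * (f (S k ∪ (Finset.univ \ S k)) - f (Finset.univ \ S k))) ↔
      ∀ A : Finset (Fin n), f A = ∑ i ∈ A, f {i} := by
  have huSk : ∀ k, S k ∪ (Finset.univ \ S k) = (Finset.univ : Finset (Fin n)) := by
    intro k
    rw [Finset.union_sdiff_of_subset (Finset.subset_univ _)]
  constructor
  · -- forward direction
    intro Heq
    simp only [huSk] at Heq
    -- separation: for each i ≠ j there is k with i ∈ S k, j ∉ S k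
    have hsep' : ∀ i j : Fin n, i ≠ j → ∃ k, i ∈ S k ∧ j ∉ S k := by
      intro i j hij
      by_contra hcon
      push_neg at hcon
      -- hcon : ∀ k, i ∈ S k → j ∈ S k
      obtain ⟨k0, hk0⟩ := not_forall.mp (hsep i j hij)
      have hk0' : j ∈ S k0 ∧ i ∉ S k0 := by tauto
      have hsubF : Finset.univ.filter (fun k => i ∈ S k) ⊆
          Finset.univ.filter (fun k => j ∈ S k) := by
        intro k hk
        simp only [Finset.mem_filter, Finset.mem_univ, true_and] at *
        exact hcon k hk
      have hsub2 : insert k0 (Finset.univ.filter (fun k => i ∈ S k)) ⊆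
          Finset.univ.filter (fun k => j ∈ S k) := by
        refine Finset.insert_subset ?_ hsubF
        simp [hk0'.1]
      have hk0nm : k0 ∉ Finset.univ.filter (fun k => i ∈ S k) := by
        simp [hk0'.2]
      have hge : ∑ k ∈ insert k0 (Finset.univ.filter (fun k => i ∈ S k)), γ k ≤
          ∑ k ∈ Finset.univ.filter (fun k => j ∈ S k), γ k :=
        Finset.sum_le_sum_of_subset_of_nonneg hsub2 (fun k _ _ => (hpos k).le)
      rw [Finset.sum_insert hk0nm, hfrac i, hfrac j] at hge
      linarith [hpos k0]
    -- the pair-exchange property, from key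
    have hP : ∀ (i : Fin n) (T : Finset (Fin n)), i ∉ T → ∀ k, i ∈ S k →
        f (insert i ((Finset.univ \ S k) ∪ T)) - f ((Finset.univ \ S k) ∪ T)
          = f (insert i T) - f T := by
      intro i T hiT k hk
      set l : List (Fin n) := T.toList ++ i :: (Finset.univ \ insert i T).toList with hl
      have hnd : l.Nodup := by
        rw [hl, List.nodup_append']
        refine ⟨Finset.nodup_toList T, ?_, ?_⟩
        · rw [List.nodup_cons]
          constructor
          · intro hmem
            rw [Finset.mem_toList, Finset.mem_sdiff] at hmem
            exact hmem.2 (Finset.mem_insert_self i T)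
          · exact Finset.nodup_toList _
        · intro x hx hy
          rw [Finset.mem_toList] at hx
          rcases List.mem_cons.mp hy with rfl | hy'
          · exact hiT hx
          · rw [Finset.mem_toList, Finset.mem_sdiff] at hy'
            exact hy'.2 (Finset.mem_insert_of_mem hx)
      have hcomp : ∀ a, a ∈ l := by
        intro a
        rw [hl, List.mem_append, List.mem_cons]
        by_cases h1 : a ∈ T
        · exact Or.inl (Finset.mem_toList.mpr h1)
        · by_cases h2 : a = i
          · exact Or.inr (Or.inl h2)
          · refine Or.inr (Or.inr (Finset.mem_toList.mpr ?_))
            rw [Finset.mem_sdiff, Finset.mem_insert]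
            exact ⟨Finset.mem_univ _, by tauto⟩
      have hlen : l.length = n := by
        have hlenuniv : l.toFinset = (Finset.univ : Finset (Fin n)) :=
          Finset.eq_univ_iff_forall.mpr (fun a => List.mem_toFinset.mpr (hcomp a))
        have := List.toFinset_card_of_nodup hnd
        rw [hlenuniv] at this
        simpa using this.symm
      have hcardlt : T.card < n := by
        have := Finset.card_insert_of_notMem hiT
        have h2 : (insert i T).card ≤ n := by
          simpa using Finset.card_le_card (Finset.subset_univ (insert i T))
        omega
      have hmlen : T.card < l.length := by omega
      -- take T.card l = T.toList
      have htake : l.take T.card = T.toList := by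
        rw [hl]
        exact List.take_left' (Finset.length_toList T)
      have hFT : (l.take T.card).toFinset = T := by rw [htake]; exact Finset.toList_toFinset T
      -- identify l[T.card] = i
      have hstep := take_succ_toFinset l T.card hmlen
      have htake1 : l.take (T.card + 1) = T.toList ++ [i] := by
        rw [hl]
        have : T.card + 1 = T.toList.length + 1 := by rw [Finset.length_toList]
        rw [this, List.take_append]
        simp
      have hFT1 : (l.take (T.card + 1)).toFinset = insert i T := by
        rw [htake1]
        simp only [List.toFinset_append, Finset.toList_toFinset, List.toFinset_cons,
          List.toFinset_nil, LawfulSingleton.insert_empty_eq]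
        rw [Finset.union_comm, ← Finset.insert_eq]
      have hgetm : l[T.card]'hmlen = i := by
        rw [hFT] at hstep
        have h1 : insert (l[T.card]'hmlen) T = insert i T := hstep.symm.trans hFT1
        have h2 : l[T.card]'hmlen ∈ insert i T := by
          rw [← h1]; exact Finset.mem_insert_self _ _
        rcases Finset.mem_insert.mp h2 with h | h
        · exact h
        · exfalso
          have := getElem_not_mem_take l hnd T.card hmlen
          rw [hFT] at this
          exact this h
      have := key f hf0 hsubmod S γ hpos hfrac Heq l hnd hcomp T.card hmlen k
        (by rw [hgetm]; exact hk)
      rw [hFT, hFT1] at this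
      rw [Finset.union_insert] at this
      exact this
    -- pair exchange for arbitrary pairs
    have hQ : ∀ (i j : Fin n), i ≠ j → ∀ T : Finset (Fin n), i ∉ T →
        f (insert i (insert j T)) - f (insert j T) = f (insert i T) - f T := by
      intro i j hij T hiT
      by_cases hjT : j ∈ T
      · rw [Finset.insert_eq_self.mpr hjT]
      obtain ⟨k, hik, hjk⟩ := hsep' i j hij
      have hiC : i ∉ (Finset.univ \ S k) ∪ T := by
        intro h
        rcases Finset.mem_union.mp h with h | h
        · exact (Finset.mem_sdiff.mp h).2 hik
        · exact hiT h
      have h1 : f (insert i ((Finset.univ \ S k) ∪ T)) - f ((Finset.univ \ S k) ∪ T)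
          ≤ f (insert i (insert j T)) - f (insert j T) := by
        apply cond_mono hsubmod _ hiC
        intro x hx
        rcases Finset.mem_insert.mp hx with rfl | hx
        · exact Finset.mem_union_left _ (Finset.mem_sdiff.mpr ⟨Finset.mem_univ _, hjk⟩)
        · exact Finset.mem_union_right _ hx
      have h2 : f (insert i (insert j T)) - f (insert j T) ≤ f (insert i T) - f T := by
        apply cond_mono hsubmod (Finset.subset_insert j T)
        intro h
        rcases Finset.mem_insert.mp h with h | h
        · exact hij h
        · exact hiT h
      have h3 := hP i T hiT k hik
      linarith
    -- constant marginals
    have hR : ∀ (i : Fin n) (T : Finset (Fin n)), i ∉ T →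
        f (insert i T) - f T = f {i} := by
      intro i T
      induction T using Finset.induction_on with
      | empty => intro _; simp [hf0]
      | @insert j T' hjT ih =>
        intro hi
        have hij : i ≠ j := by
          intro h; exact hi (h ▸ Finset.mem_insert_self j T')
        have hiT' : i ∉ T' := fun h => hi (Finset.mem_insert_of_mem h)
        rw [hQ i j hij T' hiT']
        exact ih hiT'
    -- modularity
    intro A
    induction A using Finset.induction_on with
    | empty => simp [hf0]
    | @insert i A' hiA ih =>
      rw [Finset.sum_insert hiA, ← ih]
      have := hR i A' hiA
      linarith
  · -- reverse direction
    intro hmod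
    simp only [huSk]
    have hdiff : ∀ k, f Finset.univ - f (Finset.univ \ S k) = ∑ i ∈ S k, f {i} := by
      intro k
      rw [hmod Finset.univ, hmod (Finset.univ \ S k)]
      have := Finset.sum_sdiff (Finset.subset_univ (S k)) (f := fun i => f {i})
      linarith
    calc f Finset.univ = ∑ i : Fin n, f {i} := by rw [hmod Finset.univ]
      _ = ∑ i : Fin n, (∑ k ∈ Finset.univ.filter (fun k => i ∈ S k), γ k) * f {i} := by
          refine Finset.sum_congr rfl (fun i _ => ?_); rw [hfrac i, one_mul]
      _ = ∑ i : Fin n, ∑ k : ι, (if i ∈ S k then γ k * f {i} else 0) := by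
          refine Finset.sum_congr rfl (fun i _ => ?_)
          rw [Finset.sum_mul, Finset.sum_filter]
      _ = ∑ k : ι, ∑ i : Fin n, (if i ∈ S k then γ k * f {i} else 0) := Finset.sum_comm
      _ = ∑ k : ι, γ k * (f Finset.univ - f (Finset.univ \ S k)) := by
          refine Finset.sum_congr rfl (fun k _ => ?_)
          rw [hdiff k, ← Finset.sum_filter, Finset.mul_sum]
          refine Finset.sum_congr ?_ (fun i _ => rfl)
          ext i; simp
end

section
/- Let n ≥ 2, let f : 2^{[n]} → ℝ be a submodular set function with f(∅) = 0 that is non-decreasing (f(S) ≤ f(T) whenever S ⊆ T), and let α : 𝓕 → ℚ₊ be a fractional covering with respect to a family 𝓕 of subsets of [n] satisfying the standing assumptions. Then ∑_{S ∈ 𝓕} α(S) f(S) = f([n]) if and only if f is modular and f(Z) = 0 for every Z ⊆ {i ∈ [n] : ∑_{S ∈ 𝓕 : i ∈ S} α(S) > 1}. -/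
open Finset
open scoped Classical BigOperators

/-!
For weights `w` and sets `S k`, consider the defect `Φ T = ∑ k, w k * f (S k ∩ T) - f T`, which
vanishes at `∅`. Adding `j ∉ T` raises it by `∑_{k ∋ j} w k * Δⱼ(S k ∩ T) - Δⱼ(T)`, where `Δⱼ` is
the marginal gain of `j`; since the weights of the sets containing `j` sum to at least `1` and
`Δⱼ(T) ≥ 0`, this is at least `∑_{k ∋ j} w k * (Δⱼ(S k ∩ T) - Δⱼ(T))`, which is nonnegative by
diminishing returns. So `Φ` is monotone, which is Shearer's inequality `f univ ≤ ∑ k, w k * f (S k)`.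

If equality holds then `Φ ≡ 0`, so every slack vanishes: `Δⱼ(S k ∩ T) = Δⱼ(T)` whenever
`j ∈ S k`. Choosing `S k` containing exactly one of `i ≠ j` shows that adding `i` never changes the
marginal gain of `j`, so `f` is modular. For modular `f` the defect at `univ` is
`∑ i, (c i - 1) * f {i}`, with `c i ≥ 1` the coverage of `i`, a sum of nonnegative terms.
-/

section

variable {E : Type*} [DecidableEq E]

def IsSubmodular (f : Finset E → ℝ) : Prop :=
  ∀ A B : Finset E, f (A ∪ B) + f (A ∩ B) ≤ f A + f B

def IsModular (f : Finset E → ℝ) : Prop :=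
  ∀ A : Finset E, f A = ∑ i ∈ A, f {i}

theorem IsSubmodular.insert_sub_le {f : Finset E → ℝ} (hf : IsSubmodular f) {X Y : Finset E}
    {j : E} (hXY : X ⊆ Y) (hjY : j ∉ Y) : f (insert j Y) - f Y ≤ f (insert j X) - f X := by
  have h := hf (insert j X) Y
  rw [insert_union, union_eq_right.2 hXY, insert_inter_of_notMem hjY, inter_eq_left.2 hXY] at h
  linarith

theorem isModular_of_insert_sub_insert {f : Finset E → ℝ} (hf0 : f ∅ = 0)
    (h : ∀ i j : E, i ≠ j → ∀ X : Finset E, i ∉ X → j ∉ X →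
      f (insert j (insert i X)) - f (insert i X) = f (insert j X) - f X) :
    IsModular f := by
  have hmarginal : ∀ j X, j ∉ X → f (insert j X) - f X = f {j} := by
    intro j X
    induction X using Finset.induction_on with
    | empty => intro _; simp [hf0]
    | @insert i X hiX ih =>
      intro hjX
      rw [mem_insert, not_or] at hjX
      rw [h i j (Ne.symm hjX.1) X hiX hjX.2, ih hjX.2]
  intro A
  induction A using Finset.induction_on with
  | empty => simp [hf0]
  | @insert i A hiA ih =>
    rw [sum_insert hiA, ← ih]
    linarith [hmarginal i A hiA]

variable {ι : Type*}

theorem slack_nonneg {w : ι → ℝ} {S : ι → Finset E} {f : Finset E → ℝ} (hw : ∀ k, 0 ≤ w k)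
    (hsub : IsSubmodular f) {j : E} {T : Finset E} (hjT : j ∉ T) (k : ι) :
    0 ≤ w k * ((f (insert j (S k ∩ T)) - f (S k ∩ T)) - (f (insert j T) - f T)) :=
  mul_nonneg (hw k) (sub_nonneg.2 (hsub.insert_sub_le inter_subset_right hjT))

variable [Fintype ι]

def coverage (w : ι → ℝ) (S : ι → Finset E) (i : E) : ℝ :=
  ∑ k ∈ univ.filter (fun k => i ∈ S k), w k

def shearerDefect (w : ι → ℝ) (S : ι → Finset E) (f : Finset E → ℝ) (T : Finset E) : ℝ :=
  ∑ k, w k * f (S k ∩ T) - f T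

variable {w : ι → ℝ} {S : ι → Finset E} {f : Finset E → ℝ}

theorem shearerDefect_empty (hf0 : f ∅ = 0) : shearerDefect w S f ∅ = 0 := by
  simp [shearerDefect, hf0]

theorem shearerDefect_insert_sub (j : E) (T : Finset E) :
    shearerDefect w S f (insert j T) - shearerDefect w S f T =
      ∑ k ∈ univ.filter (fun k => j ∈ S k), w k * (f (insert j (S k ∩ T)) - f (S k ∩ T)) -
        (f (insert j T) - f T) := by
  have hsum : ∑ k, w k * (f (S k ∩ insert j T) - f (S k ∩ T)) =
      ∑ k ∈ univ.filter (fun k => j ∈ S k), w k * (f (insert j (S k ∩ T)) - f (S k ∩ T)) := by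
    rw [sum_filter]
    refine sum_congr rfl fun k _ => ?_
    split_ifs with hjk
    · rw [inter_insert_of_mem hjk]
    · rw [inter_insert_of_notMem hjk, sub_self, mul_zero]
  rw [← hsum, shearerDefect, shearerDefect]
  simp only [mul_sub, sum_sub_distrib]
  ring

theorem sum_slack_le_shearerDefect_insert_sub (hmono : Monotone f) {j : E}
    (hcov : 1 ≤ coverage w S j) (T : Finset E) :
    ∑ k ∈ univ.filter (fun k => j ∈ S k),
        w k * ((f (insert j (S k ∩ T)) - f (S k ∩ T)) - (f (insert j T) - f T)) ≤
      shearerDefect w S f (insert j T) - shearerDefect w S f T := by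
  have hgain : 0 ≤ f (insert j T) - f T := sub_nonneg.2 (hmono (subset_insert j T))
  rw [shearerDefect_insert_sub]
  simp only [mul_sub, sum_sub_distrib, ← sum_mul]
  rw [coverage] at hcov
  nlinarith

theorem shearerDefect_monotone (hw : ∀ k, 0 ≤ w k) (hsub : IsSubmodular f) (hmono : Monotone f)
    (hcov : ∀ i, 1 ≤ coverage w S i) : Monotone (shearerDefect w S f) := by
  refine monotone_iff_forall_le_insert.2 fun T j hjT => ?_
  have := sum_slack_le_shearerDefect_insert_sub hmono (hcov j) T
  linarith [sum_nonneg fun k (_ : k ∈ univ.filter (fun k => j ∈ S k)) =>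
    slack_nonneg (S := S) hw hsub hjT k]

theorem insert_sub_inter_eq_of_shearerDefect_univ_eq_zero [Fintype E] (hw : ∀ k, 0 < w k)
    (hf0 : f ∅ = 0) (hsub : IsSubmodular f) (hmono : Monotone f) (hcov : ∀ i, 1 ≤ coverage w S i)
    (hΦ : shearerDefect w S f univ = 0) {j : E} {T : Finset E} (hjT : j ∉ T) {k : ι}
    (hjk : j ∈ S k) :
    f (insert j (S k ∩ T)) - f (S k ∩ T) = f (insert j T) - f T := by
  have hw' : ∀ k, 0 ≤ w k := fun k => (hw k).le
  have hmono' := shearerDefect_monotone hw' hsub hmono hcov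
  have hzero : ∀ T, shearerDefect w S f T = 0 := fun T =>
    le_antisymm (hΦ ▸ hmono' (subset_univ T))
      (shearerDefect_empty (w := w) (S := S) hf0 ▸ hmono' (empty_subset T))
  have hslack := sum_slack_le_shearerDefect_insert_sub hmono (hcov j) T
  rw [hzero, hzero, sub_self] at hslack
  have hslack_zero := (sum_eq_zero_iff_of_nonneg fun k _ => slack_nonneg hw' hsub hjT k).1
    (le_antisymm hslack (sum_nonneg fun k _ => slack_nonneg hw' hsub hjT k)) k
    (mem_filter.2 ⟨mem_univ k, hjk⟩)
  exact sub_eq_zero.1 ((mul_eq_zero.1 hslack_zero).resolve_left (hw k).ne')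

theorem isModular_of_shearerDefect_univ_eq_zero [Fintype E] (hw : ∀ k, 0 < w k)
    (hf0 : f ∅ = 0) (hsub : IsSubmodular f) (hmono : Monotone f) (hcov : ∀ i, 1 ≤ coverage w S i)
    (hsep : ∀ i j : E, i ≠ j → ¬ ∀ k, i ∈ S k ↔ j ∈ S k) (hΦ : shearerDefect w S f univ = 0) :
    IsModular f := by
  have hseparated : ∀ i j k X, j ∈ S k → i ∉ S k → i ≠ j → i ∉ X → j ∉ X →
      f (insert j (insert i X)) - f (insert i X) = f (insert j X) - f X := by
    intro i j k X hjk hik hij hiX hjX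
    have hjiX : j ∉ insert i X := by simp [hjX, Ne.symm hij]
    have h₁ := insert_sub_inter_eq_of_shearerDefect_univ_eq_zero hw hf0 hsub hmono hcov hΦ hjiX hjk
    have h₂ := insert_sub_inter_eq_of_shearerDefect_univ_eq_zero hw hf0 hsub hmono hcov hΦ hjX hjk
    rw [inter_insert_of_notMem hik] at h₁
    linarith
  refine isModular_of_insert_sub_insert hf0 fun i j hij X hiX hjX => ?_
  obtain ⟨k, hk⟩ := not_forall.1 (hsep i j hij)
  by_cases hjk : j ∈ S k
  · exact hseparated i j k X hjk (fun hik => hk (iff_of_true hik hjk)) hij hiX hjX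
  · have hik : i ∈ S k := by_contra fun hik => hk (iff_of_false hik hjk)
    have h := hseparated j i k X hik hjk (Ne.symm hij) hjX hiX
    rw [insert_comm] at h
    linarith

theorem IsModular.sum_mul_eq_sum_coverage_mul [Fintype E] (hf : IsModular f) :
    ∑ k, w k * f (S k) = ∑ i, coverage w S i * f {i} :=
  calc ∑ k, w k * f (S k)
      = ∑ k, ∑ i ∈ S k, w k * f {i} := sum_congr rfl fun k _ => by rw [hf, mul_sum]
    _ = ∑ i, ∑ k ∈ univ.filter (fun k => i ∈ S k), w k * f {i} := sum_comm' (by simp)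
    _ = ∑ i, coverage w S i * f {i} := by simp only [coverage, sum_mul]

theorem IsModular.sum_mul_eq_univ_iff [Fintype E] (hf : IsModular f) (hf0 : f ∅ = 0)
    (hmono : Monotone f) (hcov : ∀ i, 1 ≤ coverage w S i) :
    ∑ k, w k * f (S k) = f univ ↔ ∀ i, 1 < coverage w S i → f {i} = 0 := by
  have hsingleton : ∀ i, 0 ≤ f {i} := fun i => hf0 ▸ hmono (empty_subset {i})
  rw [hf.sum_mul_eq_sum_coverage_mul, hf univ, ← sub_eq_zero, ← sum_sub_distrib]
  simp_rw [← sub_one_mul]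
  rw [sum_eq_zero_iff_of_nonneg fun i _ => mul_nonneg (sub_nonneg.2 (hcov i)) (hsingleton i)]
  refine forall_congr' fun i => ?_
  simp only [mem_univ, true_implies, mul_eq_zero, sub_eq_zero]
  constructor
  · rintro (h | h) hlt
    · exact absurd h hlt.ne'
    · exact h
  · intro h
    rcases (hcov i).eq_or_lt with h' | h'
    · exact Or.inl h'.symm
    · exact Or.inr (h h')

end

theorem stmt_4_general (n : ℕ) (f : Finset (Fin n) → ℝ)
    (hf0 : f ∅ = 0)
    (hsubmod : ∀ A B : Finset (Fin n), f (A ∪ B) + f (A ∩ B) ≤ f A + f B)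
    (hmono : ∀ A B : Finset (Fin n), A ⊆ B → f A ≤ f B)
    (ι : Type) [Fintype ι] (S : ι → Finset (Fin n)) (α : ι → ℚ)
    (hpos : ∀ k, 0 < α k)
    (hsep : ∀ i j : Fin n, i ≠ j → ¬ (∀ k, i ∈ S k ↔ j ∈ S k))
    (hcov : ∀ i : Fin n, 1 ≤ ∑ k ∈ Finset.univ.filter (fun k => i ∈ S k), α k) :
    (∑ k : ι, (α k : ℝ) * f (S k)) = f Finset.univ ↔
      ((∀ A : Finset (Fin n), f A = ∑ i ∈ A, f {i}) ∧
        ∀ Z ⊆ Finset.univ.filter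
            (fun i : Fin n => 1 < ∑ k ∈ Finset.univ.filter (fun k => i ∈ S k), α k),
          f Z = 0) := by
  set w : ι → ℝ := fun k => α k
  have hcoverage : ∀ i, ((∑ k ∈ univ.filter (fun k => i ∈ S k), α k : ℚ) : ℝ) = coverage w S i :=
    fun i => by push_cast [coverage]; rfl
  have hmono' : Monotone f := fun A B h => hmono A B h
  have hcov' : ∀ i, 1 ≤ coverage w S i := fun i => by rw [← hcoverage]; exact_mod_cast hcov i
  have hw : ∀ k, 0 < w k := fun k => Rat.cast_pos.2 (hpos k)
  constructor
  · intro heq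
    have hΦ : shearerDefect w S f univ = 0 := by simpa [shearerDefect, sub_eq_zero] using heq
    have hmod := isModular_of_shearerDefect_univ_eq_zero hw hf0 hsubmod hmono' hcov' hsep hΦ
    have hsingleton := (hmod.sum_mul_eq_univ_iff hf0 hmono' hcov').1 heq
    refine ⟨hmod, fun Z hZ => ?_⟩
    rw [hmod Z]
    refine sum_eq_zero fun i hi => hsingleton i ?_
    rw [← hcoverage]
    exact_mod_cast (mem_filter.1 (hZ hi)).2
  · rintro ⟨hmod, hzero⟩
    refine (IsModular.sum_mul_eq_univ_iff hmod hf0 hmono' hcov').2 fun i hi => hzero {i} ?_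
    rw [← hcoverage] at hi
    simpa using (show (1 : ℚ) < _ by exact_mod_cast hi)

theorem stmt_4 (n : ℕ) (hn : 2 ≤ n) (f : Finset (Fin n) → ℝ)
    (hf0 : f ∅ = 0)
    (hsubmod : ∀ A B : Finset (Fin n), f (A ∪ B) + f (A ∩ B) ≤ f A + f B)
    (hmono : ∀ A B : Finset (Fin n), A ⊆ B → f A ≤ f B)
    (ι : Type) [Fintype ι] (S : ι → Finset (Fin n)) (α : ι → ℚ)
    (hproper : ∀ k, S k ≠ Finset.univ)
    (hpos : ∀ k, 0 < α k)
    (hsep : ∀ i j : Fin n, i ≠ j → ¬ (∀ k, i ∈ S k ↔ j ∈ S k))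
    (hcov : ∀ i : Fin n, 1 ≤ ∑ k ∈ Finset.univ.filter (fun k => i ∈ S k), α k) :
    (∑ k : ι, (α k : ℝ) * f (S k)) = f Finset.univ ↔
      ((∀ A : Finset (Fin n), f A = ∑ i ∈ A, f {i}) ∧
        ∀ Z ⊆ Finset.univ.filter
            (fun i : Fin n => 1 < ∑ k ∈ Finset.univ.filter (fun k => i ∈ S k), α k),
          f Z = 0) :=
  stmt_4_general n f hf0 hsubmod hmono ι S α hpos hsep hcov
end

section
/- Let n ≥ 2, let f : 2^{[n]} → ℝ be a submodular set function with f(∅) = 0 that is non-decreasing (f(S) ≤ f(T) whenever S ⊆ T), and let β : 𝓕 → ℚ₊ be a fractional packing with respect to a family 𝓕 of subsets of [n] satisfying the standing assumptions. Then f([n]) = ∑_{S ∈ 𝓕} β(S) f(S | [n] ∖ S) if and only if f is modular and f(Z) = 0 for every Z ⊆ {i ∈ [n] : ∑_{S ∈ 𝓕 : i ∈ S} β(S) < 1}. -/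
open Finset
open scoped Classical BigOperators

namespace Stmt5Aux

variable {α : Type*} [DecidableEq α]

/-- telescoping along a ranking -/
lemma telescope (g : Finset α → ℝ) (r : α → ℕ) (hr : Function.Injective r) :
    ∀ A : Finset α,
      g A - g ∅ = ∑ x ∈ A, (g (insert x (A.filter (fun y => r y < r x)))
        - g (A.filter (fun y => r y < r x))) := by
  intro A
  induction A using Finset.strongInduction with
  | _ A ih =>
    rcases A.eq_empty_or_nonempty with rfl | hA
    · simp
    · obtain ⟨x, hxA, hmax⟩ := Finset.exists_max_image A r hA
      have hfx : A.filter (fun y => r y < r x) = A.erase x := by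
        ext y
        simp only [Finset.mem_filter, Finset.mem_erase]
        constructor
        · rintro ⟨hy, hlt⟩
          exact ⟨fun h => by subst h; exact lt_irrefl _ hlt, hy⟩
        · rintro ⟨hne, hy⟩
          exact ⟨hy, lt_of_le_of_ne (hmax y hy) (fun h => hne (hr h))⟩
      have hins : insert x (A.erase x) = A := Finset.insert_erase hxA
      rw [← Finset.add_sum_erase _ _ hxA]
      have hcong : ∑ y ∈ A.erase x, (g (insert y (A.filter (fun z => r z < r y)))
          - g (A.filter (fun z => r z < r y)))
          = ∑ y ∈ A.erase x, (g (insert y ((A.erase x).filter (fun z => r z < r y)))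
          - g ((A.erase x).filter (fun z => r z < r y))) := by
        apply Finset.sum_congr rfl
        intro y hy
        have : A.filter (fun z => r z < r y) = (A.erase x).filter (fun z => r z < r y) := by
          ext z
          simp only [Finset.mem_filter, Finset.mem_erase]
          constructor
          · rintro ⟨hz, hlt⟩
            refine ⟨⟨fun h => ?_, hz⟩, hlt⟩
            subst h
            exact absurd (lt_of_lt_of_le hlt (hmax y (Finset.mem_of_mem_erase hy)))
              (lt_irrefl _)
          · rintro ⟨⟨_, hz⟩, hlt⟩; exact ⟨hz, hlt⟩
        rw [this]
      rw [hcong, ← ih (A.erase x) (Finset.erase_ssubset hxA), hfx, hins]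
      ring

/-- the rank function putting Q first, then i, then the rest -/
noncomputable def rk {n : ℕ} (i : Fin n) (Q : Finset (Fin n)) : Fin n → ℕ :=
  fun y => if y ∈ Q then (y : ℕ) else if y = i then n else (y : ℕ) + n + 1

lemma rk_inj {n : ℕ} (i : Fin n) (Q : Finset (Fin n)) :
    Function.Injective (rk i Q) := by
  intro a b hab
  unfold rk at hab
  by_cases ha : a ∈ Q <;> by_cases hb : b ∈ Q <;>
    simp only [ha, hb, if_true, if_false] at hab
  · exact Fin.val_injective hab
  · by_cases hbi : b = i
    · simp only [hbi, if_true] at hab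
      exact absurd hab (Nat.ne_of_lt a.isLt)
    · simp only [hbi, if_false] at hab
      omega
  · by_cases hai : a = i
    · simp only [hai, if_true] at hab
      exact absurd hab.symm (Nat.ne_of_lt b.isLt)
    · simp only [hai, if_false] at hab
      omega
  · by_cases hai : a = i <;> by_cases hbi : b = i <;>
      simp only [hai, hbi, if_true, if_false] at hab
    · exact hai.trans hbi.symm
    · omega
    · omega
    · exact Fin.val_injective (by omega)

lemma rk_prefix {n : ℕ} (i : Fin n) (Q : Finset (Fin n)) (hi : i ∉ Q) :
    Finset.univ.filter (fun y => rk i Q y < rk i Q i) = Q := by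
  ext y
  simp only [Finset.mem_filter, Finset.mem_univ, true_and]
  unfold rk
  simp only [hi, if_false, if_true, if_pos rfl]
  by_cases hy : y ∈ Q
  · simp [hy, y.isLt]
  · by_cases hyi : y = i
    · subst hyi; simp [hy]
    · simp [hy, hyi]; omega

/-- diminishing returns -/
lemma dimin {n : ℕ} (f : Finset (Fin n) → ℝ)
    (hsubmod : ∀ A B : Finset (Fin n), f (A ∪ B) + f (A ∩ B) ≤ f A + f B)
    {i : Fin n} {A B : Finset (Fin n)} (hAB : A ⊆ B) (hiB : i ∉ B) :
    f (insert i B) - f B ≤ f (insert i A) - f A := by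
  have h := hsubmod (insert i A) B
  have h1 : insert i A ∪ B = insert i B := by
    rw [Finset.insert_union, Finset.union_eq_right.mpr hAB]
  have h2 : insert i A ∩ B = A := by
    ext y
    simp only [Finset.mem_inter, Finset.mem_insert]
    constructor
    · rintro ⟨hy | hy, hyB⟩
      · subst hy; exact absurd hyB hiB
      · exact hy
    · intro hy; exact ⟨Or.inr hy, hAB hy⟩
  rw [h1, h2] at h
  linarith

section Chain

variable {n : ℕ} (f : Finset (Fin n) → ℝ) {ι : Type} [Fintype ι]
  (S : ι → Finset (Fin n)) (β : ι → ℚ)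

/-- exchange sums -/
lemma exch (w : Fin n → ℝ) :
    ∑ k : ι, (β k : ℝ) * ∑ i ∈ S k, w i
      = ∑ i : Fin n, (∑ k ∈ Finset.univ.filter (fun k => i ∈ S k), (β k : ℝ)) * w i := by
  have step : ∀ k : ι, (β k : ℝ) * ∑ i ∈ S k, w i
      = ∑ i : Fin n, if i ∈ S k then (β k : ℝ) * w i else 0 := by
    intro k
    rw [Finset.mul_sum, ← Finset.sum_filter]
    congr 1
    simp
  rw [Finset.sum_congr rfl (fun k _ => step k), Finset.sum_comm]
  apply Finset.sum_congr rfl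
  intro i _
  rw [Finset.sum_mul, ← Finset.sum_filter]

/-- the tightness lemma: from the equality hypothesis, along any ranking the chain is tight -/
lemma chain (hf0 : f ∅ = 0)
    (hsubmod : ∀ A B : Finset (Fin n), f (A ∪ B) + f (A ∩ B) ≤ f A + f B)
    (hmono : ∀ A B : Finset (Fin n), A ⊆ B → f A ≤ f B)
    (hpos : ∀ k, 0 < β k)
    (hpack : ∀ i : Fin n, ∑ k ∈ Finset.univ.filter (fun k => i ∈ S k), β k ≤ 1)
    (heq : f Finset.univ = ∑ k : ι, (β k : ℝ) * (f Finset.univ - f (Finset.univ \ S k)))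
    (r : Fin n → ℕ) (hr : Function.Injective r) :
    (∀ i : Fin n, (∑ k ∈ Finset.univ.filter (fun k => i ∈ S k), (β k : ℝ)) < 1 →
      f (insert i (Finset.univ.filter (fun y => r y < r i)))
        - f (Finset.univ.filter (fun y => r y < r i)) = 0) ∧
    (∀ k : ι, ∀ i ∈ S k,
      f (insert i ((Finset.univ \ S k) ∪ (Finset.univ.filter (fun y => r y < r i) ∩ S k)))
        - f ((Finset.univ \ S k) ∪ (Finset.univ.filter (fun y => r y < r i) ∩ S k))
      = f (insert i (Finset.univ.filter (fun y => r y < r i)))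
        - f (Finset.univ.filter (fun y => r y < r i))) := by
  set P : Fin n → Finset (Fin n) := fun x => Finset.univ.filter (fun y => r y < r x) with hP
  set d : Fin n → ℝ := fun x => f (insert x (P x)) - f (P x) with hd
  set c : Fin n → ℝ := fun i => ∑ k ∈ Finset.univ.filter (fun k => i ∈ S k), (β k : ℝ)
    with hc
  set e : ι → Fin n → ℝ := fun k i =>
    f ((Finset.univ \ S k) ∪ insert i (P i ∩ S k)) - f ((Finset.univ \ S k) ∪ (P i ∩ S k))
    with he
  have hiP : ∀ i : Fin n, i ∉ P i := by
    intro i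
    simp [hP]
  have hd_nonneg : ∀ i, 0 ≤ d i := by
    intro i
    have := hmono (P i) (insert i (P i)) (Finset.subset_insert _ _)
    simp only [hd]
    linarith
  have hc_le : ∀ i, c i ≤ 1 := by
    intro i
    have := hpack i
    have : ((∑ k ∈ Finset.univ.filter (fun k => i ∈ S k), β k : ℚ) : ℝ) ≤ 1 := by
      exact_mod_cast this
    rwa [Rat.cast_sum] at this
  -- total telescoping
  have hT1 : f Finset.univ = ∑ i : Fin n, d i := by
    have := telescope f r hr Finset.univ
    simp only [hf0, sub_zero] at this
    rw [this]
  -- per-k telescoping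
  have hT2 : ∀ k, f Finset.univ - f (Finset.univ \ S k) = ∑ i ∈ S k, e k i := by
    intro k
    have := telescope (fun A => f ((Finset.univ \ S k) ∪ A)) r hr (S k)
    simp only [Finset.union_empty] at this
    have hcup : (Finset.univ \ S k) ∪ S k = Finset.univ :=
      Finset.sdiff_union_of_subset (Finset.subset_univ _)
    rw [hcup] at this
    rw [this]
    apply Finset.sum_congr rfl
    intro i hi
    have hfilter : (S k).filter (fun y => r y < r i) = P i ∩ S k := by
      ext y
      simp [hP, and_comm]
    rw [hfilter]
  have he_le : ∀ k, ∀ i ∈ S k, e k i ≤ d i := by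
    intro k i hi
    have hins : (Finset.univ \ S k) ∪ insert i (P i ∩ S k)
        = insert i ((Finset.univ \ S k) ∪ (P i ∩ S k)) := by
      rw [Finset.union_insert]
    have hsub : P i ⊆ (Finset.univ \ S k) ∪ (P i ∩ S k) := by
      intro y hy
      by_cases hyk : y ∈ S k
      · exact Finset.mem_union_right _ (Finset.mem_inter.mpr ⟨hy, hyk⟩)
      · exact Finset.mem_union_left _ (by simp [hyk])
    have hiB : i ∉ (Finset.univ \ S k) ∪ (P i ∩ S k) := by
      simp only [Finset.mem_union, Finset.mem_sdiff, Finset.mem_univ, true_and,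
        Finset.mem_inter, not_or]
      exact ⟨fun h => h hi, fun h => hiP i h.1⟩
    have := dimin f hsubmod hsub hiB
    simp only [he, hd, hins]
    exact this
  -- the two gaps
  set gap1 : ℝ := ∑ k : ι, (β k : ℝ) * ∑ i ∈ S k, (d i - e k i) with hgap1
  set gap2 : ℝ := ∑ i : Fin n, (1 - c i) * d i with hgap2
  have hβ_nonneg : ∀ k : ι, (0:ℝ) ≤ (β k : ℝ) := fun k => by exact_mod_cast (hpos k).le
  have hgap1_terms : ∀ k : ι, (0:ℝ) ≤ (β k : ℝ) * ∑ i ∈ S k, (d i - e k i) := by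
    intro k
    apply mul_nonneg (hβ_nonneg k)
    apply Finset.sum_nonneg
    intro i hi
    linarith [he_le k i hi]
  have hgap2_terms : ∀ i : Fin n, (0:ℝ) ≤ (1 - c i) * d i := by
    intro i
    apply mul_nonneg (by linarith [hc_le i]) (hd_nonneg i)
  have hgap1_nonneg : 0 ≤ gap1 := Finset.sum_nonneg (fun k _ => hgap1_terms k)
  have hgap2_nonneg : 0 ≤ gap2 := Finset.sum_nonneg (fun i _ => hgap2_terms i)
  have hsum_zero : gap1 + gap2 = 0 := by
    have hx1 : ∑ k : ι, (β k : ℝ) * ∑ i ∈ S k, d i = ∑ i : Fin n, c i * d i := exch S β d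
    have hx2 : gap1 = ∑ i : Fin n, c i * d i
        - ∑ k : ι, (β k : ℝ) * (f Finset.univ - f (Finset.univ \ S k)) := by
      rw [hgap1]
      have : ∀ k : ι, (β k : ℝ) * ∑ i ∈ S k, (d i - e k i)
          = (β k : ℝ) * ∑ i ∈ S k, d i
            - (β k : ℝ) * (f Finset.univ - f (Finset.univ \ S k)) := by
        intro k
        rw [hT2 k, Finset.sum_sub_distrib]
        ring
      rw [Finset.sum_congr rfl (fun k _ => this k), Finset.sum_sub_distrib, hx1]
    have hx3 : gap2 = f Finset.univ - ∑ i : Fin n, c i * d i := by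
      rw [hgap2, hT1]
      rw [← Finset.sum_sub_distrib]
      apply Finset.sum_congr rfl
      intro i _
      ring
    rw [hx2, hx3, ← heq]
    ring
  have hgap1_zero : gap1 = 0 := by linarith
  have hgap2_zero : gap2 = 0 := by linarith
  constructor
  · intro i hci
    have := (Finset.sum_eq_zero_iff_of_nonneg (fun i _ => hgap2_terms i)).mp hgap2_zero
      i (Finset.mem_univ i)
    have hne : (1 : ℝ) - c i ≠ 0 := by
      simp only [hc] at hci ⊢
      intro h
      rw [sub_eq_zero] at h
      rw [← h] at hci
      exact lt_irrefl _ hci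
    have hdi : d i = 0 := by
      rcases mul_eq_zero.mp this with h | h
      · exact absurd h hne
      · exact h
    simpa [hd, hP] using hdi
  · intro k i hi
    have hk := (Finset.sum_eq_zero_iff_of_nonneg (fun k _ => hgap1_terms k)).mp hgap1_zero
      k (Finset.mem_univ k)
    have hβk : (β k : ℝ) ≠ 0 := by
      have := hpos k
      positivity
    have hsum0 : ∑ i ∈ S k, (d i - e k i) = 0 := by
      rcases mul_eq_zero.mp hk with h | h
      · exact absurd h hβk
      · exact h
    have := (Finset.sum_eq_zero_iff_of_nonneg (fun j hj => by linarith [he_le k j hj])).mp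
      hsum0 i hi
    have hde : e k i = d i := by linarith
    have hins : (Finset.univ \ S k) ∪ insert i (P i ∩ S k)
        = insert i ((Finset.univ \ S k) ∪ (P i ∩ S k)) := by
      rw [Finset.union_insert]
    simp only [he, hd, hP, hins] at hde
    rw [← hde, Finset.union_insert]

end Chain

end Stmt5Aux

open Stmt5Aux in
theorem stmt_5 (n : ℕ) (hn : 2 ≤ n) (f : Finset (Fin n) → ℝ)
    (hf0 : f ∅ = 0)
    (hsubmod : ∀ A B : Finset (Fin n), f (A ∪ B) + f (A ∩ B) ≤ f A + f B)
    (hmono : ∀ A B : Finset (Fin n), A ⊆ B → f A ≤ f B)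
    (ι : Type) [Fintype ι] (S : ι → Finset (Fin n)) (β : ι → ℚ)
    (hproper : ∀ k, S k ≠ Finset.univ)
    (hpos : ∀ k, 0 < β k)
    (hsep : ∀ i j : Fin n, i ≠ j → ¬ (∀ k, i ∈ S k ↔ j ∈ S k))
    (hpack : ∀ i : Fin n, ∑ k ∈ Finset.univ.filter (fun k => i ∈ S k), β k ≤ 1) :
    f Finset.univ =
        (∑ k : ι, (β k : ℝ) * (f (S k ∪ (Finset.univ \ S k)) - f (Finset.univ \ S k))) ↔
      ((∀ A : Finset (Fin n), f A = ∑ i ∈ A, f {i}) ∧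
        ∀ Z ⊆ Finset.univ.filter
            (fun i : Fin n => ∑ k ∈ Finset.univ.filter (fun k => i ∈ S k), β k < 1),
          f Z = 0) := by
  have hcup : ∀ k : ι, S k ∪ (Finset.univ \ S k) = Finset.univ := fun k =>
    Finset.union_sdiff_of_subset (Finset.subset_univ _)
  simp only [hcup]
  set c : Fin n → ℝ := fun i => ∑ k ∈ Finset.univ.filter (fun k => i ∈ S k), (β k : ℝ)
    with hc
  have hcast : ∀ i : Fin n,
      c i = ((∑ k ∈ Finset.univ.filter (fun k => i ∈ S k), β k : ℚ) : ℝ) := by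
    intro i; rw [Rat.cast_sum]
  have hc_le : ∀ i, c i ≤ 1 := by
    intro i
    rw [hcast i]
    exact_mod_cast hpack i
  have hclt : ∀ i : Fin n,
      (c i < 1 ↔ (∑ k ∈ Finset.univ.filter (fun k => i ∈ S k), β k) < 1) := by
    intro i
    rw [hcast i]
    exact_mod_cast Iff.rfl
  constructor
  · intro heq
    have F2 : ∀ i : Fin n, c i < 1 → ∀ Q : Finset (Fin n), i ∉ Q →
        f (insert i Q) - f Q = 0 := by
      intro i hci Q hiQ
      have h := (chain f S β hf0 hsubmod hmono hpos hpack heq (rk i Q) (rk_inj i Q)).1 i hci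
      rwa [rk_prefix i Q hiQ] at h
    have F1 : ∀ (i : Fin n) (Q : Finset (Fin n)), i ∉ Q → ∀ k : ι, i ∈ S k →
        f (insert i ((Finset.univ \ S k) ∪ Q)) - f ((Finset.univ \ S k) ∪ Q)
          = f (insert i Q) - f Q := by
      intro i Q hiQ k hik
      have h := (chain f S β hf0 hsubmod hmono hpos hpack heq (rk i Q) (rk_inj i Q)).2 k i hik
      rw [rk_prefix i Q hiQ] at h
      have hunion : (Finset.univ \ S k) ∪ (Q ∩ S k) = (Finset.univ \ S k) ∪ Q := by
        ext y
        by_cases hy : y ∈ S k <;> simp [hy]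
      rwa [hunion] at h
    have marg : ∀ (i : Fin n) (A : Finset (Fin n)), i ∉ A →
        f (insert i A) - f A = f {i} := by
      intro i A hiA
      by_cases hci : c i < 1
      · have h0 := F2 i hci A hiA
        have h1 := F2 i hci ∅ (Finset.notMem_empty i)
        simp only [hf0, sub_zero, insert_empty_eq] at h1
        rw [h0, h1]
      · have hci1 : c i = 1 := le_antisymm (hc_le i) (not_lt.mp hci)
        set K0 : Finset ι := Finset.univ.filter (fun k => i ∈ S k) with hK0
        have step1 : ∀ j : Fin n, j ≠ i → ∃ k, i ∈ S k ∧ j ∉ S k := by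
          intro j hji
          by_contra hcon
          push_neg at hcon
          obtain ⟨k0, hk0⟩ := not_forall.mp (hsep i j (Ne.symm hji))
          have hjk0 : j ∈ S k0 ∧ i ∉ S k0 := by
            by_cases h1 : i ∈ S k0
            · exact absurd (iff_of_true h1 (hcon k0 h1)) hk0
            · by_cases h2 : j ∈ S k0
              · exact ⟨h2, h1⟩
              · exact absurd (iff_of_false h1 h2) hk0
          have hsub : insert k0 K0 ⊆ Finset.univ.filter (fun k => j ∈ S k) := by
            intro k hk
            rcases Finset.mem_insert.mp hk with rfl | hk
            · simp [hjk0.1]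
            · simp [hcon k (Finset.mem_filter.mp hk).2]
          have hk0K : k0 ∉ K0 := by simp [hK0, hjk0.2]
          have hq : ∑ k ∈ insert k0 K0, β k ≤ ∑ k ∈ Finset.univ.filter (fun k => j ∈ S k), β k :=
            Finset.sum_le_sum_of_subset_of_nonneg hsub (fun k _ _ => (hpos k).le)
          rw [Finset.sum_insert hk0K] at hq
          have h1 : (∑ k ∈ K0, β k : ℚ) = 1 := by
            have : ((∑ k ∈ K0, β k : ℚ) : ℝ) = 1 := by
              rw [← hcast i]; exact hci1
            exact_mod_cast this
          have h2 := hpack j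
          rw [h1] at hq
          linarith [hpos k0]
        have step2 : ∀ K : Finset ι, (∀ k ∈ K, i ∈ S k) → ∀ Q : Finset (Fin n), i ∉ Q →
            f (insert i (Q ∪ K.biUnion (fun k => Finset.univ \ S k)))
              - f (Q ∪ K.biUnion (fun k => Finset.univ \ S k))
            = f (insert i Q) - f Q := by
          intro K
          induction K using Finset.induction_on with
          | empty => intro _ Q hiQ; simp
          | @insert k K' hk ih =>
            intro hK Q hiQ
            rw [Finset.biUnion_insert]
            have hre : Q ∪ ((Finset.univ \ S k) ∪ K'.biUnion (fun k => Finset.univ \ S k))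
                = (Finset.univ \ S k) ∪ (Q ∪ K'.biUnion (fun k => Finset.univ \ S k)) := by
              ext y; simp only [Finset.mem_union]; tauto
            rw [hre]
            have hi' : i ∉ Q ∪ K'.biUnion (fun k => Finset.univ \ S k) := by
              intro hmem
              rcases Finset.mem_union.mp hmem with h | h
              · exact hiQ h
              · obtain ⟨k', hk', hj⟩ := Finset.mem_biUnion.mp h
                exact (Finset.mem_sdiff.mp hj).2 (hK k' (Finset.mem_insert_of_mem hk'))
            rw [F1 i _ hi' k (hK k (Finset.mem_insert_self _ _))]
            exact ih (fun k' h => hK k' (Finset.mem_insert_of_mem h)) Q hiQ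
        have hbi : (∅ : Finset (Fin n)) ∪ K0.biUnion (fun k => Finset.univ \ S k)
            = Finset.univ \ {i} := by
          rw [Finset.empty_union]
          ext j
          constructor
          · intro hj
            obtain ⟨k, hkK, hjk⟩ := Finset.mem_biUnion.mp hj
            have hik : i ∈ S k := (Finset.mem_filter.mp hkK).2
            have hjnot : j ∉ S k := (Finset.mem_sdiff.mp hjk).2
            refine Finset.mem_sdiff.mpr ⟨Finset.mem_univ j, ?_⟩
            simp only [Finset.mem_singleton]
            rintro rfl; exact hjnot hik
          · intro hj
            have hji : j ≠ i := by
              have := (Finset.mem_sdiff.mp hj).2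
              simpa using this
            obtain ⟨k, hik, hjk⟩ := step1 j hji
            exact Finset.mem_biUnion.mpr ⟨k, Finset.mem_filter.mpr ⟨Finset.mem_univ k, hik⟩,
              Finset.mem_sdiff.mpr ⟨Finset.mem_univ j, hjk⟩⟩
        have hfull := step2 K0 (fun k hk => (Finset.mem_filter.mp hk).2) ∅
          (Finset.notMem_empty i)
        rw [hbi] at hfull
        simp only [hf0, sub_zero, insert_empty_eq] at hfull
        have hAsub : A ⊆ Finset.univ \ {i} := by
          intro y hy
          simp only [Finset.mem_sdiff, Finset.mem_univ, true_and, Finset.mem_singleton]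
          rintro rfl; exact hiA hy
        have hiuniv : i ∉ Finset.univ \ {i} := by simp
        have hl := dimin f hsubmod hAsub hiuniv
        have hr := dimin f hsubmod (Finset.empty_subset A) hiA
        simp only [hf0, sub_zero, insert_empty_eq] at hr
        linarith
    have hmod : ∀ A : Finset (Fin n), f A = ∑ i ∈ A, f {i} := by
      intro A
      induction A using Finset.induction_on with
      | empty => simp [hf0]
      | @insert a s hk ih =>
        rw [Finset.sum_insert hk, ← ih]
        have := marg a s hk
        linarith
    refine ⟨hmod, fun Z hZ => ?_⟩
    rw [hmod Z]
    apply Finset.sum_eq_zero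
    intro i hiZ
    have hmem := hZ hiZ
    have hqlt := (Finset.mem_filter.mp hmem).2
    have hlt : c i < 1 := (hclt i).mpr hqlt
    have := F2 i hlt ∅ (Finset.notMem_empty i)
    simpa [hf0] using this
  · rintro ⟨hmod, hZ⟩
    have hfi_zero : ∀ i : Fin n, c i < 1 → f {i} = 0 := by
      intro i h
      apply hZ {i}
      rw [Finset.singleton_subset_iff, Finset.mem_filter]
      exact ⟨Finset.mem_univ i, (hclt i).mp h⟩
    have key : ∀ k : ι, f Finset.univ - f (Finset.univ \ S k) = ∑ i ∈ S k, f {i} := by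
      intro k
      rw [hmod Finset.univ, hmod (Finset.univ \ S k)]
      have := Finset.sum_sdiff (f := fun i => f {i}) (Finset.subset_univ (S k))
      linarith
    calc f Finset.univ = ∑ i : Fin n, f {i} := by rw [hmod Finset.univ]
      _ = ∑ i : Fin n, c i * f {i} := by
          apply Finset.sum_congr rfl
          intro i _
          rcases lt_or_eq_of_le (hc_le i) with h | h
          · rw [hfi_zero i h]; ring
          · rw [h, one_mul]
      _ = ∑ k : ι, (β k : ℝ) * ∑ i ∈ S k, f {i} := (exch S β (fun i => f {i})).symm
      _ = ∑ k : ι, (β k : ℝ) * (f Finset.univ - f (Finset.univ \ S k)) := by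
          apply Finset.sum_congr rfl
          intro k _
          rw [key k]
end

section
/- Let n ≥ 2, let f : 2^{[n]} → ℝ be a submodular set function with f(∅) = 0 that is non-decreasing (f(S) ≤ f(T) whenever S ⊆ T), and let 𝓕 be a family of subsets of [n] satisfying the standing assumptions such that every index i ∈ [n] belongs to at least k members of 𝓕, where k ≥ 1. Then k · f([n]) = ∑_{S ∈ 𝓕} f(S) if and only if f is modular and f(Z) = 0 for every Z ⊆ {i ∈ [n] : i belongs to strictly more than k members of 𝓕}. -/
open Finset
open scoped Classical BigOperators

namespace Stmt6Aux

variable {α : Type*} [DecidableEq α]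

/-- running intersection of a list of finsets, starting from `P` -/
def interAll (P : Finset α) : List (Finset α) → Finset α
  | [] => P
  | A :: L => interAll (P ∩ A) L

/-- the "union" byproducts of uncrossing a list into its running intersection -/
def capCups (P : Finset α) : List (Finset α) → List (Finset α)
  | [] => []
  | A :: L => (P ∪ A) :: capCups (P ∩ A) L

/-- running union of a list of finsets, starting from `V` -/
def unionAll (V : Finset α) : List (Finset α) → Finset α
  | [] => V
  | A :: L => unionAll (V ∪ A) L

/-- the "intersection" byproducts of uncrossing a list into its running union -/
def cupCaps (V : Finset α) : List (Finset α) → List (Finset α)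
  | [] => []
  | A :: L => (A ∩ V) :: cupCaps (V ∪ A) L

/-- number of members of `L` containing `j` -/
def cnt (j : α) (L : List (Finset α)) : ℕ := L.countP (fun A => decide (j ∈ A))

@[simp] lemma cnt_nil (j : α) : cnt j ([] : List (Finset α)) = 0 := rfl

lemma cnt_cons (j : α) (A : Finset α) (L : List (Finset α)) :
    cnt j (A :: L) = cnt j L + (if j ∈ A then 1 else 0) := by
  simp [cnt, List.countP_cons]

lemma cnt_append (j : α) (L₁ L₂ : List (Finset α)) :
    cnt j (L₁ ++ L₂) = cnt j L₁ + cnt j L₂ := by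
  simp [cnt, List.countP_append]

lemma cnt_le_length (j : α) (L : List (Finset α)) : cnt j L ≤ L.length :=
  List.countP_le_length

lemma interAll_subset : ∀ (L : List (Finset α)) (P : Finset α), interAll P L ⊆ P
  | [], P => le_refl P
  | A :: L, P => (interAll_subset L (P ∩ A)).trans inter_subset_left

lemma mem_interAll : ∀ (L : List (Finset α)) (P : Finset α) (j : α),
    j ∈ P → (∀ A ∈ L, j ∈ A) → j ∈ interAll P L
  | [], P, j, hP, _ => hP
  | A :: L, P, j, hP, hL =>
    mem_interAll L (P ∩ A) j (mem_inter.2 ⟨hP, hL A (by simp)⟩)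
      (fun B hB => hL B (by simp [hB]))

lemma mem_of_mem_interAll : ∀ (L : List (Finset α)) (P : Finset α) {j : α},
    j ∈ interAll P L → ∀ A ∈ L, j ∈ A
  | [], _, _, _ => by simp
  | A :: L, P, j, h => by
    intro B hB
    rcases List.mem_cons.1 hB with hB | hB
    · rw [hB]; exact (mem_inter.1 (interAll_subset L (P ∩ A) h)).2
    · exact mem_of_mem_interAll L (P ∩ A) h B hB

lemma subset_unionAll : ∀ (L : List (Finset α)) (V : Finset α), V ⊆ unionAll V L
  | [], V => le_refl V
  | A :: L, V => subset_union_left.trans (subset_unionAll L (V ∪ A))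

lemma mem_unionAll_of_cnt : ∀ (L : List (Finset α)) (V : Finset α) (j : α),
    0 < cnt j L → j ∈ unionAll V L
  | [], V, j, h => by simp [cnt] at h
  | A :: L, V, j, h => by
    by_cases hA : j ∈ A
    · exact subset_unionAll L (V ∪ A) (mem_union_right V hA)
    · rw [cnt_cons, if_neg hA] at h
      exact mem_unionAll_of_cnt L (V ∪ A) j (by omega)

section f

variable (f : Finset α → ℝ) (hf0 : f ∅ = 0)
  (hsubmod : ∀ A B : Finset α, f (A ∪ B) + f (A ∩ B) ≤ f A + f B)
  (hmono : ∀ A B : Finset α, A ⊆ B → f A ≤ f B)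

include hf0 hmono in
lemma f_nonneg (A : Finset α) : 0 ≤ f A := hf0 ▸ hmono ∅ A (empty_subset A)

include hf0 hmono in
lemma sum_map_nonneg : ∀ L : List (Finset α), 0 ≤ (L.map f).sum
  | [] => le_refl 0
  | A :: L => by
    simp only [List.map_cons, List.sum_cons]
    have := sum_map_nonneg L
    have := f_nonneg f hf0 hmono A
    linarith

include hsubmod in
lemma sum_ge_inter : ∀ (L : List (Finset α)) (P : Finset α),
    f (interAll P L) + ((capCups P L).map f).sum ≤ f P + (L.map f).sum
  | [], P => by simp [interAll, capCups]
  | A :: L, P => by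
    have h1 := sum_ge_inter L (P ∩ A)
    have h2 := hsubmod P A
    simp only [interAll, capCups, List.map_cons, List.sum_cons]
    linarith

include hsubmod in
lemma sum_ge_union : ∀ (L : List (Finset α)) (V : Finset α),
    f (unionAll V L) + ((cupCaps V L).map f).sum ≤ f V + (L.map f).sum
  | [], V => by simp [unionAll, cupCaps]
  | A :: L, V => by
    have h1 := sum_ge_union L (V ∪ A)
    have h2 := hsubmod V A
    simp only [unionAll, cupCaps, List.map_cons, List.sum_cons]
    rw [inter_comm A V]
    linarith

end f

lemma cnt_capCups : ∀ (L : List (Finset α)) (P : Finset α) (j : α),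
    (if j ∈ interAll P L then L.length else if j ∈ P then cnt j L + 1 else cnt j L)
      ≤ cnt j (capCups P L)
  | [], P, j => by simp [interAll, capCups]
  | A :: L, P, j => by
    have IH := cnt_capCups L (P ∩ A) j
    simp only [interAll, capCups, List.length_cons, cnt_cons]
    by_cases h1 : j ∈ interAll (P ∩ A) L
    · have hPA : j ∈ P ∩ A := interAll_subset L (P ∩ A) h1
      have hP : j ∈ P := mem_inter.1 hPA |>.1
      rw [if_pos h1] at IH ⊢
      rw [if_pos (mem_union_left A hP)]
      omega
    · rw [if_neg h1] at IH ⊢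
      by_cases h2 : j ∈ P
      · rw [if_pos h2, if_pos (mem_union_left A h2)]
        by_cases h3 : j ∈ A
        · rw [if_pos h3]
          rw [if_pos (mem_inter.2 ⟨h2, h3⟩)] at IH
          omega
        · rw [if_neg h3]
          rw [if_neg (fun h => h3 (mem_inter.1 h).2)] at IH
          omega
      · rw [if_neg h2]
        rw [if_neg (fun h => h2 (mem_inter.1 h).1)] at IH
        by_cases h3 : j ∈ A
        · rw [if_pos h3, if_pos (mem_union_right P h3)]; omega
        · rw [if_neg h3, if_neg (by simp [h2, h3])]; omega

lemma cnt_cupCaps : ∀ (L : List (Finset α)) (V : Finset α) (j : α),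
    cnt j L ≤ cnt j (cupCaps V L) + (if j ∈ V then 0 else 1)
  | [], V, j => by simp [cupCaps]
  | A :: L, V, j => by
    have IH := cnt_cupCaps L (V ∪ A) j
    simp only [cupCaps, cnt_cons]
    by_cases h2 : j ∈ V
    · rw [if_pos (mem_union_left A h2)] at IH
      rw [if_pos h2]
      by_cases h3 : j ∈ A
      · rw [if_pos h3, if_pos (mem_inter.2 ⟨h3, h2⟩)]; omega
      · rw [if_neg h3, if_neg (fun h => h3 (mem_inter.1 h).1)]; omega
    · rw [if_neg h2]
      by_cases h3 : j ∈ A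
      · rw [if_pos h3, if_neg (fun h => h2 (mem_inter.1 h).2)]
        rw [if_pos (mem_union_right V h3)] at IH
        omega
      · rw [if_neg h3, if_neg (fun h => h3 (mem_inter.1 h).1)]
        rw [if_neg (by simp [h2, h3])] at IH
        omega

variable [Fintype α]

/-- the chain-extraction inequality: if every point is covered at least
`t` times, and points of `W` at least `t+1` times, then
`t * f(univ) + f(W)` is a lower bound for the sum. -/
lemma extract (f : Finset α → ℝ) (hf0 : f ∅ = 0)
    (hsubmod : ∀ A B : Finset α, f (A ∪ B) + f (A ∩ B) ≤ f A + f B)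
    (hmono : ∀ A B : Finset α, A ⊆ B → f A ≤ f B) :
    ∀ (t : ℕ) (L : List (Finset α)) (W : Finset α),
    (∀ j : α, t + (if j ∈ W then 1 else 0) ≤ cnt j L) →
    (t : ℝ) * f Finset.univ + f W ≤ (L.map f).sum
  | 0, L, W, hcnt => by
    have hWsub : W ⊆ unionAll ∅ L := by
      intro j hj
      apply mem_unionAll_of_cnt
      have := hcnt j
      rw [if_pos hj] at this
      omega
    have h1 := sum_ge_union f hsubmod L ∅
    have h2 := hmono W _ hWsub
    have h3 := sum_map_nonneg f hf0 hmono (cupCaps ∅ L)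
    push_cast
    linarith
  | (t+1), L, W, hcnt => by
    have huniv : Finset.univ ⊆ unionAll ∅ L := by
      intro j _
      apply mem_unionAll_of_cnt
      have := hcnt j
      by_cases h : j ∈ W <;> simp [h] at this <;> omega
    have h1 := sum_ge_union f hsubmod L ∅
    have h2 := hmono Finset.univ _ huniv
    have IH := extract f hf0 hsubmod hmono t (cupCaps ∅ L) W (by
      intro j
      have ha := cnt_cupCaps L ∅ j
      have hb := hcnt j
      rw [if_neg (notMem_empty j)] at ha
      omega)
    push_cast
    push_cast at IH
    linarith

end Stmt6Aux
open Stmt6Aux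

theorem stmt_6 (n : ℕ) (hn : 2 ≤ n) (f : Finset (Fin n) → ℝ)
    (hf0 : f ∅ = 0)
    (hsubmod : ∀ A B : Finset (Fin n), f (A ∪ B) + f (A ∩ B) ≤ f A + f B)
    (hmono : ∀ A B : Finset (Fin n), A ⊆ B → f A ≤ f B)
    (ι : Type) [Fintype ι] (S : ι → Finset (Fin n))
    (hproper : ∀ k, S k ≠ Finset.univ)
    (hsep : ∀ i j : Fin n, i ≠ j → ¬ (∀ k, i ∈ S k ↔ j ∈ S k))
    (k : ℕ) (hk : 1 ≤ k)
    (hcov : ∀ i : Fin n, k ≤ (Finset.univ.filter (fun m => i ∈ S m)).card) :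
    (k : ℝ) * f Finset.univ = (∑ m : ι, f (S m)) ↔
      ((∀ A : Finset (Fin n), f A = ∑ i ∈ A, f {i}) ∧
        ∀ Z ⊆ Finset.univ.filter
            (fun i : Fin n => k < (Finset.univ.filter (fun m => i ∈ S m)).card),
          f Z = 0) := by
  have hfnn : ∀ A : Finset (Fin n), 0 ≤ f A := fun A => hf0 ▸ hmono ∅ A (empty_subset A)
  set L0 : List (Finset (Fin n)) := (Finset.univ : Finset ι).toList.map S with hL0def
  have hsum : (L0.map f).sum = ∑ m : ι, f (S m) := by
    rw [hL0def, List.map_map]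
    exact Finset.sum_map_toList _ _
  have hcnt : ∀ j : Fin n, cnt j L0 = (Finset.univ.filter (fun m => j ∈ S m)).card := by
    intro j
    rw [hL0def]
    show ((Finset.univ : Finset ι).toList.map S).countP (fun A => decide (j ∈ A)) = _
    rw [List.countP_map]
    have h1 : ((Finset.univ : Finset ι).toList).countP (fun m => decide (j ∈ S m))
        = Multiset.countP (fun m => j ∈ S m) (Finset.univ : Finset ι).val := by
      conv_rhs => rw [← Multiset.coe_toList (Finset.univ : Finset ι).val]
      rw [Multiset.coe_countP]
      rfl
    have h2 : ((fun A => decide (j ∈ A)) ∘ S) = fun m => decide (j ∈ S m) := rfl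
    rw [h2, h1, Multiset.countP_eq_card_filter]
    simp [Finset.card, Finset.filter_val]
  constructor
  · -- forward direction
    intro hE
    -- Part 1: f vanishes on subsets of the over-covered set
    have hWcnt : ∀ j : Fin n,
        k + (if j ∈ Finset.univ.filter
          (fun i : Fin n => k < (Finset.univ.filter (fun m => i ∈ S m)).card) then 1 else 0)
          ≤ cnt j L0 := by
      intro j
      rw [hcnt j]
      by_cases hj : j ∈ Finset.univ.filter
          (fun i : Fin n => k < (Finset.univ.filter (fun m => i ∈ S m)).card)
      · rw [if_pos hj]
        have := (Finset.mem_filter.1 hj).2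
        omega
      · rw [if_neg hj]
        simpa using hcov j
    have h1 := extract f hf0 hsubmod hmono k L0
      (Finset.univ.filter (fun i : Fin n => k < (Finset.univ.filter (fun m => i ∈ S m)).card))
      hWcnt
    rw [hsum, ← hE] at h1
    have hZzero : ∀ Z ⊆ Finset.univ.filter
        (fun i : Fin n => k < (Finset.univ.filter (fun m => i ∈ S m)).card), f Z = 0 := by
      intro Z hZ
      have h2 := hmono Z _ hZ
      have h3 := hfnn Z
      linarith
    -- Part 2: for each i, f {i} + f (univ.erase i) ≤ f univ
    have claim : ∀ i : Fin n, f {i} + f (Finset.univ.erase i) ≤ f Finset.univ := by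
      intro i
      set Li : List (Finset (Fin n)) := L0.filter (fun A => decide (i ∈ A)) with hLidef
      set Lb : List (Finset (Fin n)) := L0.filter (fun A => !decide (i ∈ A)) with hLbdef
      have hperm : List.Perm (Li ++ Lb) L0 := List.filter_append_perm _ L0
      have hsplit_sum : (Li.map f).sum + (Lb.map f).sum = (L0.map f).sum := by
        rw [← List.sum_append, ← List.map_append]
        exact ((hperm.map f).sum_eq)
      have hsplit_cnt : ∀ j : Fin n, cnt j Li + cnt j Lb = cnt j L0 := by
        intro j
        rw [← cnt_append]
        exact hperm.countP_eq _
      have hLimem : ∀ A ∈ Li, i ∈ A := by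
        intro A hA
        simpa using (List.mem_filter.1 hA).2
      have hLiL0 : ∀ A ∈ Li, A ∈ L0 := fun A hA => (List.mem_filter.1 hA).1
      have hcnti : cnt i Li = Li.length := by
        apply le_antisymm (cnt_le_length _ _)
        apply le_of_eq
        symm
        apply List.countP_eq_length.2
        intro A hA
        simpa using hLimem A hA
      have hcntib : cnt i Lb = 0 := by
        rw [hLbdef]
        unfold Stmt6Aux.cnt
        apply List.countP_eq_zero.2
        intro A hA
        have := (List.mem_filter.1 hA).2
        simp only [Bool.not_eq_true'] at this
        simpa using this
      have hLen : k ≤ Li.length := by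
        have := hcov i
        rw [← hcnt i, ← hsplit_cnt i, hcntib, hcnti] at this
        omega
      obtain ⟨A0, Li', hLicons⟩ : ∃ A0 Li', Li = A0 :: Li' := by
        cases hLi : Li with
        | nil => rw [hLi] at hLen; simp at hLen; omega
        | cons A0 Li' => exact ⟨A0, Li', rfl⟩
      have hiInter : i ∈ interAll A0 Li' := by
        apply mem_interAll
        · exact hLimem A0 (by rw [hLicons]; exact List.mem_cons_self)
        · intro B hB
          exact hLimem B (by rw [hLicons]; exact List.mem_cons_of_mem _ hB)
      have h2 : f {i} ≤ f (interAll A0 Li') :=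
        hmono _ _ (Finset.singleton_subset_iff.2 hiInter)
      have h3 := sum_ge_inter f hsubmod Li' A0
      -- coverage of D := capCups A0 Li' ++ Lb
      have hDcnt : ∀ j : Fin n,
          (k - 1) + (if j ∈ Finset.univ.erase i then 1 else 0)
            ≤ cnt j (capCups A0 Li' ++ Lb) := by
        intro j
        rw [cnt_append]
        have hcap := cnt_capCups Li' A0 j
        by_cases hji : j = i
        · subst hji
          rw [if_neg (fun h => (Finset.mem_erase.1 h).1 rfl)]
          rw [if_pos hiInter] at hcap
          have : Li.length = Li'.length + 1 := by rw [hLicons]; rfl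
          omega
        · rw [if_pos (Finset.mem_erase.2 ⟨hji, Finset.mem_univ j⟩)]
          by_cases hjint : j ∈ interAll A0 Li'
          · -- j is in every member of Li; separation gives a member of Lb containing j
            have hjall : ∀ A ∈ Li, j ∈ A := by
              intro A hA
              rw [hLicons] at hA
              rcases List.mem_cons.1 hA with h | h
              · rw [h]; exact interAll_subset Li' A0 hjint
              · exact mem_of_mem_interAll Li' A0 hjint A h
            have hLbpos : 0 < cnt j Lb := by
              rcases not_forall.1 (hsep j i (fun h => hji h)) with ⟨m, hm⟩
              have hmL0 : S m ∈ L0 := by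
                rw [hL0def]
                exact List.mem_map.2 ⟨m, Finset.mem_toList.2 (Finset.mem_univ m), rfl⟩
              have him : i ∉ S m := by
                intro him
                have hSmLi : S m ∈ Li := List.mem_filter.2 ⟨hmL0, by simpa using him⟩
                exact hm ⟨fun _ => him, fun _ => hjall _ hSmLi⟩
              have hjm : j ∈ S m := by
                by_contra hjm
                exact hm ⟨fun h => absurd h hjm, fun h => absurd h him⟩
              have hSmLb : S m ∈ Lb := List.mem_filter.2 ⟨hmL0, by simpa using him⟩
              unfold Stmt6Aux.cnt
              apply List.countP_pos_iff.2
              exact ⟨S m, hSmLb, by simpa using hjm⟩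
            rw [if_pos hjint] at hcap
            have : Li.length = Li'.length + 1 := by rw [hLicons]; rfl
            omega
          · -- full coverage of j is preserved
            have hcov' : k ≤ cnt j Li + cnt j Lb := by
              rw [hsplit_cnt j, hcnt j]; exact hcov j
            have hLicnt : cnt j Li = cnt j Li' + (if j ∈ A0 then 1 else 0) := by
              rw [hLicons, cnt_cons]
            rw [if_neg hjint] at hcap
            by_cases hjA0 : j ∈ A0
            · rw [if_pos hjA0] at hcap
              rw [if_pos hjA0] at hLicnt
              omega
            · rw [if_neg hjA0] at hcap
              rw [if_neg hjA0] at hLicnt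
              omega
      have h4 := extract f hf0 hsubmod hmono (k - 1) (capCups A0 Li' ++ Lb)
        (Finset.univ.erase i) hDcnt
      rw [List.map_append, List.sum_append] at h4
      have hLisum : (Li.map f).sum = f A0 + (Li'.map f).sum := by
        rw [hLicons]; simp
      have hcast : ((k - 1 : ℕ) : ℝ) = (k : ℝ) - 1 := by
        rw [Nat.cast_sub hk]
        try norm_num
      rw [hcast] at h4
      have hEE : (k : ℝ) * f Finset.univ = (L0.map f).sum := by rw [hsum]; exact hE
      nlinarith [hfnn (interAll A0 Li')]
    -- complement equality for singletons
    have hsingle : ∀ i : Fin n, f {i} + f (Finset.univ.erase i) = f Finset.univ := by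
      intro i
      apply le_antisymm (claim i)
      have h := hsubmod {i} (Finset.univ.erase i)
      have hu : ({i} : Finset (Fin n)) ∪ Finset.univ.erase i = Finset.univ := by
        ext x; by_cases hx : x = i <;> simp [hx]
      have hi : ({i} : Finset (Fin n)) ∩ Finset.univ.erase i = ∅ := by
        ext x; by_cases hx : x = i <;> simp [hx]
      rw [hu, hi, hf0] at h
      linarith
    -- complement equality in general
    have hcompl : ∀ A : Finset (Fin n), f A + f (Finset.univ \ A) = f Finset.univ := by
      intro A
      apply le_antisymm
      · induction A using Finset.induction_on with
        | empty => simp [hf0]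
        | @insert a A ha IH =>
          have e1 : Finset.univ \ insert a A = (Finset.univ \ A) ∩ (Finset.univ.erase a) := by
            ext x; by_cases hx : x = a <;> simp [hx]
          have e2 : (Finset.univ \ A) ∪ (Finset.univ.erase a) = Finset.univ := by
            ext x; by_cases hx : x = a <;> simp [hx, ha]
          have h5 := hsubmod (Finset.univ \ A) (Finset.univ.erase a)
          rw [e2, ← e1] at h5
          have h6 := hsubmod {a} A
          have e3 : ({a} : Finset (Fin n)) ∪ A = insert a A := by
            ext x; simp [or_comm]
          have e4 : ({a} : Finset (Fin n)) ∩ A = ∅ := by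
            ext x; by_cases hx : x = a <;> simp [hx, ha]
          rw [e3, e4, hf0] at h6
          have h7 := hsingle a
          linarith
      · have h := hsubmod A (Finset.univ \ A)
        have hu : A ∪ (Finset.univ \ A) = Finset.univ := by
          ext x; by_cases hx : x ∈ A <;> simp [hx]
        have hi : A ∩ (Finset.univ \ A) = ∅ := by
          ext x; by_cases hx : x ∈ A <;> simp [hx]
        rw [hu, hi, hf0] at h
        linarith
    -- modularity on pairs
    have hpair : ∀ A B : Finset (Fin n), f A + f B = f (A ∪ B) + f (A ∩ B) := by
      intro A B
      apply le_antisymm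
      · have h := hsubmod (Finset.univ \ A) (Finset.univ \ B)
        have e1 : (Finset.univ \ A) ∪ (Finset.univ \ B) = Finset.univ \ (A ∩ B) := by
          ext x; simp [not_and_or]; try tauto
        have e2 : (Finset.univ \ A) ∩ (Finset.univ \ B) = Finset.univ \ (A ∪ B) := by
          ext x; simp [not_or]; try tauto
        rw [e1, e2] at h
        have c1 := hcompl A
        have c2 := hcompl B
        have c3 := hcompl (A ∪ B)
        have c4 := hcompl (A ∩ B)
        linarith
      · linarith [hsubmod A B]
    have hmodular : ∀ A : Finset (Fin n), f A = ∑ i ∈ A, f {i} := by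
      intro A
      induction A using Finset.induction_on with
      | empty => simpa using hf0
      | @insert a A ha IH =>
        have h := hpair {a} A
        have e3 : ({a} : Finset (Fin n)) ∪ A = insert a A := by
          ext x; simp [or_comm]
        have e4 : ({a} : Finset (Fin n)) ∩ A = ∅ := by
          ext x; by_cases hx : x = a <;> simp [hx, ha]
        rw [e3, e4, hf0] at h
        rw [Finset.sum_insert ha, ← IH]
        linarith
    exact ⟨hmodular, hZzero⟩
  · -- backward direction
    rintro ⟨hmod, hzero⟩
    have hsingle0 : ∀ i : Fin n, k < (Finset.univ.filter (fun m => i ∈ S m)).card →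
        f {i} = 0 := by
      intro i hi
      apply hzero {i}
      rw [Finset.singleton_subset_iff, Finset.mem_filter]
      exact ⟨Finset.mem_univ i, hi⟩
    have step1 : ∑ m : ι, f (S m)
        = ∑ i : Fin n, ((Finset.univ.filter (fun m => i ∈ S m)).card : ℝ) * f {i} := by
      rw [Finset.sum_congr rfl (fun m _ => hmod (S m))]
      have : ∀ m : ι, ∑ i ∈ S m, f {i} = ∑ i : Fin n, if i ∈ S m then f {i} else 0 := by
        intro m
        rw [Finset.sum_ite_mem, Finset.univ_inter]
      rw [Finset.sum_congr rfl (fun m _ => this m), Finset.sum_comm]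
      apply Finset.sum_congr rfl
      intro i _
      rw [← Finset.sum_filter, Finset.sum_const, nsmul_eq_mul]
    have step2 : ∀ i : Fin n,
        ((Finset.univ.filter (fun m => i ∈ S m)).card : ℝ) * f {i} = (k : ℝ) * f {i} := by
      intro i
      rcases lt_or_eq_of_le (hcov i) with h | h
      · rw [hsingle0 i h]; ring
      · rw [← h]
    rw [step1, Finset.sum_congr rfl (fun i _ => step2 i), ← Finset.mul_sum, ← hmod]
end

section
/- Let G, G_1, …, G_m be pairwise disjoint subsets of [n] with G ∪ G_1 ∪ ⋯ ∪ G_m = [n], and let g : 2^{[n]} → ℝ be a submodular set function with g(∅) = 0 such that for every H ⊆ G and every 𝒯 ⊆ [m], g((⋃_{ℓ ∈ 𝒯} G_ℓ) ∪ H) = ∑_{i ∈ H} g({i}) + ∑_{ℓ ∈ 𝒯} g(G_ℓ). Then for all S ⊆ G and all S_1 ⊆ G_1, …, S_m ⊆ G_m, one has g((⋃_{ℓ=1}^m S_ℓ) ∪ S) = ∑_{i ∈ S} g({i}) + ∑_{ℓ=1}^m g(S_ℓ). -/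
/-!
Write `S' = S ∪ ⋃ S_ℓ`. Since `g` is submodular with `g ∅ = 0`, it is subadditive on disjoint
sets, so `g S' ≤ g S + ∑ g S_ℓ`, and `g S = ∑_{i ∈ S} g {i}` by the hypothesis with `𝒯 = ∅`.
Conversely, starting from `S ∪ ⋃ G_ℓ`, on which `g` is modular by hypothesis, shrink the blocks
`G_ℓ` to `S_ℓ` one at a time: if `X` is the rest of the current set, disjoint from `G_ℓ`,
submodularity applied to `X ∪ S_ℓ` and `G_ℓ`, whose union is `X ∪ G_ℓ` and whose intersection
is `S_ℓ`, shows that each step loses at least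
`g G_ℓ - g S_ℓ`. This gives the reverse inequality.
-/

open Finset
open scoped Classical BigOperators

section Submodular

variable {α ι : Type*} [DecidableEq α] {g : Finset α → ℝ}

theorem map_union_le_of_disjoint (hg0 : g ∅ = 0)
    (hsubmod : ∀ A B : Finset α, g (A ∪ B) + g (A ∩ B) ≤ g A + g B)
    {A B : Finset α} (hAB : Disjoint A B) : g (A ∪ B) ≤ g A + g B := by
  simpa [disjoint_iff_inter_eq_empty.mp hAB, hg0] using hsubmod A B

theorem map_biUnion_le_sum (hg0 : g ∅ = 0)
    (hsubmod : ∀ A B : Finset α, g (A ∪ B) + g (A ∩ B) ≤ g A + g B)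
    {I : Finset ι} {S : ι → Finset α} (hS : (I : Set ι).PairwiseDisjoint S) :
    g (I.biUnion S) ≤ ∑ ℓ ∈ I, g (S ℓ) := by
  induction I using Finset.induction with
  | empty => simp [hg0]
  | @insert a I ha ih =>
    rw [coe_insert, Set.pairwiseDisjoint_insert_of_notMem (mem_coe.not.mpr ha)] at hS
    have hdisj : Disjoint (S a) (I.biUnion S) :=
      (disjoint_biUnion_right _ _ _).mpr fun ℓ hℓ ↦ hS.2 ℓ hℓ
    rw [biUnion_insert, sum_insert ha]
    linarith [map_union_le_of_disjoint hg0 hsubmod hdisj, ih hS.1]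

theorem map_union_add_le_of_subset
    (hsubmod : ∀ A B : Finset α, g (A ∪ B) + g (A ∩ B) ≤ g A + g B)
    {X S T : Finset α} (hXT : Disjoint X T) (hST : S ⊆ T) :
    g (X ∪ T) + g S ≤ g (X ∪ S) + g T := by
  have hunion : X ∪ S ∪ T = X ∪ T := by rw [union_assoc, union_eq_right.mpr hST]
  have hinter : (X ∪ S) ∩ T = S := by
    rw [union_inter_distrib_right, disjoint_iff_inter_eq_empty.mp hXT, empty_union,
      inter_eq_left.mpr hST]
  simpa [hunion, hinter] using hsubmod (X ∪ S) T

theorem map_union_biUnion_add_sum_le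
    (hsubmod : ∀ A B : Finset α, g (A ∪ B) + g (A ∩ B) ≤ g A + g B)
    {I : Finset ι} {S T : ι → Finset α} (hT : (I : Set ι).PairwiseDisjoint T)
    (hST : ∀ ℓ ∈ I, S ℓ ⊆ T ℓ) {X : Finset α} (hXT : ∀ ℓ ∈ I, Disjoint X (T ℓ)) :
    g (X ∪ I.biUnion T) + ∑ ℓ ∈ I, g (S ℓ) ≤ g (X ∪ I.biUnion S) + ∑ ℓ ∈ I, g (T ℓ) := by
  induction I using Finset.induction generalizing X with
  | empty => simp
  | @insert a I ha ih =>
    rw [coe_insert, Set.pairwiseDisjoint_insert_of_notMem (mem_coe.not.mpr ha)] at hT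
    have hSa : Disjoint (T a) (I.biUnion S) :=
      (disjoint_biUnion_right _ _ _).mpr fun ℓ hℓ ↦
        (hT.2 ℓ hℓ).mono_right (hST ℓ (mem_insert_of_mem hℓ))
    have hshrink_rest := ih hT.1 (fun ℓ hℓ ↦ hST ℓ (mem_insert_of_mem hℓ)) (X := X ∪ T a)
      fun ℓ hℓ ↦ disjoint_union_left.mpr ⟨hXT ℓ (mem_insert_of_mem hℓ), hT.2 ℓ hℓ⟩
    have hshrink_a := map_union_add_le_of_subset hsubmod (X := X ∪ I.biUnion S)
      (disjoint_union_left.mpr ⟨hXT a (mem_insert_self a I), hSa.symm⟩)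
      (hST a (mem_insert_self a I))
    rw [union_right_comm X (I.biUnion S), union_right_comm X (I.biUnion S)] at hshrink_a
    rw [biUnion_insert, biUnion_insert, sum_insert ha, sum_insert ha, ← union_assoc,
      ← union_assoc]
    linarith

end Submodular

theorem stmt_7_general (n m : ℕ) (g : Finset (Fin n) → ℝ)
    (hg0 : g ∅ = 0)
    (hsubmod : ∀ A B : Finset (Fin n), g (A ∪ B) + g (A ∩ B) ≤ g A + g B)
    (G : Finset (Fin n)) (Gs : Fin m → Finset (Fin n))
    (hdisjG : ∀ ℓ : Fin m, Disjoint G (Gs ℓ))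
    (hdisj : ∀ ℓ ℓ' : Fin m, ℓ ≠ ℓ' → Disjoint (Gs ℓ) (Gs ℓ'))
    (hmodular : ∀ H ⊆ G, ∀ 𝒯 : Finset (Fin m),
      g ((𝒯.biUnion Gs) ∪ H) = (∑ i ∈ H, g {i}) + ∑ ℓ ∈ 𝒯, g (Gs ℓ)) :
    ∀ Sset ⊆ G, ∀ Ss : Fin m → Finset (Fin n), (∀ ℓ, Ss ℓ ⊆ Gs ℓ) →
      g ((Finset.univ.biUnion Ss) ∪ Sset) = (∑ i ∈ Sset, g {i}) + ∑ ℓ : Fin m, g (Ss ℓ) := by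
  intro Sset hS Ss hSs
  have hGs : ((univ : Finset (Fin m)) : Set (Fin m)).PairwiseDisjoint Gs :=
    fun a _ b _ hab ↦ hdisj a b hab
  have hSs_disj : ((univ : Finset (Fin m)) : Set (Fin m)).PairwiseDisjoint Ss :=
    fun a _ b _ hab ↦ (hdisj a b hab).mono (hSs a) (hSs b)
  have hsingletons : g Sset = ∑ i ∈ Sset, g {i} := by simpa using hmodular Sset hS ∅
  have hdisjS : Disjoint (univ.biUnion Ss) Sset :=
    (disjoint_biUnion_left _ _ _).mpr fun ℓ _ ↦ ((hdisjG ℓ).mono hS (hSs ℓ)).symm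
  have hupper := (map_union_le_of_disjoint hg0 hsubmod hdisjS).trans
    (add_le_add (map_biUnion_le_sum hg0 hsubmod hSs_disj) hsingletons.le)
  have hlower := map_union_biUnion_add_sum_le hsubmod hGs (fun ℓ _ ↦ hSs ℓ)
    (X := Sset) fun ℓ _ ↦ (hdisjG ℓ).mono_left hS
  rw [union_comm Sset, union_comm Sset, hmodular Sset hS univ] at hlower
  linarith

theorem stmt_7 (n m : ℕ) (g : Finset (Fin n) → ℝ)
    (hg0 : g ∅ = 0)
    (hsubmod : ∀ A B : Finset (Fin n), g (A ∪ B) + g (A ∩ B) ≤ g A + g B)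
    (G : Finset (Fin n)) (Gs : Fin m → Finset (Fin n))
    (hdisjG : ∀ ℓ : Fin m, Disjoint G (Gs ℓ))
    (hdisj : ∀ ℓ ℓ' : Fin m, ℓ ≠ ℓ' → Disjoint (Gs ℓ) (Gs ℓ'))
    (hcover : G ∪ Finset.univ.biUnion Gs = Finset.univ)
    (hmodular : ∀ H ⊆ G, ∀ 𝒯 : Finset (Fin m),
      g ((𝒯.biUnion Gs) ∪ H) = (∑ i ∈ H, g {i}) + ∑ ℓ ∈ 𝒯, g (Gs ℓ)) :
    ∀ Sset ⊆ G, ∀ Ss : Fin m → Finset (Fin n), (∀ ℓ, Ss ℓ ⊆ Gs ℓ) →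
      g ((Finset.univ.biUnion Ss) ∪ Sset) = (∑ i ∈ Sset, g {i}) + ∑ ℓ : Fin m, g (Ss ℓ) :=
  stmt_7_general n m g hg0 hsubmod G Gs hdisjG hdisj hmodular
end

section
/- Let X_1, …, X_n (n ≥ 2) be jointly distributed random variables on finite alphabets with joint probability mass function p, let e(F) = H(X_F) for F ⊆ [n], and let γ be a fractional partition with respect to a family 𝓕 of subsets of [n] satisfying the standing assumptions. Define σ = min over ordered pairs of distinct i, j ∈ [n] of ∑_{F ∈ 𝓕 : i ∈ F, j ∉ F} γ(F); then σ > 0. For any ε ≥ 0, if either f([n]) − ∑_{F ∈ 𝓕} γ(F) e(F | [n] ∖ F) ≤ ε or ∑_{F ∈ 𝓕} γ(F) e(F) − e([n]) ≤ ε (where e(F | T) = e(F ∪ T) − e(T)), then I(X_i ; X_{[n] ∖ {i}}) ≤ ε/σ for every i ∈ [n]. -/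
open Finset
open scoped Classical BigOperators

section Abstract
variable {Ω : Type} [Fintype Ω]

noncomputable def pmass (p : Ω → ℝ) {τ : Type} [Fintype τ] (m : Ω → τ) (t : τ) : ℝ :=
  ∑ x ∈ Finset.univ.filter (fun x => m x = t), p x

noncomputable def HH (p : Ω → ℝ) {τ : Type} [Fintype τ] (m : Ω → τ) : ℝ :=
  ∑ t : τ, Real.negMulLog (pmass p m t)

variable {p : Ω → ℝ}
variable {α β γ' : Type} [Fintype α] [Fintype β] [Fintype γ']

lemma pmass_nonneg (hp0 : ∀ x, 0 ≤ p x) {τ : Type} [Fintype τ] (m : Ω → τ) (t : τ) :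
    0 ≤ pmass p m t :=
  Finset.sum_nonneg (fun x _ => hp0 x)

lemma sum_pmass {τ : Type} [Fintype τ] (m : Ω → τ) :
    ∑ t : τ, pmass p m t = ∑ x : Ω, p x := by
  unfold pmass; exact Finset.sum_fiberwise _ _ _

lemma pmass_ne_zero_exists {τ : Type} [Fintype τ] {m : Ω → τ} {t : τ}
    (h : pmass p m t ≠ 0) : ∃ x : Ω, m x = t := by
  obtain ⟨x, hx, -⟩ := Finset.exists_ne_zero_of_sum_ne_zero h
  exact ⟨x, (Finset.mem_filter.mp hx).2⟩

lemma pmass_fst (u : Ω → α) (v : Ω → β) (a : α) :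
    pmass p u a = ∑ b : β, pmass p (fun x => (u x, v x)) (a, b) := by
  unfold pmass
  rw [← Finset.sum_fiberwise_of_maps_to (g := v) (t := Finset.univ)
      (fun x _ => Finset.mem_univ _) p]
  refine Finset.sum_congr rfl (fun b _ => ?_)
  refine Finset.sum_congr ?_ (fun _ _ => rfl)
  ext x
  simp [Prod.ext_iff, and_comm]

lemma pmass_snd (u : Ω → α) (v : Ω → β) (b : β) :
    pmass p v b = ∑ a : α, pmass p (fun x => (u x, v x)) (a, b) := by
  unfold pmass
  rw [← Finset.sum_fiberwise_of_maps_to (g := u) (t := Finset.univ)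
      (fun x _ => Finset.mem_univ _) p]
  refine Finset.sum_congr rfl (fun a _ => ?_)
  refine Finset.sum_congr ?_ (fun _ _ => rfl)
  ext x
  simp [Prod.ext_iff, and_comm]

lemma pmass_comp_filter (u : Ω → α) (g : α → γ') (w : γ') :
    pmass p (fun x => g (u x)) w
      = ∑ a ∈ Finset.univ.filter (fun a => g a = w), pmass p u a := by
  unfold pmass
  rw [← Finset.sum_fiberwise_of_maps_to (g := u) (t := Finset.univ.filter (fun a => g a = w))
      (fun x hx => by simpa using (Finset.mem_filter.mp hx).2) p]
  refine Finset.sum_congr rfl (fun a ha => ?_)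
  have hga : g a = w := (Finset.mem_filter.mp ha).2
  refine Finset.sum_congr ?_ (fun _ _ => rfl)
  ext x
  simp only [Finset.mem_filter, Finset.mem_univ, true_and]
  constructor
  · rintro ⟨-, h2⟩; exact h2
  · rintro rfl; exact ⟨by rw [hga], rfl⟩

lemma negMulLog_eq' (x : ℝ) : Real.negMulLog x = x * (-Real.log x) := by
  rw [Real.negMulLog]; ring

lemma HH_submod (hp0 : ∀ x, 0 ≤ p x) (hp1 : ∑ x : Ω, p x = 1)
    (u : Ω → α) (v : Ω → β) (g : α → γ') (h : β → γ') (hgh : ∀ x, g (u x) = h (v x)) :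
    HH p (fun x => (u x, v x)) + HH p (fun x => g (u x)) ≤ HH p u + HH p v := by
  set s : α × β → ℝ := pmass p (fun x => (u x, v x)) with hs_def
  set q : α → ℝ := pmass p u with hq_def
  set r : β → ℝ := pmass p v with hr_def
  set mm : γ' → ℝ := pmass p (fun x => g (u x)) with hmm_def
  have hs0 : ∀ c, 0 ≤ s c := fun c => pmass_nonneg hp0 _ c
  have hq0 : ∀ a, 0 ≤ q a := fun a => pmass_nonneg hp0 _ a
  have hr0 : ∀ b, 0 ≤ r b := fun b => pmass_nonneg hp0 _ b
  have hmm0 : ∀ w, 0 ≤ mm w := fun w => pmass_nonneg hp0 _ w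
  have hq : ∀ a, q a = ∑ b : β, s (a, b) := fun a => pmass_fst u v a
  have hr : ∀ b, r b = ∑ a : α, s (a, b) := fun b => pmass_snd u v b
  have hmmq : ∀ w, mm w = ∑ a ∈ Finset.univ.filter (fun a => g a = w), q a :=
    fun w => pmass_comp_filter u g w
  have hveq : mm = pmass p (fun x => h (v x)) := by
    have hfe : (fun x => g (u x)) = (fun x => h (v x)) := funext hgh
    rw [hmm_def, hfe]
  have hmmr : ∀ w, mm w = ∑ b ∈ Finset.univ.filter (fun b => h b = w), r b := by
    intro w; rw [hveq]; exact pmass_comp_filter v h w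
  have hsgh : ∀ c : α × β, s c ≠ 0 → g c.1 = h c.2 := by
    intro c hc
    obtain ⟨x, hx⟩ := pmass_ne_zero_exists hc
    have h1 : u x = c.1 := congrArg Prod.fst hx
    have h2 : v x = c.2 := congrArg Prod.snd hx
    rw [← h1, ← h2]; exact hgh x
  have hsq : ∀ c : α × β, s c ≤ q c.1 := by
    intro c
    rw [hq c.1]
    have := Finset.single_le_sum (f := fun b => s (c.1, b))
      (fun b _ => hs0 _) (Finset.mem_univ c.2)
    simpa using this
  have hsr : ∀ c : α × β, s c ≤ r c.2 := by
    intro c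
    rw [hr c.2]
    have := Finset.single_le_sum (f := fun a => s (a, c.2))
      (fun a _ => hs0 _) (Finset.mem_univ c.1)
    simpa using this
  have hmm_s : ∀ w, mm w = ∑ c ∈ Finset.univ.filter (fun c : α × β => g c.1 = w), s c := by
    intro w
    have hset : Finset.univ.filter (fun c : α × β => g c.1 = w)
        = (Finset.univ.filter (fun a => g a = w)) ×ˢ (Finset.univ : Finset β) := by
      ext c; simp
    rw [hset, Finset.sum_product, hmmq w]
    exact Finset.sum_congr rfl (fun a _ => hq a)
  have hsmm : ∀ c : α × β, s c ≤ mm (g c.1) := by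
    intro c
    rw [hmm_s (g c.1)]
    exact Finset.single_le_sum (f := fun c => s c) (fun c' _ => hs0 c')
      (Finset.mem_filter.mpr ⟨Finset.mem_univ _, rfl⟩)
  have hsum_s : ∑ c : α × β, s c = 1 := by rw [hs_def, sum_pmass, hp1]
  have hsum_r : ∑ b : β, r b = 1 := by rw [hr_def, sum_pmass, hp1]
  have hsum_mm : ∑ w : γ', mm w = 1 := by rw [hmm_def, sum_pmass, hp1]
  have Hu : HH p u = ∑ c : α × β, s c * (-Real.log (q c.1)) := by
    rw [HH, Fintype.sum_prod_type, ← hq_def]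
    refine Finset.sum_congr rfl (fun a _ => ?_)
    have e : ∑ b : β, s (a, b) * (-Real.log (q (a, b).1))
        = (∑ b : β, s (a, b)) * (-Real.log (q a)) := by
      rw [Finset.sum_mul]
    rw [e, ← hq a, negMulLog_eq']
  have Hv : HH p v = ∑ c : α × β, s c * (-Real.log (r c.2)) := by
    have hco : ∑ c : α × β, s c * (-Real.log (r c.2))
        = ∑ b : β, ∑ a : α, s (a, b) * (-Real.log (r (a, b).2)) := by
      rw [Fintype.sum_prod_type]; exact Finset.sum_comm
    rw [HH, hco, ← hr_def]
    refine Finset.sum_congr rfl (fun b _ => ?_)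
    have e : ∑ a : α, s (a, b) * (-Real.log (r (a, b).2))
        = (∑ a : α, s (a, b)) * (-Real.log (r b)) := by
      rw [Finset.sum_mul]
    rw [e, ← hr b, negMulLog_eq']
  have Hm : HH p (fun x => g (u x)) = ∑ c : α × β, s c * (-Real.log (mm (g c.1))) := by
    rw [HH, ← hmm_def,
      ← Finset.sum_fiberwise_of_maps_to (g := fun c : α × β => g c.1)
        (t := (Finset.univ : Finset γ')) (fun _ _ => Finset.mem_univ _)
        (fun c => s c * (-Real.log (mm (g c.1))))]
    refine Finset.sum_congr rfl (fun w _ => ?_)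
    have e : ∑ c ∈ Finset.univ.filter (fun c : α × β => g c.1 = w),
        s c * (-Real.log (mm (g c.1)))
        = ∑ c ∈ Finset.univ.filter (fun c : α × β => g c.1 = w), s c * (-Real.log (mm w)) :=
      Finset.sum_congr rfl (fun c hc => by rw [(Finset.mem_filter.mp hc).2])
    rw [e, ← Finset.sum_mul, ← hmm_s w, negMulLog_eq']
  have Huv : HH p (fun x => (u x, v x)) = ∑ c : α × β, s c * (-Real.log (s c)) := by
    rw [HH, ← hs_def]
    exact Finset.sum_congr rfl (fun c _ => negMulLog_eq' _)
  rw [Hu, Hv, Hm, Huv, ← Finset.sum_add_distrib, ← Finset.sum_add_distrib]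
  have key : ∀ c : α × β, s c * (-Real.log (s c)) + s c * (-Real.log (mm (g c.1)))
      ≤ (if g c.1 = h c.2 then q c.1 * r c.2 / mm (g c.1) - s c else 0)
        + (s c * (-Real.log (q c.1)) + s c * (-Real.log (r c.2))) := by
    intro c
    by_cases hsc : s c = 0
    · rw [hsc]
      simp only [zero_mul, add_zero, zero_add]
      split_ifs with hc
      · have : 0 ≤ q c.1 * r c.2 / mm (g c.1) :=
          div_nonneg (mul_nonneg (hq0 _) (hr0 _)) (hmm0 _)
        linarith
      · linarith
    · have hgc : g c.1 = h c.2 := hsgh c hsc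
      rw [if_pos hgc]
      have hsp : 0 < s c := lt_of_le_of_ne (hs0 c) (Ne.symm hsc)
      have hqp : 0 < q c.1 := lt_of_lt_of_le hsp (hsq c)
      have hrp : 0 < r c.2 := lt_of_lt_of_le hsp (hsr c)
      have hmp : 0 < mm (g c.1) := lt_of_lt_of_le hsp (hsmm c)
      have hratio : 0 < q c.1 * r c.2 / (s c * mm (g c.1)) := by positivity
      have hlog := Real.log_le_sub_one_of_pos hratio
      have hexp : Real.log (q c.1 * r c.2 / (s c * mm (g c.1)))
          = Real.log (q c.1) + Real.log (r c.2) - Real.log (s c) - Real.log (mm (g c.1)) := by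
        rw [Real.log_div (by positivity) (by positivity), Real.log_mul hqp.ne' hrp.ne',
          Real.log_mul hsp.ne' hmp.ne']
        ring
      have h2 : s c * Real.log (q c.1 * r c.2 / (s c * mm (g c.1)))
          ≤ s c * (q c.1 * r c.2 / (s c * mm (g c.1)) - 1) :=
        mul_le_mul_of_nonneg_left hlog hsp.le
      have h3 : s c * (q c.1 * r c.2 / (s c * mm (g c.1)) - 1)
          = q c.1 * r c.2 / mm (g c.1) - s c := by
        field_simp
      rw [hexp, h3] at h2
      nlinarith [h2]
  have total : ∑ c : α × β,
      (if g c.1 = h c.2 then q c.1 * r c.2 / mm (g c.1) - s c else 0) ≤ 0 := by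
    classical
    rw [← Finset.sum_filter]
    set P := Finset.univ.filter (fun c : α × β => g c.1 = h c.2) with hP_def
    have e2 : ∑ c ∈ P, s c = 1 := by
      rw [hP_def, Finset.sum_filter_of_ne (fun c _ hne => hsgh c hne), hsum_s]
    have e3 : ∑ c ∈ P, q c.1 * r c.2 / mm (g c.1) ≤ 1 := by
      rw [← Finset.sum_fiberwise_of_maps_to (g := fun c : α × β => g c.1)
        (t := (Finset.univ : Finset γ')) (fun _ _ => Finset.mem_univ _)
        (fun c => q c.1 * r c.2 / mm (g c.1))]
      have inner : ∀ w : γ',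
          ∑ c ∈ P.filter (fun c => g c.1 = w), q c.1 * r c.2 / mm (g c.1) ≤ mm w := by
        intro w
        have hPf : P.filter (fun c => g c.1 = w)
            = (Finset.univ.filter (fun a => g a = w))
              ×ˢ (Finset.univ.filter (fun b => h b = w)) := by
          ext c
          simp only [hP_def, Finset.mem_filter, Finset.mem_product, Finset.mem_univ, true_and,
            Finset.filter_filter]
          constructor
          · rintro ⟨hgh2, hgw⟩; exact ⟨hgw, hgh2 ▸ hgw⟩
          · rintro ⟨h1, h2⟩; exact ⟨h1.trans h2.symm, h1⟩
        rw [hPf, Finset.sum_product]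
        calc ∑ a ∈ Finset.univ.filter (fun a => g a = w),
              ∑ b ∈ Finset.univ.filter (fun b => h b = w), q a * r b / mm (g a)
            = ∑ a ∈ Finset.univ.filter (fun a => g a = w),
              (q a / mm w) * (∑ b ∈ Finset.univ.filter (fun b => h b = w), r b) := by
              refine Finset.sum_congr rfl (fun a ha => ?_)
              rw [Finset.mul_sum]
              refine Finset.sum_congr rfl (fun b _ => ?_)
              rw [(Finset.mem_filter.mp ha).2]
              ring
          _ = ∑ a ∈ Finset.univ.filter (fun a => g a = w), (q a / mm w) * mm w := by
              rw [← hmmr w]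
          _ ≤ mm w := by
              by_cases hmw : mm w = 0
              · simp [hmw]
              · have hcancel : ∀ a ∈ Finset.univ.filter (fun a => g a = w),
                    (q a / mm w) * mm w = q a := fun a _ => div_mul_cancel₀ _ hmw
                rw [Finset.sum_congr rfl hcancel, ← hmmq w]
      calc ∑ w : γ', ∑ c ∈ P.filter (fun c => g c.1 = w), q c.1 * r c.2 / mm (g c.1)
          ≤ ∑ w : γ', mm w := Finset.sum_le_sum (fun w _ => inner w)
        _ = 1 := hsum_mm
    rw [Finset.sum_sub_distrib, e2]
    linarith
  calc ∑ c : α × β, (s c * (-Real.log (s c)) + s c * (-Real.log (mm (g c.1))))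
      ≤ ∑ c : α × β, ((if g c.1 = h c.2 then q c.1 * r c.2 / mm (g c.1) - s c else 0)
          + (s c * (-Real.log (q c.1)) + s c * (-Real.log (r c.2)))) :=
        Finset.sum_le_sum (fun c _ => key c)
    _ = (∑ c : α × β, (if g c.1 = h c.2 then q c.1 * r c.2 / mm (g c.1) - s c else 0))
        + ∑ c : α × β, (s c * (-Real.log (q c.1)) + s c * (-Real.log (r c.2))) :=
        Finset.sum_add_distrib
    _ ≤ ∑ c : α × β, (s c * (-Real.log (q c.1)) + s c * (-Real.log (r c.2))) := by
        linarith [total]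

end Abstract

/-- Entropy of the marginal of `p` on the coordinates in `F`
    (`H(X_F) = ∑ negMulLog (p_F)`, with `0 log 0 = 0`). -/
noncomputable def Hent {n : ℕ} {𝒳 : Fin n → Type} [∀ i, Fintype (𝒳 i)]
    (p : (∀ i, 𝒳 i) → ℝ) (F : Finset (Fin n)) : ℝ :=
  ∑ y : (i : {i // i ∈ F}) → 𝒳 i.1,
    Real.negMulLog
      (∑ x ∈ Finset.univ.filter (fun x : ∀ i, 𝒳 i => ∀ i : {i // i ∈ F}, x i.1 = y i), p x)

section Bridge

lemma HH_comp_inj {Ω : Type} [Fintype Ω] (p : Ω → ℝ) {τ τ' : Type} [Fintype τ] [Fintype τ']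
    (m : Ω → τ) (φ : τ → τ') (hφ : Function.Injective φ) :
    HH p (fun x => φ (m x)) = HH p m := by
  unfold HH
  have hzero : ∀ t' ∈ (Finset.univ : Finset τ'), t' ∉ Finset.univ.image φ →
      Real.negMulLog (pmass p (fun x => φ (m x)) t') = 0 := by
    intro t' _ ht'
    have hfil : Finset.univ.filter (fun x : Ω => φ (m x) = t') = ∅ := by
      refine Finset.filter_eq_empty_iff.mpr (fun x _ => fun hx => ht' ?_)
      exact Finset.mem_image.mpr ⟨m x, Finset.mem_univ _, hx⟩
    rw [pmass, hfil, Finset.sum_empty, Real.negMulLog_zero]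
  rw [← Finset.sum_subset (Finset.subset_univ (Finset.univ.image φ)) hzero]
  rw [Finset.sum_image (fun a _ b _ hab => hφ hab)]
  refine Finset.sum_congr rfl (fun t _ => ?_)
  congr 1
  unfold pmass
  refine Finset.sum_congr ?_ (fun _ _ => rfl)
  ext x
  simp [hφ.eq_iff]

variable {n : ℕ} {𝒳 : Fin n → Type} [∀ i, Fintype (𝒳 i)] (p : (∀ i, 𝒳 i) → ℝ)

def restr (F : Finset (Fin n)) (x : ∀ i, 𝒳 i) : (i : {i // i ∈ F}) → 𝒳 i.1 := fun i => x i.1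

lemma Hent_eq_HH (F : Finset (Fin n)) : Hent p F = HH p (restr F) := by
  unfold Hent HH pmass restr
  refine Finset.sum_congr rfl (fun y _ => ?_)
  congr 1
  refine Finset.sum_congr ?_ (fun _ _ => rfl)
  ext x
  simp [funext_iff]

lemma Hent_empty (hp1 : ∑ x : ∀ i, 𝒳 i, p x = 1) : Hent p (∅ : Finset (Fin n)) = 0 := by
  unfold Hent
  refine Finset.sum_eq_zero (fun y _ => ?_)
  have hfil : (Finset.univ.filter
      (fun x : ∀ i, 𝒳 i => ∀ i : {i // i ∈ (∅ : Finset (Fin n))}, x i.1 = y i))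
      = Finset.univ := by
    ext x
    simp only [Finset.mem_filter, Finset.mem_univ, true_and, iff_true]
    intro i
    exact absurd i.2 (Finset.notMem_empty _)
  rw [hfil, hp1, Real.negMulLog_one]

lemma Hent_submod (hp0 : ∀ x, 0 ≤ p x) (hp1 : ∑ x : ∀ i, 𝒳 i, p x = 1)
    (A B : Finset (Fin n)) :
    Hent p (A ∪ B) + Hent p (A ∩ B) ≤ Hent p A + Hent p B := by
  classical
  set u : (∀ i, 𝒳 i) → ((i : {i // i ∈ A}) → 𝒳 i.1) := restr A with hu
  set v : (∀ i, 𝒳 i) → ((i : {i // i ∈ B}) → 𝒳 i.1) := restr B with hv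
  set g : ((i : {i // i ∈ A}) → 𝒳 i.1) → ((i : {i // i ∈ A ∩ B}) → 𝒳 i.1) :=
    fun y i => y ⟨i.1, (Finset.mem_inter.mp i.2).1⟩ with hg
  set h : ((i : {i // i ∈ B}) → 𝒳 i.1) → ((i : {i // i ∈ A ∩ B}) → 𝒳 i.1) :=
    fun y i => y ⟨i.1, (Finset.mem_inter.mp i.2).2⟩ with hh
  set φ : ((i : {i // i ∈ A ∪ B}) → 𝒳 i.1) →
      ((i : {i // i ∈ A}) → 𝒳 i.1) × ((i : {i // i ∈ B}) → 𝒳 i.1) :=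
    fun y => (fun i => y ⟨i.1, Finset.mem_union_left B i.2⟩,
              fun i => y ⟨i.1, Finset.mem_union_right A i.2⟩) with hφ
  have hφinj : Function.Injective φ := by
    intro y1 y2 hy
    funext i
    rcases Finset.mem_union.mp i.2 with hA | hB
    · exact congrFun (congrArg Prod.fst hy) ⟨i.1, hA⟩
    · exact congrFun (congrArg Prod.snd hy) ⟨i.1, hB⟩
  have h1 : Hent p (A ∪ B) = HH p (fun x => (u x, v x)) := by
    rw [Hent_eq_HH, ← HH_comp_inj p (restr (A ∪ B)) φ hφinj]
    rfl
  have h2 : Hent p (A ∩ B) = HH p (fun x => g (u x)) := by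
    rw [Hent_eq_HH]
    rfl
  have hgh : ∀ x, g (u x) = h (v x) := fun x => rfl
  rw [h1, h2, Hent_eq_HH p A, Hent_eq_HH p B]
  exact HH_submod hp0 hp1 u v g h hgh

end Bridge

lemma submod_dim {n : ℕ} {f : Finset (Fin n) → ℝ}
    (hsub : ∀ A B, f (A ∪ B) + f (A ∩ B) ≤ f A + f B)
    {A B : Finset (Fin n)} {x : Fin n} (hAB : A ⊆ B) (hxA : x ∈ A) :
    f B - f (B \ {x}) ≤ f A - f (A \ {x}) := by
  have h := hsub A (B \ {x})
  have h1 : A ∪ (B \ {x}) = B := by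
    ext y
    simp only [Finset.mem_union, Finset.mem_sdiff, Finset.mem_singleton]
    constructor
    · rintro (hy | ⟨hy, -⟩)
      · exact hAB hy
      · exact hy
    · intro hy
      by_cases hyx : y = x
      · exact Or.inl (hyx ▸ hxA)
      · exact Or.inr ⟨hy, hyx⟩
  have h2 : A ∩ (B \ {x}) = A \ {x} := by
    ext y
    simp only [Finset.mem_inter, Finset.mem_sdiff, Finset.mem_singleton]
    constructor
    · rintro ⟨hyA, -, hyx⟩
      exact ⟨hyA, hyx⟩
    · rintro ⟨hyA, hyx⟩
      exact ⟨hyA, hAB hyA, hyx⟩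
  rw [h1, h2] at h
  linarith

lemma lemL {n : ℕ} (f : Finset (Fin n) → ℝ)
    (hsub : ∀ A B, f (A ∪ B) + f (A ∩ B) ≤ f A + f B) (hf0 : f ∅ = 0)
    {ι : Type} [Fintype ι] (γ : ι → ℝ) (hγ : ∀ k, 0 ≤ γ k)
    (i j : Fin n) (hij : i ≠ j) :
    ∀ (M : Finset (Fin n)) (T : ι → Finset (Fin n)), i ∈ M → j ∈ M → (∀ k, T k ⊆ M) →
    (∀ m ∈ M, ∑ k ∈ Finset.univ.filter (fun k => m ∈ T k), γ k = 1) →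
    (∀ v ∈ M, v ≠ i →
      ∑ k ∈ Finset.univ.filter (fun k => i ∈ T k ∧ j ∉ T k), γ k
        ≤ ∑ k ∈ Finset.univ.filter (fun k => i ∈ T k ∧ v ∉ T k), γ k) →
    f M + (∑ k ∈ Finset.univ.filter (fun k => i ∈ T k ∧ j ∉ T k), γ k)
        * (f {i} + f (M \ {i}) - f M)
      ≤ ∑ k, γ k * f (T k) := by
  intro M
  induction M using Finset.strongInduction with
  | _ M IH =>
  intro T hiM hjM hTM hcov hmin
  by_cases hex : ∃ u ∈ M, u ≠ i ∧ u ≠ j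
  · -- inductive step
    obtain ⟨u, huM, hui, huj⟩ := hex
    set t : ℝ := ∑ k ∈ Finset.univ.filter (fun k => i ∈ T k ∧ j ∉ T k), γ k with ht_def
    have ht0 : 0 ≤ t := Finset.sum_nonneg (fun k _ => hγ k)
    set M' : Finset (Fin n) := M \ {u} with hM'
    set T' : ι → Finset (Fin n) := fun k => T k \ {u} with hT'
    have hT'k : ∀ k, T' k = T k \ {u} := fun k => rfl
    have hMM' : M' ⊂ M := by
      rw [hM', Finset.sdiff_singleton_eq_erase]
      exact Finset.erase_ssubset huM
    have hfilmem : ∀ m : Fin n, m ≠ u →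
        Finset.univ.filter (fun k => m ∈ T' k) = Finset.univ.filter (fun k => m ∈ T k) := by
      intro m hm
      ext k
      simp [hT'k, Finset.mem_sdiff, hm]
    have hfilpair : ∀ v : Fin n, v ≠ u →
        Finset.univ.filter (fun k => i ∈ T' k ∧ v ∉ T' k)
          = Finset.univ.filter (fun k => i ∈ T k ∧ v ∉ T k) := by
      intro v hv
      ext k
      simp [hT'k, Finset.mem_sdiff, hui.symm, hv]
    have hIH := IH M' hMM' T' (Finset.mem_sdiff.mpr ⟨hiM, by simp [hui.symm]⟩)
      (Finset.mem_sdiff.mpr ⟨hjM, by simp [huj.symm]⟩)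
      (fun k => Finset.sdiff_subset_sdiff (hTM k) (Finset.Subset.refl _))
      (by
        intro m hm
        have hmu : m ≠ u := by
          rcases Finset.mem_sdiff.mp hm with ⟨-, hmu⟩
          simpa using hmu
        rw [hfilmem m hmu]
        exact hcov m (Finset.mem_sdiff.mp hm).1)
      (by
        intro v hv hvi
        have hvu : v ≠ u := by
          rcases Finset.mem_sdiff.mp hv with ⟨-, hvu⟩
          simpa using hvu
        rw [hfilpair j huj.symm, hfilpair v hvu]
        exact hmin v (Finset.mem_sdiff.mp hv).1 hvi)
    rw [hfilpair j huj.symm, ← ht_def] at hIH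
    have hsplit : ∑ k, γ k * f (T k)
        = (∑ k, γ k * (f (T k) - f (T' k))) + ∑ k, γ k * f (T' k) := by
      rw [← Finset.sum_add_distrib]
      exact Finset.sum_congr rfl (fun k _ => by ring)
    set Kui := Finset.univ.filter (fun k => u ∈ T k ∧ i ∈ T k) with hKui
    set Kuo := Finset.univ.filter (fun k => u ∈ T k ∧ i ∉ T k) with hKuo
    set w : ℝ := ∑ k ∈ Kui, γ k with hw
    set c : ℝ := ∑ k ∈ Kuo, γ k with hc
    have hwc : w + c = 1 := by
      rw [hw, hc, hKui, hKuo, ← Finset.filter_filter, ← Finset.filter_filter,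
        Finset.sum_filter_add_sum_filter_not]
      exact hcov u huM
    have hcsig : c = ∑ k ∈ Finset.univ.filter (fun k => i ∈ T k ∧ u ∉ T k), γ k := by
      have e1 : (Finset.univ.filter (fun k => i ∈ T k)).filter (fun k => u ∈ T k)
          = Kui := by
        rw [Finset.filter_filter, hKui]
        ext k
        simp [and_comm]
      have hci := hcov i hiM
      rw [← Finset.sum_filter_add_sum_filter_not (Finset.univ.filter (fun k => i ∈ T k))
        (fun k => u ∈ T k) γ] at hci
      rw [e1, ← hw, Finset.filter_filter] at hci
      linarith [hwc]
    have hct : t ≤ c := by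
      rw [hcsig]
      exact hmin u huM hui
    have hdiff : w * (f M - f (M \ {u})) + c * (f (M \ {i}) - f ((M \ {i}) \ {u}))
        ≤ ∑ k, γ k * (f (T k) - f (T' k)) := by
      have hzero : ∀ k ∈ Finset.univ.filter (fun k => ¬ u ∈ T k),
          γ k * (f (T k) - f (T' k)) = 0 := by
        intro k hk
        have hu : u ∉ T k := by simpa using (Finset.mem_filter.mp hk).2
        have he : T' k = T k := by
          rw [hT'k, Finset.sdiff_singleton_eq_erase, Finset.erase_eq_of_notMem hu]
        rw [he]
        ring
      have hsplit2 : ∑ k, γ k * (f (T k) - f (T' k))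
          = ∑ k ∈ Finset.univ.filter (fun k => u ∈ T k), γ k * (f (T k) - f (T' k)) := by
        rw [← Finset.sum_filter_add_sum_filter_not Finset.univ (fun k => u ∈ T k)
          (fun k => γ k * (f (T k) - f (T' k))), Finset.sum_eq_zero hzero, add_zero]
      have hsplit3 : ∑ k ∈ Finset.univ.filter (fun k => u ∈ T k), γ k * (f (T k) - f (T' k))
          = (∑ k ∈ Kui, γ k * (f (T k) - f (T' k)))
            + ∑ k ∈ Kuo, γ k * (f (T k) - f (T' k)) := by
        rw [hKui, hKuo, ← Finset.filter_filter, ← Finset.filter_filter,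
          Finset.sum_filter_add_sum_filter_not]
      have hbound1 : w * (f M - f (M \ {u})) ≤ ∑ k ∈ Kui, γ k * (f (T k) - f (T' k)) := by
        rw [hw, Finset.sum_mul]
        refine Finset.sum_le_sum (fun k hk => ?_)
        rcases Finset.mem_filter.mp hk with ⟨-, huk, -⟩
        have hd := submod_dim hsub (hTM k) huk
        rw [hT'k]
        exact mul_le_mul_of_nonneg_left hd (hγ k)
      have hbound2 : c * (f (M \ {i}) - f ((M \ {i}) \ {u}))
          ≤ ∑ k ∈ Kuo, γ k * (f (T k) - f (T' k)) := by
        rw [hc, Finset.sum_mul]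
        refine Finset.sum_le_sum (fun k hk => ?_)
        rcases Finset.mem_filter.mp hk with ⟨-, huk, hik⟩
        have hsubk : T k ⊆ M \ {i} := by
          intro x hx
          refine Finset.mem_sdiff.mpr ⟨hTM k hx, ?_⟩
          simp only [Finset.mem_singleton]
          rintro rfl
          exact hik hx
        have hd := submod_dim hsub hsubk huk
        rw [hT'k]
        exact mul_le_mul_of_nonneg_left hd (hγ k)
      rw [hsplit2, hsplit3]
      linarith
    have hD : 0 ≤ (f (M \ {i}) - f ((M \ {i}) \ {u})) - (f M - f (M \ {u})) := by
      have hsubMi : M \ {i} ⊆ M := Finset.sdiff_subset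
      have huMi : u ∈ M \ {i} := Finset.mem_sdiff.mpr ⟨huM, by simp [hui]⟩
      have hd := submod_dim hsub hsubMi huMi
      linarith
    have hcD : t * ((f (M \ {i}) - f ((M \ {i}) \ {u})) - (f M - f (M \ {u})))
        ≤ c * ((f (M \ {i}) - f ((M \ {i}) \ {u})) - (f M - f (M \ {u}))) :=
      mul_le_mul_of_nonneg_right hct hD
    have hcomm : M' \ {i} = (M \ {i}) \ {u} := by
      rw [hM', sdiff_sdiff_comm]
    have hMu : M' = M \ {u} := hM'
    rw [hcomm, hMu] at hIH
    have hw1 : w = 1 - c := by linarith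
    rw [hw1] at hdiff
    have hring : (1 - c) * (f M - f (M \ {u})) + c * (f (M \ {i}) - f ((M \ {i}) \ {u}))
        = (f M - f (M \ {u}))
          + c * ((f (M \ {i}) - f ((M \ {i}) \ {u})) - (f M - f (M \ {u}))) := by
      ring
    rw [hring] at hdiff
    rw [hsplit]
    linarith
  · -- base case: M = {i, j}
    push_neg at hex
    have hM : M = {i, j} := by
      ext x
      simp only [Finset.mem_insert, Finset.mem_singleton]
      constructor
      · intro hx
        by_cases hxi : x = i
        · exact Or.inl hxi
        · exact Or.inr (hex x hx hxi)
      · rintro (rfl | rfl)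
        · exact hiM
        · exact hjM
    subst hM
    have hsum : ∑ k, γ k * f (T k)
        = (∑ k ∈ Finset.univ.filter (fun k => i ∈ T k ∧ j ∈ T k), γ k) * f {i, j}
          + ((∑ k ∈ Finset.univ.filter (fun k => i ∈ T k ∧ j ∉ T k), γ k) * f {i}
          + (∑ k ∈ Finset.univ.filter (fun k => ¬ i ∈ T k ∧ j ∈ T k), γ k) * f {j}) := by
      rw [← Finset.sum_filter_add_sum_filter_not Finset.univ (fun k => i ∈ T k)
        (fun k => γ k * f (T k))]
      rw [← Finset.sum_filter_add_sum_filter_not (Finset.univ.filter (fun k => i ∈ T k))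
        (fun k => j ∈ T k) (fun k => γ k * f (T k))]
      rw [← Finset.sum_filter_add_sum_filter_not (Finset.univ.filter (fun k => ¬ i ∈ T k))
        (fun k => j ∈ T k) (fun k => γ k * f (T k))]
      rw [Finset.filter_filter, Finset.filter_filter, Finset.filter_filter,
        Finset.filter_filter]
      have c11 : ∀ k ∈ Finset.univ.filter (fun k => i ∈ T k ∧ j ∈ T k),
          γ k * f (T k) = γ k * f {i, j} := by
        intro k hk
        rcases Finset.mem_filter.mp hk with ⟨-, h1, h2⟩
        have : T k = {i, j} := by
          apply Finset.Subset.antisymm (hTM k)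
          intro x hx
          rcases Finset.mem_insert.mp hx with rfl | hx
          · exact h1
          · rw [Finset.mem_singleton.mp hx]; exact h2
        rw [this]
      have c10 : ∀ k ∈ Finset.univ.filter (fun k => i ∈ T k ∧ ¬ j ∈ T k),
          γ k * f (T k) = γ k * f {i} := by
        intro k hk
        rcases Finset.mem_filter.mp hk with ⟨-, h1, h2⟩
        have : T k = {i} := by
          apply Finset.Subset.antisymm
          · intro x hx
            rcases Finset.mem_insert.mp (hTM k hx) with rfl | hx'
            · exact Finset.mem_singleton_self _
            · rw [Finset.mem_singleton.mp hx'] at hx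
              exact absurd hx h2
          · intro x hx
            rw [Finset.mem_singleton.mp hx]; exact h1
        rw [this]
      have c01 : ∀ k ∈ Finset.univ.filter (fun k => ¬ i ∈ T k ∧ j ∈ T k),
          γ k * f (T k) = γ k * f {j} := by
        intro k hk
        rcases Finset.mem_filter.mp hk with ⟨-, h1, h2⟩
        have : T k = {j} := by
          apply Finset.Subset.antisymm
          · intro x hx
            rcases Finset.mem_insert.mp (hTM k hx) with rfl | hx'
            · exact absurd hx h1
            · exact hx'
          · intro x hx
            rw [Finset.mem_singleton.mp hx]; exact h2
        rw [this]
      have c00 : ∀ k ∈ Finset.univ.filter (fun k => ¬ i ∈ T k ∧ ¬ j ∈ T k),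
          γ k * f (T k) = 0 := by
        intro k hk
        rcases Finset.mem_filter.mp hk with ⟨-, h1, h2⟩
        have : T k = ∅ := by
          apply Finset.eq_empty_of_forall_notMem
          intro x hx
          rcases Finset.mem_insert.mp (hTM k hx) with rfl | hx'
          · exact h1 hx
          · rw [Finset.mem_singleton.mp hx'] at hx
            exact h2 hx
        rw [this, hf0, mul_zero]
      rw [Finset.sum_congr rfl c11, Finset.sum_congr rfl c10, Finset.sum_congr rfl c01,
        Finset.sum_congr rfl c00, Finset.sum_const_zero, add_zero,
        ← Finset.sum_mul, ← Finset.sum_mul, ← Finset.sum_mul]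
      ring
    have hwi := hcov i (Finset.mem_insert_self _ _)
    have hwj := hcov j (by simp)
    have hsplit_i : (∑ k ∈ Finset.univ.filter (fun k => i ∈ T k ∧ j ∈ T k), γ k)
        + (∑ k ∈ Finset.univ.filter (fun k => i ∈ T k ∧ j ∉ T k), γ k) = 1 := by
      rw [← hwi, ← Finset.sum_filter_add_sum_filter_not (Finset.univ.filter (fun k => i ∈ T k))
        (fun k => j ∈ T k) γ, Finset.filter_filter, Finset.filter_filter]
    have hsplit_j : (∑ k ∈ Finset.univ.filter (fun k => i ∈ T k ∧ j ∈ T k), γ k)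
        + (∑ k ∈ Finset.univ.filter (fun k => ¬ i ∈ T k ∧ j ∈ T k), γ k) = 1 := by
      have e1 : (Finset.univ.filter (fun k => j ∈ T k)).filter (fun k => i ∈ T k)
          = Finset.univ.filter (fun k => i ∈ T k ∧ j ∈ T k) := by
        rw [Finset.filter_filter]
        ext k
        simp [and_comm]
      have e2 : (Finset.univ.filter (fun k => j ∈ T k)).filter (fun k => ¬ i ∈ T k)
          = Finset.univ.filter (fun k => ¬ i ∈ T k ∧ j ∈ T k) := by
        rw [Finset.filter_filter]
        ext k
        simp [and_comm]
      rw [← e1, ← e2, Finset.sum_filter_add_sum_filter_not]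
      exact hwj
    have hMi : ({i, j} : Finset (Fin n)) \ {i} = {j} := by
      ext x
      simp only [Finset.mem_sdiff, Finset.mem_insert, Finset.mem_singleton]
      constructor
      · rintro ⟨rfl | h1, h2⟩
        · exact absurd rfl h2
        · exact h1
      · rintro rfl
        exact ⟨Or.inr rfl, fun h => hij h.symm⟩
    rw [hsum, hMi]
    set a : ℝ := ∑ k ∈ Finset.univ.filter (fun k => i ∈ T k ∧ j ∈ T k), γ k with ha
    set b : ℝ := ∑ k ∈ Finset.univ.filter (fun k => i ∈ T k ∧ j ∉ T k), γ k with hb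
    set d : ℝ := ∑ k ∈ Finset.univ.filter (fun k => ¬ i ∈ T k ∧ j ∈ T k), γ k with hd
    have ha' : a = 1 - b := by linarith
    have hd' : d = b := by linarith
    rw [ha', hd']
    apply le_of_eq
    ring

theorem stmt_8 (n : ℕ) (hn : 2 ≤ n)
    (𝒳 : Fin n → Type) [∀ i, Fintype (𝒳 i)] [∀ i, Nonempty (𝒳 i)]
    (p : (∀ i, 𝒳 i) → ℝ)
    (hp0 : ∀ x, 0 ≤ p x) (hp1 : ∑ x : ∀ i, 𝒳 i, p x = 1)
    (ι : Type) [Fintype ι] (S : ι → Finset (Fin n)) (γ : ι → ℝ)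
    (hproper : ∀ k, S k ≠ Finset.univ)
    (hpos : ∀ k, 0 < γ k)
    (hsep : ∀ i j : Fin n, i ≠ j → ¬ (∀ k, i ∈ S k ↔ j ∈ S k))
    (hfrac : ∀ i : Fin n, ∑ k ∈ Finset.univ.filter (fun k => i ∈ S k), γ k = 1)
    (σ : ℝ)
    (hσ : σ = sInf {x : ℝ | ∃ i j : Fin n, i ≠ j ∧
      x = ∑ k ∈ Finset.univ.filter (fun k => i ∈ S k ∧ j ∉ S k), γ k}) :
    0 < σ ∧ ∀ ε : ℝ, 0 ≤ ε →
      ((Hent p Finset.univ -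
          (∑ k : ι, γ k * (Hent p (S k ∪ (Finset.univ \ S k)) - Hent p (Finset.univ \ S k)))
          ≤ ε) ∨
        ((∑ k : ι, γ k * Hent p (S k)) - Hent p Finset.univ ≤ ε)) →
      ∀ i : Fin n,
        Hent p {i} + Hent p (Finset.univ \ {i}) - Hent p Finset.univ ≤ ε / σ := by
  classical
  have hsubE : ∀ A B, Hent p (A ∪ B) + Hent p (A ∩ B) ≤ Hent p A + Hent p B :=
    fun A B => Hent_submod p hp0 hp1 A B
  have he0 : Hent p (∅ : Finset (Fin n)) = 0 := Hent_empty p hp1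
  set Sig : Fin n → Fin n → ℝ :=
    fun i j => ∑ k ∈ Finset.univ.filter (fun k => i ∈ S k ∧ j ∉ S k), γ k with hSig_def
  have hSigpos : ∀ i j : Fin n, i ≠ j → 0 < Sig i j := by
    intro i j hij
    have hne : (Finset.univ.filter (fun k => i ∈ S k ∧ j ∉ S k)).Nonempty := by
      by_contra hcon
      rw [Finset.not_nonempty_iff_eq_empty] at hcon
      have himp : ∀ k, i ∈ S k → j ∈ S k := by
        intro k hik
        by_contra hjk
        have hmem : k ∈ Finset.univ.filter (fun k => i ∈ S k ∧ j ∉ S k) :=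
          Finset.mem_filter.mpr ⟨Finset.mem_univ _, hik, hjk⟩
        rw [hcon] at hmem
        exact absurd hmem (Finset.notMem_empty _)
      have hsubset : Finset.univ.filter (fun k => i ∈ S k)
          ⊆ Finset.univ.filter (fun k => j ∈ S k) := by
        intro k hk
        exact Finset.mem_filter.mpr ⟨Finset.mem_univ _, himp k (Finset.mem_filter.mp hk).2⟩
      have hrev : Finset.univ.filter (fun k => j ∈ S k)
          ⊆ Finset.univ.filter (fun k => i ∈ S k) := by
        by_contra hneg
        rw [Finset.not_subset] at hneg
        obtain ⟨k, hkj, hki⟩ := hneg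
        have hlt := Finset.sum_lt_sum_of_subset hsubset hkj hki (hpos k)
          (fun m _ _ => (hpos m).le)
        rw [hfrac i, hfrac j] at hlt
        exact lt_irrefl _ hlt
      refine hsep i j hij (fun k => ?_)
      constructor
      · intro hik
        exact (Finset.mem_filter.mp (hsubset (Finset.mem_filter.mpr
          ⟨Finset.mem_univ _, hik⟩))).2
      · intro hjk
        exact (Finset.mem_filter.mp (hrev (Finset.mem_filter.mpr
          ⟨Finset.mem_univ _, hjk⟩))).2
    exact Finset.sum_pos (fun k _ => hpos k) hne
  have hfin : ({x : ℝ | ∃ i j : Fin n, i ≠ j ∧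
      x = ∑ k ∈ Finset.univ.filter (fun k => i ∈ S k ∧ j ∉ S k), γ k}).Finite := by
    apply Set.Finite.subset (Set.finite_range (fun q : Fin n × Fin n => Sig q.1 q.2))
    rintro x ⟨i, j, -, rfl⟩
    exact ⟨(i, j), rfl⟩
  have hnonempty : ({x : ℝ | ∃ i j : Fin n, i ≠ j ∧
      x = ∑ k ∈ Finset.univ.filter (fun k => i ∈ S k ∧ j ∉ S k), γ k}).Nonempty := by
    refine ⟨Sig ⟨0, by omega⟩ ⟨1, by omega⟩, ⟨0, by omega⟩, ⟨1, by omega⟩, ?_, rfl⟩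
    intro h
    have := congrArg Fin.val h
    simp at this
  have hmem : σ ∈ {x : ℝ | ∃ i j : Fin n, i ≠ j ∧
      x = ∑ k ∈ Finset.univ.filter (fun k => i ∈ S k ∧ j ∉ S k), γ k} := by
    rw [hσ]
    exact Set.Nonempty.csInf_mem hnonempty hfin
  have hσpos : 0 < σ := by
    obtain ⟨i0, j0, hij0, hx⟩ := hmem
    rw [hx]
    exact hSigpos i0 j0 hij0
  have hσle : ∀ i j : Fin n, i ≠ j → σ ≤ Sig i j := by
    intro i j hij
    rw [hσ]
    exact csInf_le hfin.bddBelow ⟨i, j, hij, rfl⟩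
  refine ⟨hσpos, ?_⟩
  intro ε hε hcase i
  have hEne : (Finset.univ.erase i).Nonempty := by
    rw [← Finset.card_pos, Finset.card_erase_of_mem (Finset.mem_univ _), Finset.card_univ,
      Fintype.card_fin]
    omega
  obtain ⟨j, hjE, hjmin⟩ := Finset.exists_min_image (Finset.univ.erase i) (fun v => Sig i v) hEne
  have hij : i ≠ j := (Finset.ne_of_mem_erase hjE).symm
  have hΔ : 0 ≤ Hent p {i} + Hent p (Finset.univ \ {i}) - Hent p Finset.univ := by
    have h := hsubE {i} (Finset.univ \ {i})
    have h1 : {i} ∪ (Finset.univ \ {i}) = Finset.univ :=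
      Finset.union_sdiff_of_subset (Finset.subset_univ _)
    have h2 : ({i} : Finset (Fin n)) ∩ (Finset.univ \ {i}) = ∅ := by
      ext x
      simp only [Finset.mem_inter, Finset.mem_sdiff, Finset.mem_singleton, Finset.mem_univ,
        true_and, Finset.notMem_empty, iff_false]
      rintro ⟨rfl, h2⟩
      exact h2 rfl
    rw [h1, h2, he0] at h
    linarith
  have hminL : ∀ v ∈ (Finset.univ : Finset (Fin n)), v ≠ i →
      ∑ k ∈ Finset.univ.filter (fun k => i ∈ S k ∧ j ∉ S k), γ k
        ≤ ∑ k ∈ Finset.univ.filter (fun k => i ∈ S k ∧ v ∉ S k), γ k := by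
    intro v _ hvi
    exact hjmin v (Finset.mem_erase.mpr ⟨hvi, Finset.mem_univ _⟩)
  have key : Sig i j * (Hent p {i} + Hent p (Finset.univ \ {i}) - Hent p Finset.univ) ≤ ε := by
    rcases hcase with hc1 | hc2
    · -- dual function case
      set g : Finset (Fin n) → ℝ := fun F => Hent p (Finset.univ \ F) - Hent p Finset.univ
        with hg_def
      have hsubg : ∀ A B, g (A ∪ B) + g (A ∩ B) ≤ g A + g B := by
        intro A B
        have e1 : Finset.univ \ (A ∪ B) = (Finset.univ \ A) ∩ (Finset.univ \ B) :=
          Finset.sdiff_union_distrib _ _ _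
        have e2 : Finset.univ \ (A ∩ B) = (Finset.univ \ A) ∪ (Finset.univ \ B) := by
          ext x
          simp only [Finset.mem_sdiff, Finset.mem_inter, Finset.mem_union, Finset.mem_univ,
            true_and]
          tauto
        have h := hsubE (Finset.univ \ A) (Finset.univ \ B)
        simp only [hg_def]
        rw [e1, e2]
        linarith
      have hg0 : g ∅ = 0 := by
        simp only [hg_def, Finset.sdiff_empty, sub_self]
      have hL := lemL g hsubg hg0 γ (fun k => (hpos k).le) i j hij Finset.univ S
        (Finset.mem_univ _) (Finset.mem_univ _) (fun k => Finset.subset_univ _)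
        (fun m _ => hfrac m) hminL
      have hg_univ : g Finset.univ = - Hent p Finset.univ := by
        simp only [hg_def, Finset.sdiff_self, he0]
        ring
      have hg_i : g {i} = Hent p (Finset.univ \ {i}) - Hent p Finset.univ := rfl
      have hg_ci : g (Finset.univ \ {i}) = Hent p {i} - Hent p Finset.univ := by
        simp only [hg_def]
        rw [Finset.sdiff_sdiff_self_left, Finset.univ_inter]
      have hsum_g : ∑ k, γ k * g (S k)
          = (∑ k, γ k * Hent p (Finset.univ \ S k))
            - (∑ k, γ k * Hent p Finset.univ) := by
        rw [← Finset.sum_sub_distrib]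
        refine Finset.sum_congr rfl (fun k _ => ?_)
        simp only [hg_def]
        ring
      rw [hg_univ, hg_i, hg_ci, hsum_g] at hL
      have hc1' : Hent p Finset.univ
          - ((∑ k, γ k * Hent p Finset.univ) - (∑ k, γ k * Hent p (Finset.univ \ S k))) ≤ ε := by
        have hrw : (∑ k : ι, γ k * (Hent p (S k ∪ (Finset.univ \ S k))
            - Hent p (Finset.univ \ S k)))
            = (∑ k, γ k * Hent p Finset.univ) - (∑ k, γ k * Hent p (Finset.univ \ S k)) := by
          rw [← Finset.sum_sub_distrib]
          refine Finset.sum_congr rfl (fun k _ => ?_)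
          rw [Finset.union_sdiff_of_subset (Finset.subset_univ _)]
          ring
        rw [hrw] at hc1
        exact hc1
      have hSigt : Sig i j = ∑ k ∈ Finset.univ.filter (fun k => i ∈ S k ∧ j ∉ S k), γ k := rfl
      rw [← hSigt] at hL
      linarith
    · have hL := lemL (Hent p) hsubE he0 γ (fun k => (hpos k).le) i j hij Finset.univ S
        (Finset.mem_univ _) (Finset.mem_univ _) (fun k => Finset.subset_univ _)
        (fun m _ => hfrac m) hminL
      have hSigt : Sig i j = ∑ k ∈ Finset.univ.filter (fun k => i ∈ S k ∧ j ∉ S k), γ k := rfl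
      rw [← hSigt] at hL
      linarith
  have hmul : σ * (Hent p {i} + Hent p (Finset.univ \ {i}) - Hent p Finset.univ)
      ≤ Sig i j * (Hent p {i} + Hent p (Finset.univ \ {i}) - Hent p Finset.univ) :=
    mul_le_mul_of_nonneg_right (hσle i j hij) hΔ
  rw [le_div_iff₀ hσpos]
  nlinarith [hmul, key]
end
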